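/- arXiv:2402.01044 — 10 statements merged into one kernel-verified Lean document; each statement's English description precedes it below -/
import Mathlib

section
/- Let G be a locally compact Hausdorff Abelian group with Haar measure λ, let f : G → ℂ be a bounded measurable function, let g : G → ℂ be a bounded uniformly continuous function, and let (A_i)_{i∈I} be a van Hove net in G. Then the set of all t ∈ G for which the net i ↦ (1/λ(A_i)) ∫_{A_i} f(s) · conj(g(s − t)) dλ(s) converges in ℂ is a closed subset of G. -/
open MeasureTheory Filter Topology Pointwise
open scoped ENNReal NNReal ComplexConjugate

noncomputable section

/-- The `K`-boundary of a set `A`: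
`∂^K A = (closure (A + K) \ A) ∪ ((Aᶜ - K) ∩ closure A)`. -/
def KBoundary {G : Type*} [AddCommGroup G] [TopologicalSpace G] (K A : Set G) : Set G :=
  (closure (A + K) \ A) ∪ ((Aᶜ - K) ∩ closure A)

/-- For a van Hove net `(A i)`, a bounded measurable `f` and a bounded
uniformly continuous `g`, the set of `t` where the averaged net
`i ↦ (1/λ(A i)) ∫_{A i} f s * conj (g (s - t))` converges is closed. -/
theorem closed_set_of_convergence
    {G : Type*} [AddCommGroup G] [TopologicalSpace G] [IsTopologicalAddGroup G]
    [LocallyCompactSpace G] [T2Space G] [MeasurableSpace G] [BorelSpace G]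
    {I : Type*} [Preorder I] [Nonempty I] [IsDirected I (· ≤ ·)]
    (haar : Measure G) [haar.IsAddHaarMeasure]
    (f g : G → ℂ)
    (hf_meas : Measurable f) (hf_bdd : ∃ C : ℝ, ∀ x, ‖f x‖ ≤ C)
    (hg_bdd : ∃ C : ℝ, ∀ x, ‖g x‖ ≤ C)
    (hg_uc : ∀ ε > (0 : ℝ), ∃ U ∈ 𝓝 (0 : G), ∀ x y : G, x - y ∈ U → ‖g x - g y‖ ≤ ε)
    (A : I → Set G)
    (hA_open : ∀ i, IsOpen (A i)) (hA_ne : ∀ i, (A i).Nonempty)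
    (hA_cpt : ∀ i, IsCompact (closure (A i)))
    (hA_pos : ∀ i, 0 < haar (A i)) (hA_fin : ∀ i, haar (A i) < ⊤)
    (hvH : ∀ K : Set G, IsCompact K →
      Tendsto (fun i => haar (KBoundary K (A i)) / haar (A i)) atTop (𝓝 0)) :
    IsClosed {t : G | ∃ c : ℂ, Tendsto
      (fun i => (haar (A i)).toReal⁻¹ • ∫ s in A i, f s * conj (g (s - t)) ∂haar)
      atTop (𝓝 c)} := by
  obtain ⟨Cf, hCf⟩ := hf_bdd
  obtain ⟨Cg, hCg⟩ := hg_bdd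
  have hCf0 : 0 ≤ Cf := le_trans (norm_nonneg _) (hCf 0)
  -- `g` is continuous
  have hg_cont : Continuous g := by
    rw [continuous_iff_continuousAt]
    intro x
    rw [ContinuousAt, Metric.tendsto_nhds]
    intro ε hε
    obtain ⟨U, hU, hUg⟩ := hg_uc (ε / 2) (by linarith)
    have h1 : {y : G | y - x ∈ U} ∈ 𝓝 x := by
      have h2 : Tendsto (fun y : G => y - x) (𝓝 x) (𝓝 (0 : G)) := by
        simpa using (continuous_sub_right x).tendsto x
      exact h2 hU
    filter_upwards [h1] with y hy
    calc dist (g y) (g x) = ‖g y - g x‖ := dist_eq_norm _ _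
      _ ≤ ε / 2 := hUg y x hy
      _ < ε := by linarith
  have hg_meas : Measurable g := hg_cont.measurable
  set F : G → I → ℂ := fun t i =>
    (haar (A i)).toReal⁻¹ • ∫ s in A i, f s * conj (g (s - t)) ∂haar with hFdef
  have hmeas : ∀ t : G, Measurable fun s => f s * conj (g (s - t)) := fun t =>
    hf_meas.mul (Complex.continuous_conj.comp
      (hg_cont.comp (continuous_id.sub continuous_const))).measurable
  have h_int : ∀ (t : G) (i : I), IntegrableOn (fun s => f s * conj (g (s - t))) (A i) haar := by
    intro t i
    refine Measure.integrableOn_of_bounded (hA_fin i).ne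
      ((hmeas t).aestronglyMeasurable) (M := Cf * Cg) ?_
    filter_upwards with s
    rw [norm_mul]
    exact mul_le_mul (hCf s) (by rw [RCLike.norm_conj]; exact hCg _) (norm_nonneg _) hCf0
  -- uniform (in `i`) equicontinuity in `t`
  have key : ∀ ε > (0 : ℝ), ∃ U ∈ 𝓝 (0 : G),
      ∀ t t' : G, t - t' ∈ U → ∀ i, ‖F t i - F t' i‖ ≤ Cf * ε := by
    intro ε hε
    obtain ⟨U, hU, hUg⟩ := hg_uc ε hε
    refine ⟨U, hU, fun t t' htt' i => ?_⟩
    have hpos : 0 < (haar (A i)).toReal := ENNReal.toReal_pos (hA_pos i).ne' (hA_fin i).ne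
    have hdiff : F t i - F t' i = (haar (A i)).toReal⁻¹ •
        ∫ s in A i, (f s * conj (g (s - t)) - f s * conj (g (s - t'))) ∂haar := by
      rw [hFdef]
      simp only
      rw [integral_sub (h_int t i) (h_int t' i), smul_sub]
    rw [hdiff, norm_smul, Real.norm_eq_abs, abs_of_nonneg (inv_nonneg.2 hpos.le)]
    have hbound : ‖∫ s in A i, (f s * conj (g (s - t)) - f s * conj (g (s - t'))) ∂haar‖
        ≤ Cf * ε * (haar (A i)).toReal := by
      refine norm_setIntegral_le_of_norm_le_const (hA_fin i) (fun s _ => ?_)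
      have he : (s - t') - (s - t) = t - t' := by abel
      have hg' : ‖g (s - t') - g (s - t)‖ ≤ ε := hUg _ _ (by rw [he]; exact htt')
      calc ‖f s * conj (g (s - t)) - f s * conj (g (s - t'))‖
          = ‖f s‖ * ‖g (s - t) - g (s - t')‖ := by
            rw [← mul_sub, norm_mul, ← map_sub, RCLike.norm_conj]
        _ ≤ Cf * ε := mul_le_mul (hCf s) (by rw [norm_sub_rev]; exact hg') (norm_nonneg _) hCf0
    calc (haar (A i)).toReal⁻¹ * ‖∫ s in A i,
          (f s * conj (g (s - t)) - f s * conj (g (s - t'))) ∂haar‖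
        ≤ (haar (A i)).toReal⁻¹ * (Cf * ε * (haar (A i)).toReal) :=
          mul_le_mul_of_nonneg_left hbound (inv_nonneg.2 hpos.le)
      _ = Cf * ε := by field_simp
  -- closedness via Cauchy nets
  apply isClosed_of_closure_subset
  intro t ht
  have hcau : CauchySeq (F t) := by
    refine Metric.cauchy_iff.2 ⟨map_neBot, fun ε hε => ?_⟩
    obtain ⟨U, hU, hkey⟩ := key (ε / (6 * (Cf + 1))) (by positivity)
    have hδ : Cf * (ε / (6 * (Cf + 1))) ≤ ε / 6 := by
      rw [mul_div_assoc', div_le_div_iff₀ (by positivity) (by norm_num)]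
      nlinarith [hCf0, hε.le]
    have hV : {x : G | t - x ∈ U} ∈ 𝓝 t := by
      have h2 : Tendsto (fun x : G => t - x) (𝓝 t) (𝓝 (0 : G)) := by
        simpa using (continuous_sub_left t).tendsto t
      exact h2 hU
    obtain ⟨t', ht'V, c, htc⟩ := mem_closure_iff_nhds.1 ht _ hV
    have hM : {i : I | dist (F t' i) c < ε / 6} ∈ (atTop : Filter I) :=
      Metric.tendsto_nhds.1 htc (ε / 6) (by linarith)
    refine ⟨F t '' {i : I | dist (F t' i) c < ε / 6}, image_mem_map hM, ?_⟩
    rintro x ⟨i, hi, rfl⟩ y ⟨j, hj, rfl⟩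
    have hi' : dist (F t' i) c < ε / 6 := hi
    have hj' : dist (F t' j) c < ε / 6 := hj
    have h1 : dist (F t i) (F t' i) ≤ ε / 6 := by
      rw [dist_eq_norm]; exact le_trans (hkey t t' ht'V i) hδ
    have h2 : dist (F t' j) (F t j) ≤ ε / 6 := by
      rw [dist_comm, dist_eq_norm]; exact le_trans (hkey t t' ht'V j) hδ
    calc dist (F t i) (F t j)
        ≤ dist (F t i) (F t' i) + dist (F t' i) (F t j) := dist_triangle _ _ _
      _ ≤ dist (F t i) (F t' i) +
          (dist (F t' i) c + dist c (F t' j) + dist (F t' j) (F t j)) :=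
          add_le_add le_rfl (dist_triangle4 _ _ _ _)
      _ < ε := by
          have hcc : dist c (F t' j) = dist (F t' j) c := dist_comm _ _
          rw [hcc]
          linarith [hi', hj']
  obtain ⟨c, hc⟩ := cauchySeq_tendsto_of_complete hcau
  exact ⟨c, hc⟩
end
end

section
/- Let G be a σ-compact locally compact Hausdorff Abelian group with Haar measure λ possessing a countable dense subset, let (A_n)_{n∈ℕ} be a van Hove sequence in G, let f : G → ℂ be a bounded measurable function and let g : G → ℂ be a bounded uniformly continuous function. Then there exists a strictly increasing map k : ℕ → ℕ such that for every t ∈ G the limit lim_{n→∞} (1/λ(A_{k(n)})) ∫_{A_{k(n)}} f(s) · conj(g(s − t)) dλ(s) exists in ℂ. -/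
open MeasureTheory Filter Topology Pointwise
open scoped ENNReal NNReal ComplexConjugate

noncomputable section

/-- In a σ-compact, separable LCA group, every van Hove sequence admits a
subsequence along which the reflected Eberlein convolution of a bounded measurable `f`
and a bounded uniformly continuous `g` exists at every point `t`. -/
theorem exists_subsequence_eberlein_convolution
    {G : Type*} [AddCommGroup G] [TopologicalSpace G] [IsTopologicalAddGroup G]
    [LocallyCompactSpace G] [T2Space G] [SigmaCompactSpace G]
    [TopologicalSpace.SeparableSpace G]
    [MeasurableSpace G] [BorelSpace G]
    (haar : Measure G) [haar.IsAddHaarMeasure]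
    (f g : G → ℂ)
    (hf_meas : Measurable f) (hf_bdd : ∃ C : ℝ, ∀ x, ‖f x‖ ≤ C)
    (hg_bdd : ∃ C : ℝ, ∀ x, ‖g x‖ ≤ C)
    (hg_uc : ∀ ε > (0 : ℝ), ∃ U ∈ 𝓝 (0 : G), ∀ x y : G, x - y ∈ U → ‖g x - g y‖ ≤ ε)
    (A : ℕ → Set G)
    (hA_open : ∀ n, IsOpen (A n)) (hA_ne : ∀ n, (A n).Nonempty)
    (hA_cpt : ∀ n, IsCompact (closure (A n)))
    (hA_pos : ∀ n, 0 < haar (A n)) (hA_fin : ∀ n, haar (A n) < ⊤)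
    (hvH : ∀ K : Set G, IsCompact K →
      Tendsto (fun n => haar (KBoundary K (A n)) / haar (A n)) atTop (𝓝 0)) :
    ∃ k : ℕ → ℕ, StrictMono k ∧ ∀ t : G, ∃ c : ℂ,
      Tendsto
        (fun n => (haar (A (k n))).toReal⁻¹ •
          ∫ s in A (k n), f s * conj (g (s - t)) ∂haar)
        atTop (𝓝 c) := by
  classical
  obtain ⟨Cf, hCf⟩ := hf_bdd
  obtain ⟨Cg, hCg⟩ := hg_bdd
  have hCf0 : 0 ≤ Cf := le_trans (norm_nonneg _) (hCf 0)
  have hCg0 : 0 ≤ Cg := le_trans (norm_nonneg _) (hCg 0)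
  -- continuity of g from uniform continuity
  have hg_cont : Continuous g := by
    rw [continuous_iff_continuousAt]
    intro x0
    rw [ContinuousAt, Metric.tendsto_nhds]
    intro ε hε
    obtain ⟨U, hU, hUg⟩ := hg_uc (ε / 2) (by linarith)
    have hmem : {x : G | x - x0 ∈ U} ∈ 𝓝 x0 := by
      have hc : ContinuousAt (fun x : G => x - x0) x0 := (continuous_sub_right x0).continuousAt
      have := hc.preimage_mem_nhds (by simpa using hU)
      exact this
    filter_upwards [hmem] with x hx
    calc dist (g x) (g x0) = ‖g x - g x0‖ := dist_eq_norm _ _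
    _ ≤ ε / 2 := hUg x x0 hx
    _ < ε := by linarith
  have hmeas : ∀ t : G, Measurable fun s => f s * conj (g (s - t)) := fun t =>
    hf_meas.mul ((continuous_star.comp (hg_cont.comp (continuous_sub_right t))).measurable)
  have hbd : ∀ (t s : G), ‖f s * conj (g (s - t))‖ ≤ Cf * Cg := by
    intro t s
    calc ‖f s * conj (g (s - t))‖ = ‖f s‖ * ‖g (s - t)‖ := by
          rw [norm_mul, RCLike.norm_conj]
    _ ≤ Cf * Cg := mul_le_mul (hCf s) (hCg _) (norm_nonneg _) hCf0
  have hInt : ∀ n (t : G), IntegrableOn (fun s => f s * conj (g (s - t))) (A n) haar := by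
    intro n t
    have hconst : IntegrableOn (fun _ : G => Cf * Cg) (A n) haar :=
      integrableOn_const (hA_fin n).ne
    exact hconst.mono' ((hmeas t).aestronglyMeasurable)
      (Eventually.of_forall fun s => hbd t s)
  have hpos : ∀ n, 0 < (haar (A n)).toReal := fun n =>
    ENNReal.toReal_pos (hA_pos n).ne' (hA_fin n).ne
  set F : ℕ → G → ℂ := fun n t =>
    (haar (A n)).toReal⁻¹ • ∫ s in A n, f s * conj (g (s - t)) ∂haar with hF
  have hFbdd : ∀ n t, ‖F n t‖ ≤ Cf * Cg := by
    intro n t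
    have h1 : ‖∫ s in A n, f s * conj (g (s - t)) ∂haar‖ ≤ Cf * Cg * (haar (A n)).toReal :=
      norm_setIntegral_le_of_norm_le_const (hA_fin n) (fun s _ => hbd t s)
    have : ‖F n t‖ = (haar (A n)).toReal⁻¹ * ‖∫ s in A n, f s * conj (g (s - t)) ∂haar‖ := by
      rw [hF]; simp [norm_smul, abs_of_nonneg (le_of_lt (inv_pos.2 (hpos n)))]
    rw [this]
    calc (haar (A n)).toReal⁻¹ * ‖∫ s in A n, f s * conj (g (s - t)) ∂haar‖
        ≤ (haar (A n)).toReal⁻¹ * (Cf * Cg * (haar (A n)).toReal) :=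
          mul_le_mul_of_nonneg_left h1 (le_of_lt (inv_pos.2 (hpos n)))
    _ = Cf * Cg := by
          rw [mul_comm]; exact mul_inv_cancel_right₀ (hpos n).ne' _
  -- equicontinuity
  have hFdiff : ∀ ε > (0 : ℝ), ∃ U ∈ 𝓝 (0 : G), ∀ n (t t' : G), t' - t ∈ U →
      ‖F n t - F n t'‖ ≤ Cf * ε := by
    intro ε hε
    obtain ⟨U, hU, hUg⟩ := hg_uc ε hε
    refine ⟨U, hU, fun n t t' htt' => ?_⟩
    have hdi : (∫ s in A n, f s * (conj (g (s - t)) - conj (g (s - t'))) ∂haar)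
        = (∫ s in A n, f s * conj (g (s - t)) ∂haar)
          - ∫ s in A n, f s * conj (g (s - t')) ∂haar := by
      simp_rw [mul_sub]
      exact integral_sub (hInt n t) (hInt n t')
    have hbd2 : ∀ s ∈ A n, ‖f s * (conj (g (s - t)) - conj (g (s - t')))‖ ≤ Cf * ε := by
      intro s _
      have h3 : ‖conj (g (s - t)) - conj (g (s - t'))‖ = ‖g (s - t) - g (s - t')‖ := by
        rw [← map_sub, RCLike.norm_conj]
      have h4 : (s - t) - (s - t') ∈ U := by
        have : (s - t) - (s - t') = t' - t := by abel
        rw [this]; exact htt'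
      calc ‖f s * (conj (g (s - t)) - conj (g (s - t')))‖
          = ‖f s‖ * ‖g (s - t) - g (s - t')‖ := by rw [norm_mul, h3]
      _ ≤ Cf * ε := mul_le_mul (hCf s) (hUg _ _ h4) (norm_nonneg _) hCf0
    have hm2 : AEStronglyMeasurable (fun s => f s * (conj (g (s - t)) - conj (g (s - t'))))
        (haar.restrict (A n)) :=
      (hf_meas.mul (((continuous_star.comp (hg_cont.comp (continuous_sub_right t))).measurable).sub
        ((continuous_star.comp (hg_cont.comp (continuous_sub_right t'))).measurable))).aestronglyMeasurable
    have h2 : ‖∫ s in A n, f s * (conj (g (s - t)) - conj (g (s - t'))) ∂haar‖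
        ≤ Cf * ε * (haar (A n)).toReal :=
      norm_setIntegral_le_of_norm_le_const (hA_fin n) hbd2
    have heq : F n t - F n t' = (haar (A n)).toReal⁻¹ •
        ∫ s in A n, f s * (conj (g (s - t)) - conj (g (s - t'))) ∂haar := by
      rw [hF, hdi]; simp [smul_sub]
    rw [heq, norm_smul]
    simp only [norm_inv, Real.norm_eq_abs, abs_of_nonneg (le_of_lt (hpos n))]
    calc (haar (A n)).toReal⁻¹ * ‖∫ s in A n, f s * (conj (g (s - t)) - conj (g (s - t'))) ∂haar‖
        ≤ (haar (A n)).toReal⁻¹ * (Cf * ε * (haar (A n)).toReal) :=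
          mul_le_mul_of_nonneg_left h2 (le_of_lt (inv_pos.2 (hpos n)))
    _ = Cf * ε := by
          rw [mul_comm]; exact mul_inv_cancel_right₀ (hpos n).ne' _
  -- dense sequence
  obtain ⟨u, hu⟩ := TopologicalSpace.exists_dense_seq G
  -- compactness and subsequence extraction in ℕ → ℂ
  have hScpt : IsCompact (Set.pi Set.univ fun _ : ℕ => Metric.closedBall (0 : ℂ) (Cf * Cg)) :=
    isCompact_univ_pi fun _ => isCompact_closedBall 0 _
  have hmemS : ∀ n, (fun i => F n (u i)) ∈
      Set.pi Set.univ fun _ : ℕ => Metric.closedBall (0 : ℂ) (Cf * Cg) := by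
    intro n
    rw [Set.mem_univ_pi]
    intro i
    rw [Metric.mem_closedBall, dist_zero_right]
    exact hFbdd n (u i)
  obtain ⟨a, -, k, hk, hconv⟩ := hScpt.tendsto_subseq hmemS
  have hcoord : ∀ i, Tendsto (fun n => F (k n) (u i)) atTop (𝓝 (a i)) := by
    intro i
    have := hconv
    rw [tendsto_pi_nhds] at this
    exact this i
  refine ⟨k, hk, fun t => ?_⟩
  have hcauchy : CauchySeq fun n => F (k n) t := by
    rw [Metric.cauchySeq_iff]
    intro ε hε
    have hd : (0:ℝ) < ε / (3 * (Cf + 1)) := by positivity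
    obtain ⟨U, hU, hUF⟩ := hFdiff _ hd
    have hnb : {x : G | x - t ∈ U} ∈ 𝓝 t := by
      have hc : ContinuousAt (fun x : G => x - t) t := (continuous_sub_right t).continuousAt
      have := hc.preimage_mem_nhds (by simpa using hU)
      exact this
    have ht : t ∈ closure (Set.range u) := hu t
    rw [mem_closure_iff_nhds] at ht
    obtain ⟨x, hx1, i, rfl⟩ := ht _ hnb
    have hsmall : Cf * (ε / (3 * (Cf + 1))) ≤ ε / 3 := by
      have h1 : Cf * (ε / (3 * (Cf + 1))) = (Cf * ε) / (3 * (Cf + 1)) := by ring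
      rw [h1, div_le_div_iff₀ (by positivity) (by norm_num : (0:ℝ) < 3)]
      nlinarith
    have hc := (hcoord i).cauchySeq
    rw [Metric.cauchySeq_iff] at hc
    obtain ⟨N, hN⟩ := hc (ε / 3) (by linarith)
    refine ⟨N, fun m hm n hn => ?_⟩
    have h1 : dist (F (k m) t) (F (k m) (u i)) ≤ ε / 3 := by
      rw [dist_eq_norm]; exact le_trans (hUF _ _ _ hx1) hsmall
    have h2 : dist (F (k n) (u i)) (F (k n) t) ≤ ε / 3 := by
      rw [dist_comm, dist_eq_norm]; exact le_trans (hUF _ _ _ hx1) hsmall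
    have h3 : dist (F (k m) (u i)) (F (k n) (u i)) < ε / 3 := hN m hm n hn
    calc dist (F (k m) t) (F (k n) t)
        ≤ dist (F (k m) t) (F (k m) (u i)) + dist (F (k m) (u i)) (F (k n) (u i))
          + dist (F (k n) (u i)) (F (k n) t) := dist_triangle4 _ _ _ _
    _ < ε / 3 + ε / 3 + ε / 3 := by linarith
    _ = ε := by ring
  obtain ⟨c, hc⟩ := cauchySeq_tendsto_of_complete hcauchy
  exact ⟨c, by simpa only [hF] using hc⟩
end
end

section
/- Let G be a locally compact Hausdorff Abelian group with Haar measure λ, let (A_i)_{i∈I} be a van Hove net in G, let f : G → ℂ be a bounded measurable function and let t ∈ G. Then the net i ↦ (1/λ(A_i)) ( ∫_{A_i} f(s − t) dλ(s) − ∫_{A_i} f(s) dλ(s) ) converges to 0. Consequently, the mean M(τ_t f) = lim_i (1/λ(A_i)) ∫_{A_i} f(s − t) dλ(s) exists if and only if the mean M(f) = lim_i (1/λ(A_i)) ∫_{A_i} f(s) dλ(s) exists, and in that case M(τ_t f) = M(f). -/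
open MeasureTheory Filter Topology Pointwise
open scoped ENNReal NNReal ComplexConjugate

noncomputable section

/-- Along a van Hove net, the averaged difference between a bounded
measurable function and its translate tends to zero; consequently the mean of the
translate exists iff the mean of the function exists, and in that case they coincide. -/
theorem mean_translation_invariant
    {G : Type*} [AddCommGroup G] [TopologicalSpace G] [IsTopologicalAddGroup G]
    [LocallyCompactSpace G] [T2Space G] [MeasurableSpace G] [BorelSpace G]
    {I : Type*} [Preorder I] [Nonempty I] [IsDirected I (· ≤ ·)]
    (haar : Measure G) [haar.IsAddHaarMeasure]
    (f : G → ℂ) (t : G)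
    (hf_meas : Measurable f) (hf_bdd : ∃ C : ℝ, ∀ x, ‖f x‖ ≤ C)
    (A : I → Set G)
    (hA_open : ∀ i, IsOpen (A i)) (hA_ne : ∀ i, (A i).Nonempty)
    (hA_cpt : ∀ i, IsCompact (closure (A i)))
    (hA_pos : ∀ i, 0 < haar (A i)) (hA_fin : ∀ i, haar (A i) < ⊤)
    (hvH : ∀ K : Set G, IsCompact K →
      Tendsto (fun i => haar (KBoundary K (A i)) / haar (A i)) atTop (𝓝 0)) :
    Tendsto
      (fun i => (haar (A i)).toReal⁻¹ •
        ((∫ s in A i, f (s - t) ∂haar) - ∫ s in A i, f s ∂haar))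
      atTop (𝓝 0)
    ∧ ((∃ c : ℂ, Tendsto
          (fun i => (haar (A i)).toReal⁻¹ • ∫ s in A i, f (s - t) ∂haar) atTop (𝓝 c))
        ↔ (∃ c : ℂ, Tendsto
          (fun i => (haar (A i)).toReal⁻¹ • ∫ s in A i, f s ∂haar) atTop (𝓝 c)))
    ∧ ∀ c : ℂ,
        Tendsto (fun i => (haar (A i)).toReal⁻¹ • ∫ s in A i, f (s - t) ∂haar)
          atTop (𝓝 c) →
        Tendsto (fun i => (haar (A i)).toReal⁻¹ • ∫ s in A i, f s ∂haar)
          atTop (𝓝 c) := by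
  classical
  obtain ⟨C, hC⟩ := hf_bdd
  have hC0 : 0 ≤ C := le_trans (norm_nonneg _) (hC 0)
  set B : I → Set G := fun i => (fun x => x + t) ⁻¹' (A i) with hB
  have hBopen : ∀ i, IsOpen (B i) := fun i =>
    (hA_open i).preimage (continuous_add_right t)
  have hAmeas : ∀ i, MeasurableSet (A i) := fun i => (hA_open i).measurableSet
  have hBmeas : ∀ i, MeasurableSet (B i) := fun i => (hBopen i).measurableSet
  have hmp : MeasurePreserving (fun x : G => x + t) haar haar :=
    measurePreserving_add_right haar t
  have hBmeasure : ∀ i, haar (B i) = haar (A i) := fun i =>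
    hmp.measure_preimage (hAmeas i).nullMeasurableSet
  -- change of variables
  have hint : ∀ i, ∫ s in A i, f (s - t) ∂haar = ∫ s in B i, f s ∂haar := by
    intro i
    have hmp' : MeasurePreserving (fun x : G => x + (-t)) haar haar :=
      measurePreserving_add_right haar (-t)
    have hemb : MeasurableEmbedding (fun x : G => x + (-t)) :=
      (MeasurableEquiv.addRight (-t)).measurableEmbedding
    have h := hmp'.setIntegral_preimage_emb hemb f (B i)
    have hset : (fun x : G => x + (-t)) ⁻¹' (B i) = A i := by
      ext x
      simp [hB, Set.mem_preimage]
    rw [hset] at h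
    rw [← h]
    refine setIntegral_congr_fun (hAmeas i) ?_
    intro x _
    simp [sub_eq_add_neg]
  -- integrability of f on finite-measure measurable sets
  have hIntOn : ∀ s : Set G, haar s < ∞ → IntegrableOn f s haar := by
    intro s hfin
    exact Measure.integrableOn_of_bounded hfin.ne hf_meas.aestronglyMeasurable
      (Eventually.of_forall hC)
  -- splitting the difference of integrals
  have hsplit : ∀ i, (∫ s in B i, f s ∂haar) - ∫ s in A i, f s ∂haar
      = (∫ s in B i \ A i, f s ∂haar) - ∫ s in A i \ B i, f s ∂haar := by
    intro i
    have hBfin : haar (B i) < ∞ := by rw [hBmeasure i]; exact hA_fin i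
    have h1 : ∫ s in B i, f s ∂haar
        = (∫ s in B i ∩ A i, f s ∂haar) + ∫ s in B i \ A i, f s ∂haar := by
      rw [← setIntegral_union
        (show Disjoint (B i ∩ A i) (B i \ A i) from
          disjoint_sdiff_self_right.mono_left Set.inter_subset_right)
        ((hBmeas i).diff (hAmeas i))
        ((hIntOn _ hBfin).mono_set Set.inter_subset_left)
        ((hIntOn _ hBfin).mono_set Set.diff_subset),
        Set.inter_union_diff]
    have h2 : ∫ s in A i, f s ∂haar
        = (∫ s in A i ∩ B i, f s ∂haar) + ∫ s in A i \ B i, f s ∂haar := by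
      rw [← setIntegral_union
        (show Disjoint (A i ∩ B i) (A i \ B i) from
          disjoint_sdiff_self_right.mono_left Set.inter_subset_right)
        ((hAmeas i).diff (hBmeas i))
        ((hIntOn _ (hA_fin i)).mono_set Set.inter_subset_left)
        ((hIntOn _ (hA_fin i)).mono_set Set.diff_subset),
        Set.inter_union_diff]
    rw [h1, h2, Set.inter_comm]
    ring
  -- the compact set K and inclusions of the symmetric-difference pieces
  set K : Set G := {t, -t} with hK
  have hKcpt : IsCompact K := (Set.toFinite K).isCompact
  have hsub1 : ∀ i, B i \ A i ⊆ KBoundary K (A i) := by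
    intro i x hx
    left
    refine ⟨subset_closure ?_, hx.2⟩
    have : x = (x + t) + (-t) := by abel
    rw [this]
    exact Set.add_mem_add hx.1 (by simp [hK])
  have hsub2 : ∀ i, A i \ B i ⊆ KBoundary K (A i) := by
    intro i x hx
    right
    refine ⟨?_, subset_closure hx.1⟩
    have : x = (x + t) - t := by abel
    rw [this]
    exact Set.sub_mem_sub hx.2 (by simp [hK])
  -- ratio convergences
  have hratio : ∀ (S : I → Set G), (∀ i, S i ⊆ KBoundary K (A i)) →
      Tendsto (fun i => (haar (S i)).toReal / (haar (A i)).toReal) atTop (𝓝 0) := by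
    intro S hS
    have h1 : Tendsto (fun i => haar (S i) / haar (A i)) atTop (𝓝 0) := by
      refine tendsto_of_tendsto_of_tendsto_of_le_of_le tendsto_const_nhds (hvH K hKcpt)
        (fun i => zero_le) (fun i => ?_)
      exact ENNReal.div_le_div_right (measure_mono (hS i)) _
    have h2 : Tendsto ENNReal.toReal (𝓝 (0 : ℝ≥0∞)) (𝓝 (0 : ℝ≥0∞).toReal) :=
      ENNReal.tendsto_toReal (by simp)
    have h3 := h2.comp h1
    simp only [Function.comp_def, ENNReal.toReal_div, ENNReal.toReal_zero] at h3
    exact h3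
  have hr1 := hratio (fun i => B i \ A i) hsub1
  have hr2 := hratio (fun i => A i \ B i) hsub2
  -- norm bound
  have hbound : ∀ i,
      ‖(haar (A i)).toReal⁻¹ • ((∫ s in A i, f (s - t) ∂haar) - ∫ s in A i, f s ∂haar)‖
      ≤ C * ((haar (B i \ A i)).toReal / (haar (A i)).toReal)
        + C * ((haar (A i \ B i)).toReal / (haar (A i)).toReal) := by
    intro i
    have ha : (0:ℝ) < (haar (A i)).toReal :=
      ENNReal.toReal_pos (hA_pos i).ne' (hA_fin i).ne
    have hBfin : haar (B i) < ∞ := by rw [hBmeasure i]; exact hA_fin i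
    have hm1 : haar (B i \ A i) < ∞ := (measure_mono Set.diff_subset).trans_lt hBfin
    have hm2 : haar (A i \ B i) < ∞ := (measure_mono Set.diff_subset).trans_lt (hA_fin i)
    have hb1 : ‖∫ s in B i \ A i, f s ∂haar‖ ≤ C * (haar (B i \ A i)).toReal :=
      norm_setIntegral_le_of_norm_le_const hm1 (fun x _ => hC x)
    have hb2 : ‖∫ s in A i \ B i, f s ∂haar‖ ≤ C * (haar (A i \ B i)).toReal :=
      norm_setIntegral_le_of_norm_le_const hm2 (fun x _ => hC x)
    rw [hint i, hsplit i, norm_smul, norm_inv, Real.norm_eq_abs, abs_of_pos ha]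
    calc (haar (A i)).toReal⁻¹ * ‖(∫ s in B i \ A i, f s ∂haar) - ∫ s in A i \ B i, f s ∂haar‖
        ≤ (haar (A i)).toReal⁻¹ *
          (C * (haar (B i \ A i)).toReal + C * (haar (A i \ B i)).toReal) := by
          refine mul_le_mul_of_nonneg_left ?_ (by positivity)
          exact (norm_sub_le _ _).trans (add_le_add hb1 hb2)
      _ = C * ((haar (B i \ A i)).toReal / (haar (A i)).toReal)
          + C * ((haar (A i \ B i)).toReal / (haar (A i)).toReal) := by
          field_simp
  -- part 1
  have part1 : Tendsto
      (fun i => (haar (A i)).toReal⁻¹ •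
        ((∫ s in A i, f (s - t) ∂haar) - ∫ s in A i, f s ∂haar))
      atTop (𝓝 0) := by
    have hg : Tendsto (fun i => C * ((haar (B i \ A i)).toReal / (haar (A i)).toReal)
        + C * ((haar (A i \ B i)).toReal / (haar (A i)).toReal)) atTop (𝓝 0) := by
      have := (hr1.const_mul C).add (hr2.const_mul C)
      simpa using this
    exact squeeze_zero_norm hbound hg
  refine ⟨part1, ?_, ?_⟩
  · constructor
    · rintro ⟨c, h⟩
      refine ⟨c, ?_⟩
      have := h.sub part1
      simpa [smul_sub, sub_sub_cancel] using this
    · rintro ⟨c, h⟩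
      refine ⟨c, ?_⟩
      have := part1.add h
      simpa [smul_sub, sub_add_cancel] using this
  · intro c h
    have := h.sub part1
    simpa [smul_sub, sub_sub_cancel] using this
end
end

section
/- Let G be a locally compact Hausdorff Abelian group with Haar measure λ, let (A_i)_{i∈I} be a van Hove net in G, and let F be a set of bounded uniformly continuous functions G → ℂ. Then the following are equivalent: (i) for all f, g ∈ F and all t ∈ G the mean M(f · conj(τ_t g)) along (A_i) exists; (ii) there exists a set B of bounded uniformly continuous functions G → ℂ with F ⊆ B, with τ_t h ∈ B for every h ∈ B and t ∈ G, and such that for all f, g ∈ B the mean M(f · conj(g)) along (A_i) exists. -/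
open MeasureTheory Filter Topology Pointwise
open scoped ENNReal NNReal ComplexConjugate

noncomputable section

/-- A bounded, uniformly continuous function on an LCA group. -/
def IsBUC {G : Type*} [AddCommGroup G] [TopologicalSpace G] (g : G → ℂ) : Prop :=
  (∃ C : ℝ, ∀ x, ‖g x‖ ≤ C) ∧
    ∀ ε > (0 : ℝ), ∃ U ∈ 𝓝 (0 : G), ∀ x y : G, x - y ∈ U → ‖g x - g y‖ ≤ ε

theorem mean_translate
    {G : Type*} [AddCommGroup G] [TopologicalSpace G] [IsTopologicalAddGroup G]
    [LocallyCompactSpace G] [T2Space G] [MeasurableSpace G] [BorelSpace G]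
    {I : Type*} [Preorder I] [Nonempty I] [IsDirected I (· ≤ ·)]
    (haar : Measure G) [haar.IsAddHaarMeasure]
    (A : I → Set G)
    (hA_open : ∀ i, IsOpen (A i))
    (hA_cpt : ∀ i, IsCompact (closure (A i)))
    (hA_fin : ∀ i, haar (A i) < ⊤)
    (hvH : ∀ K : Set G, IsCompact K →
      Tendsto (fun i => haar (KBoundary K (A i)) / haar (A i)) atTop (𝓝 0))
    (h : G → ℂ) (hm : Measurable h) (C : ℝ) (hC : ∀ x, ‖h x‖ ≤ C)
    (t : G) (c : ℂ)
    (hc : Tendsto (fun i => (haar (A i)).toReal⁻¹ • ∫ s in A i, h s ∂haar) atTop (𝓝 c)) :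
    Tendsto (fun i => (haar (A i)).toReal⁻¹ • ∫ s in A i, h (s - t) ∂haar) atTop (𝓝 c) := by
  have hC0 : 0 ≤ C := le_trans (norm_nonneg _) (hC 0)
  set K : Set G := {t, -t} with hKdef
  have hK : IsCompact K := (Set.Finite.insert t (Set.finite_singleton (-t))).isCompact
  set A' : I → Set G := fun i => (fun x => x + t) ⁻¹' (A i) with hA'def
  have hmA : ∀ i, MeasurableSet (A i) := fun i => (hA_open i).measurableSet
  have hmA' : ∀ i, MeasurableSet (A' i) :=
    fun i => ((hA_open i).preimage (continuous_add_right t)).measurableSet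
  -- Step 1 : change of variables
  have step1 : ∀ i, ∫ s in A i, h (s - t) ∂haar = ∫ s in A' i, h s ∂haar := by
    intro i
    set e : G ≃ᵐ G := (Homeomorph.addRight t).toMeasurableEquiv with he
    have heq : Measure.map (⇑e) haar = haar := by
      have h' : ⇑e = fun x => x + t := rfl
      rw [h']; exact map_add_right_eq_self haar t
    calc ∫ s in A i, h (s - t) ∂haar
        = ∫ s in A i, h (s - t) ∂(Measure.map (⇑e) haar) := by rw [heq]
      _ = ∫ x in ⇑e ⁻¹' (A i), h (e x - t) ∂haar := setIntegral_map_equiv e _ _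
      _ = ∫ s in A' i, h s ∂haar := by
          simp only [he, Homeomorph.toMeasurableEquiv_coe, Homeomorph.coe_addRight,
            add_sub_cancel_right]
          rfl
  -- integrability
  have hint : ∀ S : Set G, haar S < ⊤ → IntegrableOn h S haar := by
    intro S hS
    haveI : IsFiniteMeasure (haar.restrict S) :=
      ⟨by rwa [Measure.restrict_apply_univ]⟩
    exact (integrable_const C).mono' hm.aestronglyMeasurable (ae_of_all _ (fun x => hC x))
  -- boundary finiteness
  have hBfin : ∀ i, haar (KBoundary K (A i)) < ⊤ := by
    intro i
    have hsub : KBoundary K (A i) ⊆ (closure (A i) + K) ∪ closure (A i) := by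
      rintro x (⟨hx1, -⟩ | ⟨-, hx2⟩)
      · left
        have hcl : closure (A i + K) ⊆ closure (A i) + K := by
          apply closure_minimal (Set.add_subset_add subset_closure subset_rfl)
          exact ((hA_cpt i).add hK).isClosed
        exact hcl hx1
      · right; exact hx2
    exact lt_of_le_of_lt (measure_mono hsub)
      (((hA_cpt i).add hK).union (hA_cpt i)).measure_lt_top
  -- inclusions
  have incl1 : ∀ i, A' i \ A i ⊆ KBoundary K (A i) := by
    rintro i x ⟨hx1, hx2⟩
    left
    refine ⟨subset_closure ?_, hx2⟩
    have hmm : (x + t) + (-t) ∈ A i + K :=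
      Set.add_mem_add hx1 (by simp [hKdef])
    simpa using hmm
  have incl2 : ∀ i, A i \ A' i ⊆ KBoundary K (A i) := by
    rintro i x ⟨hx1, hx2⟩
    right
    refine ⟨?_, subset_closure hx1⟩
    have hmm : (x + t) - t ∈ (A i)ᶜ - K :=
      Set.sub_mem_sub hx2 (by simp [hKdef])
    simpa using hmm
  -- finiteness of pieces
  have hfin1 : ∀ i, haar (A' i \ A i) < ⊤ :=
    fun i => lt_of_le_of_lt (measure_mono (incl1 i)) (hBfin i)
  have hfin2 : ∀ i, haar (A i \ A' i) < ⊤ :=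
    fun i => lt_of_le_of_lt (measure_mono Set.diff_subset) (hA_fin i)
  -- difference of set integrals
  have step2 : ∀ i, (∫ s in A' i, h s ∂haar) - (∫ s in A i, h s ∂haar)
      = (∫ s in A' i \ A i, h s ∂haar) - (∫ s in A i \ A' i, h s ∂haar) := by
    intro i
    have hd1 : Disjoint (A' i ∩ A i) (A' i \ A i) := by
      rw [Set.disjoint_left]; rintro x ⟨-, hx⟩ ⟨-, hx'⟩; exact hx' hx
    have hd2 : Disjoint (A i ∩ A' i) (A i \ A' i) := by
      rw [Set.disjoint_left]; rintro x ⟨-, hx⟩ ⟨-, hx'⟩; exact hx' hx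
    have hi0 : IntegrableOn h (A' i ∩ A i) haar :=
      hint _ (lt_of_le_of_lt (measure_mono Set.inter_subset_right) (hA_fin i))
    have hi0' : IntegrableOn h (A i ∩ A' i) haar :=
      hint _ (lt_of_le_of_lt (measure_mono Set.inter_subset_left) (hA_fin i))
    have e1 : ∫ s in A' i, h s ∂haar
        = (∫ s in A' i ∩ A i, h s ∂haar) + ∫ s in A' i \ A i, h s ∂haar := by
      rw [← setIntegral_union hd1 ((hmA' i).diff (hmA i)) hi0 (hint _ (hfin1 i)),
        Set.inter_union_diff]
    have e2 : ∫ s in A i, h s ∂haar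
        = (∫ s in A i ∩ A' i, h s ∂haar) + ∫ s in A i \ A' i, h s ∂haar := by
      rw [← setIntegral_union hd2 ((hmA i).diff (hmA' i)) hi0' (hint _ (hfin2 i)),
        Set.inter_union_diff]
    rw [e1, e2, Set.inter_comm]; ring
  -- the key bound
  have key : ∀ i,
      ‖((haar (A i)).toReal⁻¹ • ∫ s in A i, h (s - t) ∂haar)
        - (haar (A i)).toReal⁻¹ • ∫ s in A i, h s ∂haar‖
      ≤ 2 * C * (haar (KBoundary K (A i)) / haar (A i)).toReal := by
    intro i
    have hnorm1 : ‖∫ s in A' i \ A i, h s ∂haar‖ ≤ C * (haar (A' i \ A i)).toReal :=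
      norm_setIntegral_le_of_norm_le_const (hfin1 i) (fun x _ => hC x)
    have hnorm2 : ‖∫ s in A i \ A' i, h s ∂haar‖ ≤ C * (haar (A i \ A' i)).toReal :=
      norm_setIntegral_le_of_norm_le_const (hfin2 i) (fun x _ => hC x)
    have m1 : (haar (A' i \ A i)).toReal ≤ (haar (KBoundary K (A i))).toReal :=
      ENNReal.toReal_mono (hBfin i).ne (measure_mono (incl1 i))
    have m2 : (haar (A i \ A' i)).toReal ≤ (haar (KBoundary K (A i))).toReal :=
      ENNReal.toReal_mono (hBfin i).ne (measure_mono (incl2 i))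
    calc ‖((haar (A i)).toReal⁻¹ • ∫ s in A i, h (s - t) ∂haar)
          - (haar (A i)).toReal⁻¹ • ∫ s in A i, h s ∂haar‖
        = (haar (A i)).toReal⁻¹
            * ‖(∫ s in A' i, h s ∂haar) - ∫ s in A i, h s ∂haar‖ := by
          rw [step1 i, ← smul_sub, norm_smul, Real.norm_eq_abs,
            abs_of_nonneg (by positivity)]
      _ = (haar (A i)).toReal⁻¹
            * ‖(∫ s in A' i \ A i, h s ∂haar) - ∫ s in A i \ A' i, h s ∂haar‖ := by
          rw [step2 i]
      _ ≤ (haar (A i)).toReal⁻¹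
            * (C * (haar (KBoundary K (A i))).toReal
              + C * (haar (KBoundary K (A i))).toReal) := by
          apply mul_le_mul_of_nonneg_left _ (by positivity)
          refine (norm_sub_le _ _).trans (add_le_add (hnorm1.trans ?_) (hnorm2.trans ?_))
          · exact mul_le_mul_of_nonneg_left m1 hC0
          · exact mul_le_mul_of_nonneg_left m2 hC0
      _ = 2 * C * (haar (KBoundary K (A i)) / haar (A i)).toReal := by
          rw [ENNReal.toReal_div]; ring
  have h0 : Tendsto (fun i => (haar (KBoundary K (A i)) / haar (A i)).toReal)
      atTop (𝓝 0) := by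
    have h1 := (ENNReal.tendsto_toReal (by simp : (0 : ℝ≥0∞) ≠ ⊤)).comp (hvH K hK)
    simpa only [Function.comp_def, ENNReal.toReal_zero] using h1
  have hb : Tendsto (fun i => 2 * C * (haar (KBoundary K (A i)) / haar (A i)).toReal)
      atTop (𝓝 0) := by
    simpa using h0.const_mul (2 * C)
  have hdiff : Tendsto
      (fun i => ((haar (A i)).toReal⁻¹ • ∫ s in A i, h (s - t) ∂haar)
        - (haar (A i)).toReal⁻¹ • ∫ s in A i, h s ∂haar) atTop (𝓝 0) :=
    squeeze_zero_norm key hb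
  have hsum := hc.add hdiff
  rw [add_zero] at hsum
  have heq : (fun i => ((haar (A i)).toReal⁻¹ • ∫ s in A i, h s ∂haar)
      + (((haar (A i)).toReal⁻¹ • ∫ s in A i, h (s - t) ∂haar)
        - (haar (A i)).toReal⁻¹ • ∫ s in A i, h s ∂haar))
      = fun i => (haar (A i)).toReal⁻¹ • ∫ s in A i, h (s - t) ∂haar := by
    funext i; ring
  rwa [heq] at hsum

theorem IsBUC.continuous' {G : Type*} [AddCommGroup G] [TopologicalSpace G]
    [IsTopologicalAddGroup G] {g : G → ℂ} (hg : IsBUC g) : Continuous g := by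
  rw [continuous_iff_continuousAt]
  intro x
  rw [ContinuousAt, Metric.tendsto_nhds]
  intro ε hε
  obtain ⟨U, hU, hUc⟩ := hg.2 (ε / 2) (by positivity)
  have hmem : (fun y : G => y - x) ⁻¹' U ∈ 𝓝 x := by
    have hcont : Continuous fun y : G => y - x := continuous_id.sub continuous_const
    apply hcont.continuousAt.preimage_mem_nhds
    simpa using hU
  filter_upwards [hmem] with y hy
  have h1 := hUc y x hy
  calc dist (g y) (g x) = ‖g y - g x‖ := dist_eq_norm _ _
    _ ≤ ε / 2 := h1
    _ < ε := by linarith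

theorem IsBUC.translate' {G : Type*} [AddCommGroup G] [TopologicalSpace G]
    {g : G → ℂ} (hg : IsBUC g) (t : G) : IsBUC (fun x => g (x - t)) := by
  obtain ⟨⟨C, hC⟩, hu⟩ := hg
  refine ⟨⟨C, fun x => hC _⟩, fun ε hε => ?_⟩
  obtain ⟨U, hU, hUc⟩ := hu ε hε
  exact ⟨U, hU, fun x y hxy => hUc _ _ (by simpa [sub_sub_sub_cancel_right] using hxy)⟩

/-- For a set `F` of bounded uniformly continuous functions, the means
`M(f · conj (τ_t g))` exist for all `f, g ∈ F` and `t ∈ G` iff there is a translation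
invariant set `B ⊇ F` of bounded uniformly continuous functions on which all means
`M(f · conj g)` exist. -/
theorem eberlein_exists_iff_invariant_superset
    {G : Type*} [AddCommGroup G] [TopologicalSpace G] [IsTopologicalAddGroup G]
    [LocallyCompactSpace G] [T2Space G] [MeasurableSpace G] [BorelSpace G]
    {I : Type*} [Preorder I] [Nonempty I] [IsDirected I (· ≤ ·)]
    (haar : Measure G) [haar.IsAddHaarMeasure]
    (A : I → Set G)
    (hA_open : ∀ i, IsOpen (A i)) (hA_ne : ∀ i, (A i).Nonempty)
    (hA_cpt : ∀ i, IsCompact (closure (A i)))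
    (hA_pos : ∀ i, 0 < haar (A i)) (hA_fin : ∀ i, haar (A i) < ⊤)
    (hvH : ∀ K : Set G, IsCompact K →
      Tendsto (fun i => haar (KBoundary K (A i)) / haar (A i)) atTop (𝓝 0))
    (F : Set (G → ℂ)) (hF : ∀ f ∈ F, IsBUC f) :
    (∀ f ∈ F, ∀ g ∈ F, ∀ t : G, ∃ c : ℂ,
        Tendsto
          (fun i => (haar (A i)).toReal⁻¹ • ∫ s in A i, f s * conj (g (s - t)) ∂haar)
          atTop (𝓝 c))
    ↔ (∃ B : Set (G → ℂ),
        (∀ h ∈ B, IsBUC h) ∧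
        F ⊆ B ∧
        (∀ h ∈ B, ∀ t : G, (fun x => h (x - t)) ∈ B) ∧
        (∀ f ∈ B, ∀ g ∈ B, ∃ c : ℂ,
          Tendsto
            (fun i => (haar (A i)).toReal⁻¹ • ∫ s in A i, f s * conj (g s) ∂haar)
            atTop (𝓝 c))) := by

  constructor
  · intro hmeans
    refine ⟨{h | ∃ f ∈ F, ∃ t : G, h = fun x => f (x - t)}, ?_, ?_, ?_, ?_⟩
    · rintro h ⟨f, hf, t, rfl⟩
      exact (hF f hf).translate' t
    · intro f hf
      exact ⟨f, hf, 0, by funext x; rw [sub_zero]⟩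
    · rintro h ⟨f, hf, u, rfl⟩ t
      refine ⟨f, hf, t + u, ?_⟩
      funext x
      show f (x - t - u) = f (x - (t + u))
      rw [sub_sub]
    · rintro f' ⟨f, hf, t1, rfl⟩ g' ⟨g, hg, t2, rfl⟩
      obtain ⟨c, hc⟩ := hmeans f hf g hg (t2 - t1)
      obtain ⟨Cf, hCf⟩ := (hF f hf).1
      obtain ⟨Cg, hCg⟩ := (hF g hg).1
      have hCf0 : 0 ≤ Cf := le_trans (norm_nonneg _) (hCf 0)
      have hCg0 : 0 ≤ Cg := le_trans (norm_nonneg _) (hCg 0)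
      set h0 : G → ℂ := fun x => f x * conj (g (x - (t2 - t1))) with hh0
      have hm : Measurable h0 := by
        have hcf : Continuous f := (hF f hf).continuous'
        have hcg : Continuous g := (hF g hg).continuous'
        exact (hcf.mul (continuous_star.comp
          (hcg.comp (continuous_id.sub continuous_const)))).measurable
      have hbd : ∀ x, ‖h0 x‖ ≤ Cf * Cg := by
        intro x
        rw [hh0]
        simp only [norm_mul, RCLike.norm_conj]
        exact mul_le_mul (hCf x) (hCg _) (norm_nonneg _) hCf0
      refine ⟨c, ?_⟩
      have hmt := mean_translate haar A hA_open hA_cpt hA_fin hvH h0 hm (Cf * Cg) hbd t1 c hc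
      have key : ∀ s : G, f (s - t1) * conj (g (s - t2)) = h0 (s - t1) := by
        intro s
        show _ = f (s - t1) * conj (g (s - t1 - (t2 - t1)))
        rw [show s - t1 - (t2 - t1) = s - t2 by abel]
      simpa only [key] using hmt
  · rintro ⟨B, hB_buc, hFB, hBt, hBmean⟩ f hf g hg t
    obtain ⟨c, hc⟩ := hBmean f (hFB hf) _ (hBt g (hFB hg) t)
    exact ⟨c, hc⟩
end
end

section
/- Let G be a locally compact Hausdorff Abelian group with Haar measure λ, let V ⊆ G be a nonempty open set with compact closure, and let ν be a translation bounded positive measure on G. Then for every Borel set B ⊆ G with compact closure, ν(B) ≤ (λ(B − V)/λ(V)) · sup_{t∈G} ν(t + V). -/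
open MeasureTheory Filter Topology Pointwise
open scoped ENNReal NNReal ComplexConjugate

noncomputable section

/-- Universal bound: for a translation bounded positive measure `ν` and a
nonempty open relatively compact `V`, every relatively compact Borel set `B` satisfies
`ν B ≤ (λ(B - V)/λ(V)) · sup_t ν(t + V)`. -/
theorem universal_bound_translation_bounded
    {G : Type*} [AddCommGroup G] [TopologicalSpace G] [IsTopologicalAddGroup G]
    [LocallyCompactSpace G] [T2Space G] [MeasurableSpace G] [BorelSpace G]
    (haar : Measure G) [haar.IsAddHaarMeasure]
    (V : Set G) (hV_ne : V.Nonempty) (hV_open : IsOpen V)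
    (hV_cpt : IsCompact (closure V))
    (ν : Measure G) (hν_tb : (⨆ t : G, ν (t +ᵥ V)) < ⊤)
    (B : Set G) (hB_meas : MeasurableSet B) (hB_cpt : IsCompact (closure B)) :
    ν B ≤ (haar (B - V) / haar V) * ⨆ t : G, ν (t +ᵥ V) := by
  classical
  set S : ℝ≥0∞ := ⨆ t : G, ν (t +ᵥ V) with hS_def
  have hS_ne : S ≠ ⊤ := hν_tb.ne
  have hνle : ∀ t : G, ν (t +ᵥ V) ≤ S := fun t => le_iSup (fun t : G => ν (t +ᵥ V)) t
  -- every compact set has finite ν-measure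
  have hcompfin : ∀ C : Set G, IsCompact C → ν C < ⊤ := by
    intro C hC
    obtain ⟨v0, hv0⟩ := hV_ne
    obtain ⟨s, hs⟩ := hC.elim_finite_subcover (fun i : G => i +ᵥ V)
      (fun i => hV_open.vadd i) (by
        intro x hx
        exact Set.mem_iUnion.2 ⟨x - v0, ⟨v0, hv0, show x - v0 + v0 = x by abel⟩⟩)
    calc ν C ≤ ν (⋃ i ∈ s, i +ᵥ V) := measure_mono hs
      _ ≤ ∑ i ∈ s, ν (i +ᵥ V) := measure_biUnion_finset_le s _
      _ < ⊤ := ENNReal.sum_lt_top.2 fun i _ => lt_of_le_of_lt (hνle i) hν_tb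
  -- the canonical regular Haar measure
  set μ₀ : Measure G := Measure.addHaar with hμ₀_def
  -- the set W = B - V
  set W : Set G := B - V with hW_def
  have hW_open : IsOpen W := hV_open.sub_left
  have hW_meas : MeasurableSet W := hW_open.measurableSet
  have hCBV : IsCompact (closure B - closure V) := by
    rw [sub_eq_add_neg]
    exact hB_cpt.add hV_cpt.neg
  have hWsub : W ⊆ closure B - closure V :=
    Set.sub_subset_sub subset_closure subset_closure
  have hWc : IsCompact (closure W) :=
    hCBV.of_isClosed_subset isClosed_closure (closure_minimal hWsub hCBV.isClosed)
  -- the compact set K containing B and all relevant translates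
  set K : Set G := closure B - closure V + closure V with hK_def
  have hK_cpt : IsCompact K := hCBV.add hV_cpt
  have hBK : B ⊆ K := by
    intro b hb
    obtain ⟨v0, hv0⟩ := hV_ne
    have h1 : b - v0 ∈ closure B - closure V :=
      Set.sub_mem_sub (subset_closure hb) (subset_closure hv0)
    have h2 : b - v0 + v0 ∈ K := Set.add_mem_add h1 (subset_closure hv0)
    simpa using h2
  -- restricted measures
  set μ : Measure G := μ₀.restrict W with hμ_def
  have hWfin : μ₀ W ≠ ⊤ :=
    ((measure_mono subset_closure).trans_lt hWc.measure_lt_top).ne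
  haveI : IsFiniteMeasure μ := ⟨by
    rw [hμ_def, Measure.restrict_apply_univ]
    exact lt_of_le_of_lt (le_refl _) (lt_of_le_of_ne le_top hWfin)⟩
  set ν' : Measure G := ν.restrict K with hν'_def
  haveI : IsFiniteMeasure ν' := ⟨by
    rw [hν'_def, Measure.restrict_apply_univ]
    exact hcompfin K hK_cpt⟩
  have hν'B : ν' B = ν B := by
    rw [hν'_def, Measure.restrict_apply hB_meas, Set.inter_eq_self_of_subset_left hBK]
  have hν'le : ∀ t : G, ν' (t +ᵥ V) ≤ S := fun t =>
    le_trans (Measure.restrict_apply_le _ _) (hνle t)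
  have hνB_ne : ν B ≠ ⊤ := ((measure_mono hBK).trans_lt (hcompfin K hK_cpt)).ne
  -- cutoff function equal to 1 on closure W
  obtain ⟨h, h_one, -, h_supp, h_mem⟩ :
      ∃ f : C(G, ℝ), Set.EqOn f 1 (closure W) ∧ Set.EqOn f 0 ∅ ∧ HasCompactSupport f ∧
        ∀ x, f x ∈ Set.Icc (0:ℝ) 1 :=
    exists_continuous_one_zero_of_isCompact hWc isClosed_empty (by simp)
  -- key inequality for compact subsets of V
  have key : ∀ K₀ : Set G, K₀ ⊆ V → IsCompact K₀ → μ₀ K₀ * ν B ≤ μ₀ W * S := by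
    intro K₀ hK₀V hK₀c
    obtain ⟨g, g_one, g_zero, g_supp, g_mem⟩ :
        ∃ f : C(G, ℝ), Set.EqOn f 1 K₀ ∧ Set.EqOn f 0 Vᶜ ∧ HasCompactSupport f ∧
          ∀ x, f x ∈ Set.Icc (0:ℝ) 1 :=
      exists_continuous_one_zero_of_isCompact hK₀c hV_open.isClosed_compl
        ((disjoint_compl_right : Disjoint V Vᶜ).mono_left hK₀V)
    have g_nonneg : ∀ x, 0 ≤ g x := fun x => (g_mem x).1
    have g_le_one : ∀ x, g x ≤ 1 := fun x => (g_mem x).2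
    set F : G → G → ℝ := fun t x => h t * g (x - t) with hF_def
    have hFcont : Continuous (Function.uncurry F) :=
      (h.continuous.comp continuous_fst).mul
        (g.continuous.comp (continuous_snd.sub continuous_fst))
    have hFnonneg : ∀ t x, 0 ≤ F t x := fun t x =>
      mul_nonneg (h_mem t).1 (g_nonneg _)
    have hFle_one : ∀ t x, F t x ≤ 1 := fun t x =>
      mul_le_one₀ (h_mem t).2 (g_nonneg _) (g_le_one _)
    have hFsupp : HasCompactSupport (Function.uncurry F) := by
      have A : IsCompact (tsupport (⇑h)) := h_supp
      have Bc : IsCompact (tsupport (⇑g)) := g_supp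
      have hAB : IsCompact ((tsupport (⇑h)) ×ˢ (tsupport (⇑h) + tsupport (⇑g))) :=
        A.prod (A.add Bc)
      apply HasCompactSupport.intro hAB
      rintro ⟨t, x⟩ hp
      by_cases ht : t ∈ tsupport (⇑h)
      · have hx : x ∉ tsupport (⇑h) + tsupport (⇑g) := by
          intro hx
          exact hp (Set.mem_prod.2 ⟨ht, hx⟩)
        have : g (x - t) = 0 := by
          by_contra hg
          have h1 : x - t ∈ tsupport (⇑g) := subset_tsupport _ hg
          have h2 : t + (x - t) ∈ tsupport (⇑h) + tsupport (⇑g) := Set.add_mem_add ht h1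
          simp only [add_sub_cancel] at h2
          exact hx h2
        simp [Function.uncurry, hF_def, this]
      · have : h t = 0 := image_eq_zero_of_notMem_tsupport ht
        simp [Function.uncurry, hF_def, this]
    -- Fubini
    have hswap : ∫ t, (∫ x, F t x ∂ν') ∂μ = ∫ x, (∫ t, F t x ∂μ) ∂ν' :=
      integral_integral_swap_of_hasCompactSupport hFcont hFsupp
    -- upper bound
    have up : ∫ t, (∫ x, F t x ∂ν') ∂μ ≤ (μ₀ W).toReal * S.toReal := by
      have hb : ∀ t, (∫ x, F t x ∂ν') ≤ S.toReal := by
        intro t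
        have e : ∫ x, F t x ∂ν' = h t * ∫ x, g (x - t) ∂ν' := by
          simp only [hF_def]
          exact integral_const_mul _ _
        have h1 : ENNReal.ofReal (∫ x, g (x - t) ∂ν') ≤ ν' (t +ᵥ V) := by
          apply integral_le_measure
          · intro x _; exact g_le_one _
          · intro x hx
            have hxt : x - t ∉ V := by
              intro hmem
              exact hx ⟨x - t, hmem, show t + (x - t) = x by abel⟩
            exact le_of_eq (g_zero hxt)
        have h2 : ∫ x, g (x - t) ∂ν' ≤ S.toReal := by
          have h3 : (ENNReal.ofReal (∫ x, g (x - t) ∂ν')).toReal ≤ S.toReal :=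
            ENNReal.toReal_mono hS_ne (h1.trans (hν'le t))
          rwa [ENNReal.toReal_ofReal (integral_nonneg fun x => g_nonneg _)] at h3
        calc ∫ x, F t x ∂ν' = h t * ∫ x, g (x - t) ∂ν' := e
          _ ≤ 1 * S.toReal := by
              apply mul_le_mul (h_mem t).2 h2 (integral_nonneg fun x => g_nonneg _) zero_le_one
          _ = S.toReal := one_mul _
      calc ∫ t, (∫ x, F t x ∂ν') ∂μ ≤ ∫ _, S.toReal ∂μ := by
            apply integral_mono_of_nonneg
            · exact Eventually.of_forall fun t => integral_nonneg fun x => hFnonneg t x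
            · exact integrable_const _
            · exact Eventually.of_forall hb
        _ = (μ₀ W).toReal * S.toReal := by
            rw [integral_const, smul_eq_mul, measureReal_def, hμ_def, Measure.restrict_apply_univ]
    -- lower bound
    set Ig : ℝ := ∫ y, g y ∂μ₀ with hIg_def
    have hg_int : Integrable (⇑g) μ₀ := g.continuous.integrable_of_hasCompactSupport g_supp
    have hIg : (μ₀ K₀).toReal ≤ Ig := by
      have e0 : (μ₀ K₀).toReal = ∫ _ in K₀, (1:ℝ) ∂μ₀ := by
        rw [setIntegral_const, smul_eq_mul, mul_one, measureReal_def]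
      rw [e0]
      calc ∫ _ in K₀, (1:ℝ) ∂μ₀ ≤ ∫ y in K₀, g y ∂μ₀ := by
            apply setIntegral_mono_on
            · exact integrableOn_const hK₀c.measure_lt_top.ne
            · exact hg_int.integrableOn
            · exact hK₀c.measurableSet
            · intro y hy; exact le_of_eq (g_one hy).symm
        _ ≤ Ig := setIntegral_le_integral hg_int (Eventually.of_forall fun y => g_nonneg y)
    have Φmeas : StronglyMeasurable (fun x => ∫ t, F t x ∂μ) :=
      (hFsupp.stronglyMeasurable_of_prod hFcont).integral_prod_left'
    have Φnonneg : ∀ x, 0 ≤ ∫ t, F t x ∂μ := fun x =>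
      integral_nonneg fun t => hFnonneg t x
    have Φbdd : ∀ x, ‖∫ t, F t x ∂μ‖ ≤ (μ Set.univ).toReal := by
      intro x
      rw [Real.norm_of_nonneg (Φnonneg x)]
      calc ∫ t, F t x ∂μ ≤ ∫ _, (1:ℝ) ∂μ := by
            apply integral_mono_of_nonneg
            · exact Eventually.of_forall fun t => hFnonneg t x
            · exact integrable_const _
            · exact Eventually.of_forall fun t => hFle_one t x
        _ = (μ Set.univ).toReal := by rw [integral_const, smul_eq_mul, mul_one, measureReal_def]
    have Φint : Integrable (fun x => ∫ t, F t x ∂μ) ν' :=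
      ⟨Φmeas.aestronglyMeasurable, HasFiniteIntegral.of_bounded (Eventually.of_forall Φbdd)⟩
    have hΦB : ∀ x ∈ B, (∫ t, F t x ∂μ) = Ig := by
      intro x hxB
      have supp_sub : ∀ t, t ∉ W → g (x - t) = 0 := by
        intro t ht
        by_contra hgn
        apply ht
        have hxtV : x - t ∈ V := by
          by_contra hv
          exact hgn (g_zero hv)
        have h1 : x - (x - t) ∈ B - V := Set.sub_mem_sub hxB hxtV
        simpa using h1
      calc ∫ t, F t x ∂μ = ∫ t in W, h t * g (x - t) ∂μ₀ := rfl
        _ = ∫ t in W, g (x - t) ∂μ₀ := by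
            apply setIntegral_congr_fun hW_meas
            intro t ht
            show h t * g (x - t) = g (x - t)
            simp [h_one (subset_closure ht)]
        _ = ∫ t, g (x - t) ∂μ₀ :=
            setIntegral_eq_integral_of_forall_compl_eq_zero fun t ht => supp_sub t ht
        _ = Ig := integral_sub_left_eq_self (fun y => g y) μ₀ x
    have low : (μ₀ K₀).toReal * (ν B).toReal ≤ ∫ x, (∫ t, F t x ∂μ) ∂ν' := by
      calc (μ₀ K₀).toReal * (ν B).toReal ≤ Ig * (ν B).toReal :=
            mul_le_mul_of_nonneg_right hIg ENNReal.toReal_nonneg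
        _ = ∫ _ in B, Ig ∂ν' := by rw [setIntegral_const, smul_eq_mul, measureReal_def, hν'B, mul_comm]
        _ = ∫ x in B, (∫ t, F t x ∂μ) ∂ν' := by
            apply setIntegral_congr_fun hB_meas
            intro x hx
            exact (hΦB x hx).symm
        _ ≤ ∫ x, (∫ t, F t x ∂μ) ∂ν' :=
            setIntegral_le_integral Φint (Eventually.of_forall Φnonneg)
    -- combine
    have real_ineq : (μ₀ K₀).toReal * (ν B).toReal ≤ (μ₀ W).toReal * S.toReal :=
      low.trans (hswap ▸ up)
    have fin1 : μ₀ K₀ ≠ ⊤ := hK₀c.measure_lt_top.ne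
    rw [← ENNReal.toReal_le_toReal (ENNReal.mul_ne_top fin1 hνB_ne)
      (ENNReal.mul_ne_top hWfin hS_ne), ENNReal.toReal_mul, ENNReal.toReal_mul]
    exact real_ineq
  -- inner regularity of μ₀ on the open set V
  have main : μ₀ V * ν B ≤ μ₀ W * S := by
    have hreg : μ₀ V = ⨆ (K₀ : Set G) (_ : K₀ ⊆ V) (_ : IsCompact K₀), μ₀ K₀ :=
      (Measure.Regular.innerRegular (μ := μ₀)).measure_eq_iSup hV_open
    rw [hreg, ENNReal.iSup_mul]
    refine iSup_le fun K₀ => ?_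
    rw [ENNReal.iSup_mul]
    refine iSup_le fun hsub => ?_
    rw [ENNReal.iSup_mul]
    refine iSup_le fun hcpt => ?_
    exact key K₀ hsub hcpt
  -- relate haar to μ₀ via the scalar factor
  set c : ℝ≥0 := Measure.addHaarScalarFactor haar μ₀ with hc_def
  have scl : ∀ s : Set G, IsCompact (closure s) → haar s = (c : ℝ≥0∞) * μ₀ s := by
    intro s hs
    rw [Measure.measure_isAddInvariant_eq_smul_of_isCompact_closure haar μ₀ hs,
      ENNReal.smul_def, smul_eq_mul]
  have hc0 : (c : ℝ≥0∞) ≠ 0 := by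
    exact_mod_cast (Measure.addHaarScalarFactor_pos_of_isAddHaarMeasure haar μ₀).ne'
  have e1 : haar (B - V) = (c : ℝ≥0∞) * μ₀ W := scl W hWc
  have e2 : haar V = (c : ℝ≥0∞) * μ₀ V := scl V hV_cpt
  have hV0 : μ₀ V ≠ 0 := (hV_open.measure_pos μ₀ hV_ne).ne'
  have hVfin : μ₀ V ≠ ⊤ :=
    ((measure_mono subset_closure).trans_lt hV_cpt.measure_lt_top).ne
  rw [e1, e2, ENNReal.mul_div_mul_left _ _ hc0 ENNReal.coe_ne_top]
  have e3 : μ₀ W / μ₀ V * S = μ₀ W * S / μ₀ V := by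
    rw [div_eq_mul_inv, div_eq_mul_inv, mul_right_comm]
  rw [e3, ENNReal.le_div_iff_mul_le (Or.inl hV0) (Or.inl hVfin), mul_comm]
  exact main
end
end

section
/- Let G be a locally compact Hausdorff Abelian group with Haar measure λ, let V ⊆ G be a nonempty open set with compact closure, let ν be a translation bounded positive measure on G, and let (A_i)_{i∈I} be a van Hove net in G. Then limsup_i ν(A_i)/λ(A_i) ≤ ‖ν‖_V / λ(V); in particular this limsup is finite. -/
open MeasureTheory Filter Topology Pointwise
open scoped ENNReal NNReal ComplexConjugate

noncomputable section

/-- For a translation bounded positive measure `ν` and a van Hove net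
`(A i)`, one has `limsup_i ν(A i)/λ(A i) ≤ ‖ν‖_V / λ(V)`; in particular this limsup
is finite. -/
theorem limsup_density_le_of_translation_bounded
    {G : Type*} [AddCommGroup G] [TopologicalSpace G] [IsTopologicalAddGroup G]
    [LocallyCompactSpace G] [T2Space G] [MeasurableSpace G] [BorelSpace G]
    {I : Type*} [Preorder I] [Nonempty I] [IsDirected I (· ≤ ·)]
    (haar : Measure G) [haar.IsAddHaarMeasure]
    (V : Set G) (hV_ne : V.Nonempty) (hV_open : IsOpen V)
    (hV_cpt : IsCompact (closure V))
    (ν : Measure G) (hν_tb : (⨆ t : G, ν (t +ᵥ V)) < ⊤)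
    (A : I → Set G)
    (hA_open : ∀ i, IsOpen (A i)) (hA_ne : ∀ i, (A i).Nonempty)
    (hA_cpt : ∀ i, IsCompact (closure (A i)))
    (hA_pos : ∀ i, 0 < haar (A i)) (hA_fin : ∀ i, haar (A i) < ⊤)
    (hvH : ∀ K : Set G, IsCompact K →
      Tendsto (fun i => haar (KBoundary K (A i)) / haar (A i)) atTop (𝓝 0)) :
    Filter.limsup (fun i => ν (A i) / haar (A i)) atTop
        ≤ (⨆ t : G, ν (t +ᵥ V)) / haar V
      ∧ Filter.limsup (fun i => ν (A i) / haar (A i)) atTop < ⊤ := by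
  classical
  set K : Set G := -(closure V) with hK_def
  have hK : IsCompact K := hV_cpt.neg
  set C := ⨆ t : G, ν (t +ᵥ V) with hC_def
  have hCt : ∀ t, ν (t +ᵥ V) ≤ C := fun t => le_iSup (fun t => ν (t +ᵥ V)) t
  obtain ⟨v₀, hv₀⟩ := hV_ne
  haveI hν_loc : IsLocallyFiniteMeasure ν := by
    constructor
    intro x
    refine ⟨(x - v₀) +ᵥ V, (hV_open.vadd _).mem_nhds ?_, (hCt _).trans_lt hν_tb⟩
    rw [Set.mem_vadd_set]
    exact ⟨v₀, hv₀, by simp [vadd_eq_add]⟩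
  have hνA : ∀ i, ν (A i) ≠ ⊤ := fun i =>
    ((measure_mono subset_closure).trans_lt ((hA_cpt i).measure_lt_top)).ne
  have hv0 : haar V ≠ 0 := (hV_open.measure_pos haar ⟨v₀, hv₀⟩).ne'
  have hvt : haar V ≠ ⊤ := ((measure_mono subset_closure).trans_lt hV_cpt.measure_lt_top).ne
  -- membership translations
  have hmem1 : ∀ t x : G, x ∈ t +ᵥ V ↔ x - t ∈ V := by
    intro t x
    rw [Set.mem_vadd_set_iff_neg_vadd_mem, vadd_eq_add, neg_add_eq_sub]
  have hmem2 : ∀ (x t : G) (D : Set G), t ∈ x +ᵥ (-D) ↔ x - t ∈ D := by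
    intro x t D
    rw [Set.mem_vadd_set_iff_neg_vadd_mem, vadd_eq_add, Set.mem_neg,
      show -(-x + t) = x - t by abel]
  -- the canonical regular Haar measure
  have K₀ : TopologicalSpace.PositiveCompacts G := Classical.arbitrary _
  set μ₀ : Measure G := Measure.addHaarMeasure K₀ with hμ₀
  set c : ℝ≥0∞ := (Measure.addHaarScalarFactor haar μ₀ : ℝ≥0∞) with hc
  have hcomp : ∀ s : Set G, IsOpen s → haar s = c * μ₀ s := by
    intro s hs
    rw [Measure.measure_isAddHaarMeasure_eq_smul_of_isOpen haar μ₀ hs, ENNReal.smul_def,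
      smul_eq_mul]
  -- the key Fubini-type inequality with the regular measure μ₀
  have key₀ : ∀ i, μ₀ V * ν (A i) ≤ C * μ₀ (A i - V) := by
    intro i
    have hAm : MeasurableSet (A i) := (hA_open i).measurableSet
    have hAiV_open : IsOpen (A i - V) := (hA_open i).sub_right
    have hDu_cpt : IsCompact (closure (A i) + K) := (hA_cpt i).add hK
    have hAiV_sub : A i - V ⊆ closure (A i) + K := by
      rintro t ⟨a, ha, v, hv, rfl⟩
      refine ⟨a, subset_closure ha, -v, ?_, (sub_eq_add_neg a v).symm⟩
      rw [hK_def, Set.mem_neg, neg_neg]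
      exact subset_closure hv
    have hAiV_fin : μ₀ (A i - V) ≠ ⊤ :=
      ((measure_mono hAiV_sub).trans_lt hDu_cpt.measure_lt_top).ne
    -- it suffices to prove it for compact subsets of V
    have hDs : ∀ D : Set G, D ⊆ V → IsCompact D → μ₀ D * ν (A i) ≤ C * μ₀ (A i - V) := by
      intro D hDV hD
      -- Urysohn functions
      obtain ⟨u, hu1, -, hu_cpt, hu_mem⟩ :=
        exists_continuous_one_zero_of_isCompact hDu_cpt isClosed_empty (Set.disjoint_empty _)
      obtain ⟨w, hw1, -, hw_cpt, hw_mem⟩ :=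
        exists_continuous_one_zero_of_isCompact (hA_cpt i) isClosed_empty (Set.disjoint_empty _)
      obtain ⟨g, hg1, hg0, hg_cpt, hg_mem⟩ :=
        exists_continuous_one_zero_of_isCompact hD hV_open.isClosed_compl
          (Set.disjoint_left.mpr fun a haD haVc => haVc (hDV haD))
      set Φ : G × G → ℝ := fun p => u p.1 * g (p.2 - p.1) * w p.2 with hΦ
      have hΦ_cont : Continuous Φ := by
        refine ((u.continuous.comp continuous_fst).mul
          (g.continuous.comp (continuous_snd.sub continuous_fst))).mul
          (w.continuous.comp continuous_snd)
      have hΦ_supp : HasCompactSupport Φ := by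
        apply HasCompactSupport.intro (hu_cpt.prod hw_cpt)
        rintro ⟨t, x⟩ hp
        rcases not_and_or.1 (by simpa [Set.mem_prod] using hp) with h | h
        · simp [hΦ, image_eq_zero_of_notMem_tsupport h]
        · simp [hΦ, image_eq_zero_of_notMem_tsupport h]
      have hΦ_meas : Measurable Φ := (hΦ_supp.stronglyMeasurable_of_prod hΦ_cont).measurable
      have hΦ_nonneg : ∀ p, 0 ≤ Φ p := fun p =>
        mul_nonneg (mul_nonneg (hu_mem p.1).1 (hg_mem _).1) (hw_mem p.2).1
      have hΦ_le_one : ∀ p, Φ p ≤ 1 := fun p =>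
        mul_le_one₀ (mul_le_one₀ (hu_mem p.1).2 (hg_mem _).1 (hg_mem _).2)
          (hw_mem p.2).1 (hw_mem p.2).2
      set F : G × G → ℝ≥0∞ := fun p => ENNReal.ofReal (Φ p) with hF
      have hF_meas : Measurable F := hΦ_meas.ennreal_ofReal
      set lam' := μ₀.restrict (A i - V) with hlam'
      set nu' := ν.restrict (A i) with hnu'
      haveI : IsFiniteMeasure lam' :=
        ⟨by rw [hlam', Measure.restrict_apply_univ]; exact hAiV_fin.lt_top⟩
      haveI : IsFiniteMeasure nu' :=
        ⟨by rw [hnu', Measure.restrict_apply_univ]; exact (hνA i).lt_top⟩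
      have swap : ∫⁻ t, ∫⁻ x, F (t, x) ∂nu' ∂lam' = ∫⁻ x, ∫⁻ t, F (t, x) ∂lam' ∂nu' :=
        lintegral_lintegral_swap hF_meas.aemeasurable
      -- upper bound
      have upper : ∫⁻ t, ∫⁻ x, F (t, x) ∂nu' ∂lam' ≤ C * μ₀ (A i - V) := by
        have h1 : ∀ t, ∫⁻ x, F (t, x) ∂nu' ≤ C := by
          intro t
          have hle : ∀ x, F (t, x) ≤ (t +ᵥ V).indicator 1 x := by
            intro x
            by_cases hx : x ∈ t +ᵥ V
            · simp only [Set.indicator_of_mem hx, Pi.one_apply]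
              exact ENNReal.ofReal_le_one.mpr (hΦ_le_one (t, x))
            · have hxV : x - t ∈ Vᶜ := fun hmem => hx ((hmem1 t x).mpr hmem)
              have : Φ (t, x) = 0 := by
                simp [hΦ, hg0 hxV]
              simp [Set.indicator_of_notMem hx, hF, this]
          calc ∫⁻ x, F (t, x) ∂nu' ≤ ∫⁻ x, (t +ᵥ V).indicator 1 x ∂nu' := lintegral_mono hle
            _ = nu' (t +ᵥ V) := lintegral_indicator_one (hV_open.vadd t).measurableSet
            _ = ν ((t +ᵥ V) ∩ A i) := by rw [hnu', Measure.restrict_apply (hV_open.vadd t).measurableSet]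
            _ ≤ ν (t +ᵥ V) := measure_mono Set.inter_subset_left
            _ ≤ C := hCt t
        calc ∫⁻ t, ∫⁻ x, F (t, x) ∂nu' ∂lam' ≤ ∫⁻ _, C ∂lam' := lintegral_mono h1
          _ = C * μ₀ (A i - V) := by rw [lintegral_const, hlam', Measure.restrict_apply_univ]
      -- lower bound
      have lower : μ₀ D * ν (A i) ≤ ∫⁻ x, ∫⁻ t, F (t, x) ∂lam' ∂nu' := by
        have h2 : ∀ x ∈ A i, μ₀ D ≤ ∫⁻ t, F (t, x) ∂lam' := by
          intro x hx
          have hxD_sub : (x +ᵥ (-D)) ⊆ A i - V := by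
            intro t ht
            have hxt : x - t ∈ D := (hmem2 x t D).mp ht
            exact ⟨x, hx, x - t, hDV hxt, sub_sub_cancel x t⟩
          have hxD_cpt : IsCompact (x +ᵥ (-D)) := by
            rw [← Set.image_vadd]
            exact hD.neg.image (continuous_add_left x)
          have hle : ∀ t, (x +ᵥ (-D)).indicator 1 t ≤ F (t, x) := by
            intro t
            by_cases ht : t ∈ x +ᵥ (-D)
            · have hxt : x - t ∈ D := (hmem2 x t D).mp ht
              have hgv : g (x - t) = 1 := hg1 hxt
              have hut : u t = 1 := hu1 (hAiV_sub (hxD_sub ht))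
              have hwx : w x = 1 := hw1 (subset_closure hx)
              have : Φ (t, x) = 1 := by simp [hΦ, hgv, hut, hwx]
              simp [Set.indicator_of_mem ht, hF, this]
            · simp [Set.indicator_of_notMem ht]
          calc μ₀ D = μ₀ (x +ᵥ (-D)) := by rw [measure_vadd, Measure.measure_neg]
            _ = lam' (x +ᵥ (-D)) := by
                rw [hlam', Measure.restrict_apply hxD_cpt.isClosed.measurableSet,
                  Set.inter_eq_self_of_subset_left hxD_sub]
            _ = ∫⁻ t, (x +ᵥ (-D)).indicator 1 t ∂lam' :=
                (lintegral_indicator_one hxD_cpt.isClosed.measurableSet).symm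
            _ ≤ ∫⁻ t, F (t, x) ∂lam' := lintegral_mono hle
        calc μ₀ D * ν (A i) = μ₀ D * nu' (A i) := by
              rw [hnu', Measure.restrict_apply_self]
          _ = ∫⁻ x, (A i).indicator (fun _ => μ₀ D) x ∂nu' := by
              rw [lintegral_indicator_const hAm]
          _ ≤ ∫⁻ x, ∫⁻ t, F (t, x) ∂lam' ∂nu' := by
              refine lintegral_mono fun x => ?_
              by_cases hx : x ∈ A i
              · simpa [Set.indicator_of_mem hx] using h2 x hx
              · simp [Set.indicator_of_notMem hx]
      exact lower.trans (swap ▸ upper)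
    -- now use inner regularity of μ₀ on the open set V
    have hreg : μ₀ V = ⨆ (D : Set G) (_ : D ⊆ V) (_ : IsCompact D), μ₀ D :=
      hV_open.measure_eq_iSup_isCompact μ₀
    rw [hreg]
    simp_rw [ENNReal.iSup_mul]
    exact iSup_le fun D => iSup_le fun hDV => iSup_le fun hD => hDs D hDV hD
  -- transfer to haar via the scalar factor on open sets
  have key1 : ∀ i, haar V * ν (A i) ≤ C * haar (A i - V) := by
    intro i
    rw [hcomp V hV_open, hcomp (A i - V) ((hA_open i).sub_right)]
    calc c * μ₀ V * ν (A i) = c * (μ₀ V * ν (A i)) := by rw [mul_assoc]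
      _ ≤ c * (C * μ₀ (A i - V)) := mul_le_mul_right (key₀ i) c
      _ = C * (c * μ₀ (A i - V)) := by ring
  -- pointwise estimate for the ratio
  have key : ∀ i, ν (A i) / haar (A i)
      ≤ (C / haar V) * (1 + haar (KBoundary K (A i)) / haar (A i)) := by
    intro i
    have hsub : A i - V ⊆ (A i) ∪ KBoundary K (A i) := by
      rintro t ⟨a, ha, v, hv, rfl⟩
      by_cases hmem : a - v ∈ A i
      · exact Or.inl hmem
      · refine Or.inr (Or.inl ⟨subset_closure ⟨a, ha, -v, ?_, (sub_eq_add_neg a v).symm⟩, hmem⟩)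
        rw [hK_def, Set.mem_neg, neg_neg]
        exact subset_closure hv
    have hbd : haar (A i - V) ≤ haar (A i) + haar (KBoundary K (A i)) :=
      (measure_mono hsub).trans (measure_union_le _ _)
    have hmain2 : haar V * ν (A i) ≤ C * (haar (A i) + haar (KBoundary K (A i))) :=
      (key1 i).trans (mul_le_mul_right hbd C)
    have hL0 : haar (A i) ≠ 0 := (hA_pos i).ne'
    have hLt : haar (A i) ≠ ⊤ := (hA_fin i).ne
    rw [ENNReal.div_le_iff hL0 hLt]
    have hstep : ν (A i) ≤ (C * (haar (A i) + haar (KBoundary K (A i)))) / haar V := by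
      rw [ENNReal.le_div_iff_mul_le (Or.inl hv0) (Or.inl hvt), mul_comm]
      exact hmain2
    refine hstep.trans (le_of_eq ?_)
    have hmul : (C / haar V) * (1 + haar (KBoundary K (A i)) / haar (A i)) * haar (A i)
        = (C / haar V) * (haar (A i) + haar (KBoundary K (A i))) := by
      rw [mul_assoc, add_mul, one_mul, ENNReal.div_mul_cancel hL0 hLt]
    rw [hmul, div_eq_mul_inv, div_eq_mul_inv, mul_right_comm]
  haveI : (atTop : Filter I).NeBot := atTop_neBot_iff.mpr ⟨‹Nonempty I›, ‹_›⟩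
  have hg : Tendsto (fun i => (C / haar V) * (1 + haar (KBoundary K (A i)) / haar (A i)))
      atTop (𝓝 ((C / haar V) * (1 + 0))) :=
    ENNReal.Tendsto.const_mul (Tendsto.const_add 1 (hvH K hK)) (Or.inl (by simp))
  have hls : limsup (fun i => ν (A i) / haar (A i)) atTop ≤ C / haar V := by
    have hle := Filter.limsup_le_limsup (Filter.Eventually.of_forall key)
      (f := atTop (α := I))
    have heq := hg.limsup_eq
    rw [heq] at hle
    simpa using hle
  exact ⟨hls, hls.trans_lt (ENNReal.div_lt_top hν_tb.ne hv0)⟩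
end
end

section
/- Let G be a locally compact Hausdorff Abelian group with Haar measure λ, let (A_i)_{i∈I} be a van Hove net in G, and let V ⊆ G be a nonempty open set with compact closure satisfying V = −V. Then there exist an index i₀ ∈ I and a constant κ > 0 such that for every pair of translation bounded positive measures μ, ν on G and every i ≥ i₀, sup_{t∈G} ( (1/λ(A_i)) · ( (μ restricted to A_i) ∗ ((ν restricted to A_i) pushed forward under x ↦ −x) ) )(t + V) ≤ κ · ‖μ‖_V · ‖ν‖_V. -/
open MeasureTheory Filter Topology Pointwise
open scoped ENNReal NNReal ComplexConjugate

noncomputable section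

/-- The convolution of two (finite, positive) measures: the pushforward of the product
measure under addition. -/
def measConv {G : Type*} [AddCommGroup G] [MeasurableSpace G]
    (μ ν : MeasureTheory.Measure G) : MeasureTheory.Measure G :=
  MeasureTheory.Measure.map (fun p : G × G => p.1 + p.2) (μ.prod ν)

/-- Packing lemma: any compact set `C` can be covered by finitely many translates of `V₀`,
with the number of translates controlled by `haar (C + W)`. -/
lemma pack_lemma {G : Type*} [AddCommGroup G] [TopologicalSpace G] [IsTopologicalAddGroup G]
    [T2Space G] [MeasurableSpace G] [BorelSpace G]
    (haar : Measure G) [haar.IsAddHaarMeasure]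
    (W V₀ : Set G) (hWo : IsOpen W) (h0W : (0:G) ∈ W) (hWc : IsCompact (closure W))
    (hsub : W - W ⊆ V₀) (h0V : (0:G) ∈ V₀)
    (C : Set G) (hC : IsCompact C) :
    ∃ F : Finset G, C ⊆ ⋃ t ∈ F, t +ᵥ V₀ ∧
      (F.card : ℝ≥0∞) * haar W ≤ haar (C + W) := by
  classical
  have hWpos : 0 < haar W := hWo.measure_pos haar ⟨0, h0W⟩
  have hWfin : haar W < ⊤ :=
    lt_of_le_of_lt (measure_mono subset_closure) hWc.measure_lt_top
  have hCWsub : C + W ⊆ C + closure W := by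
    rintro x ⟨a, ha, b, hb, rfl⟩
    exact ⟨a, ha, b, subset_closure hb, rfl⟩
  have hCW : haar (C + W) < ⊤ :=
    lt_of_le_of_lt (measure_mono hCWsub) (hC.add hWc).measure_lt_top
  have hvadd : ∀ (g : G) (s : Set G), haar (g +ᵥ s) = haar s := by
    intro g s
    have : g +ᵥ s = (fun h => -g + h) ⁻¹' s := by
      ext y
      simp [Set.mem_vadd_set_iff_neg_vadd_mem]
    rw [this, measure_preimage_add]
  have key : ∀ F : Finset G, ↑F ⊆ C → (F : Set G).PairwiseDisjoint (fun t => t +ᵥ W) →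
      (F.card : ℝ≥0∞) * haar W ≤ haar (C + W) := by
    intro F hFC hFd
    have hmeas : ∀ t ∈ F, MeasurableSet (t +ᵥ W) := fun t _ => (hWo.vadd t).measurableSet
    have h1 : haar (⋃ t ∈ F, t +ᵥ W) = ∑ t ∈ F, haar (t +ᵥ W) :=
      measure_biUnion_finset hFd hmeas
    have h3 : (⋃ t ∈ F, t +ᵥ W) ⊆ C + W := by
      intro y hy
      obtain ⟨t, ht, hyt⟩ := Set.mem_iUnion₂.mp hy
      obtain ⟨w, hw, rfl⟩ := hyt
      exact ⟨t, hFC ht, w, hw, rfl⟩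
    calc (F.card : ℝ≥0∞) * haar W = ∑ _t ∈ F, haar W := by
          rw [Finset.sum_const, nsmul_eq_mul]
      _ = ∑ t ∈ F, haar (t +ᵥ W) := by
          refine Finset.sum_congr rfl fun t _ => ?_
          rw [hvadd]
      _ = haar (⋃ t ∈ F, t +ᵥ W) := h1.symm
      _ ≤ haar (C + W) := measure_mono h3
  set S : Set ℕ :=
    {n | ∃ F : Finset G, ↑F ⊆ C ∧ (F : Set G).PairwiseDisjoint (fun t => t +ᵥ W) ∧ F.card = n}
    with hS
  have hS0 : (0:ℕ) ∈ S := ⟨∅, by simp, by simp, by simp⟩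
  have hSb : BddAbove S := by
    obtain ⟨N, hN⟩ := ENNReal.exists_nat_gt (ENNReal.div_lt_top hCW.ne hWpos.ne').ne
    refine ⟨N, ?_⟩
    rintro n ⟨F, hF1, hF2, rfl⟩
    have h1 : (F.card : ℝ≥0∞) ≤ haar (C + W) / haar W :=
      (ENNReal.le_div_iff_mul_le (Or.inl hWpos.ne') (Or.inl hWfin.ne)).mpr (key F hF1 hF2)
    have h2 : (F.card : ℝ≥0∞) < N := h1.trans_lt hN
    exact_mod_cast h2.le
  obtain ⟨F, hF1, hF2, hFcard⟩ := Nat.sSup_mem ⟨0, hS0⟩ hSb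
  refine ⟨F, ?_, key F hF1 hF2⟩
  intro x hx
  by_contra hxU
  have hdisj : ∀ t ∈ F, Disjoint (x +ᵥ W) (t +ᵥ W) := by
    intro t ht
    rw [Set.disjoint_left]
    intro y hy1 hy2
    apply hxU
    rw [Set.mem_vadd_set_iff_neg_vadd_mem, vadd_eq_add] at hy1 hy2
    have hxt : x - t ∈ W - W := by
      refine ⟨-t + y, hy2, -x + y, hy1, ?_⟩
      abel
    refine Set.mem_biUnion ht ?_
    rw [Set.mem_vadd_set_iff_neg_vadd_mem, vadd_eq_add]
    have : -t + x = x - t := by abel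
    rw [this]
    exact hsub hxt
  have hxF : x ∉ F := by
    intro hxF
    apply hxU
    refine Set.mem_biUnion hxF ?_
    rw [Set.mem_vadd_set_iff_neg_vadd_mem, vadd_eq_add, neg_add_cancel]
    exact h0V
  have hmem : (insert x F).card ∈ S := by
    refine ⟨insert x F, ?_, ?_, rfl⟩
    · rw [Finset.coe_insert]
      exact Set.insert_subset hx hF1
    · rw [Finset.coe_insert]
      exact hF2.insert fun t ht _ => hdisj t ht
  have hle := le_csSup hSb hmem
  rw [Finset.card_insert_of_notMem hxF, hFcard] at hle
  omega

/-- Uniform bound for the normalized averaged convolutions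
`(1/λ(A i)) (μ|_{A i}) ∗ (ν|_{A i})~` along a van Hove net, in terms of
`‖μ‖_V · ‖ν‖_V`, uniformly over all translation bounded positive measures `μ, ν`. -/
theorem uniform_bound_averaged_convolution
    {G : Type*} [AddCommGroup G] [TopologicalSpace G] [IsTopologicalAddGroup G]
    [LocallyCompactSpace G] [T2Space G] [MeasurableSpace G] [BorelSpace G]
    {I : Type*} [Preorder I] [Nonempty I] [IsDirected I (· ≤ ·)]
    (haar : Measure G) [haar.IsAddHaarMeasure]
    (V : Set G) (hV_ne : V.Nonempty) (hV_open : IsOpen V)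
    (hV_cpt : IsCompact (closure V)) (hV_symm : V = -V)
    (A : I → Set G)
    (hA_open : ∀ i, IsOpen (A i)) (hA_ne : ∀ i, (A i).Nonempty)
    (hA_cpt : ∀ i, IsCompact (closure (A i)))
    (hA_pos : ∀ i, 0 < haar (A i)) (hA_fin : ∀ i, haar (A i) < ⊤)
    (hvH : ∀ K : Set G, IsCompact K →
      Tendsto (fun i => haar (KBoundary K (A i)) / haar (A i)) atTop (𝓝 0)) :
    ∃ i₀ : I, ∃ κ : ℝ≥0, 0 < κ ∧
      ∀ μ ν : Measure G,
        (⨆ t : G, μ (t +ᵥ V)) < ⊤ → (⨆ t : G, ν (t +ᵥ V)) < ⊤ →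
        ∀ i : I, i₀ ≤ i →
          (⨆ t : G,
            (haar (A i))⁻¹ *
              (measConv (μ.restrict (A i))
                ((ν.restrict (A i)).map (fun x => -x))) (t +ᵥ V))
          ≤ (κ : ℝ≥0∞) * (⨆ t : G, μ (t +ᵥ V)) * (⨆ t : G, ν (t +ᵥ V)) := by
  classical
  obtain ⟨v₀, hv₀⟩ := hV_ne
  have hsym : ∀ z : G, z ∈ V ↔ -z ∈ V := by
    intro z
    nth_rewrite 1 [hV_symm]
    exact Set.mem_neg
  set V₀ : Set G := (-v₀) +ᵥ V with hV₀def
  have hV₀o : IsOpen V₀ := hV_open.vadd _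
  have h0V₀ : (0:G) ∈ V₀ := by
    rw [Set.mem_vadd_set_iff_neg_vadd_mem, vadd_eq_add, neg_neg, add_zero]
    exact hv₀
  -- construct W
  obtain ⟨W₁, hW₁n, hW₁sub⟩ := exists_nhds_half_neg (hV₀o.mem_nhds h0V₀)
  obtain ⟨C₀, hC₀c, hC₀n⟩ := exists_compact_mem_nhds (0 : G)
  set W : Set G := interior W₁ ∩ interior C₀ with hWdef
  have hWo : IsOpen W := isOpen_interior.inter isOpen_interior
  have h0W : (0:G) ∈ W :=
    ⟨mem_interior_iff_mem_nhds.mpr hW₁n, mem_interior_iff_mem_nhds.mpr hC₀n⟩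
  have hWc : IsCompact (closure W) :=
    hC₀c.of_isClosed_subset isClosed_closure
      ((closure_mono Set.inter_subset_right).trans
        (closure_minimal interior_subset hC₀c.isClosed))
  have hWsub : W - W ⊆ V₀ := by
    rintro z ⟨a, ha, b, hb, rfl⟩
    exact hW₁sub a (interior_subset ha.1) b (interior_subset hb.1)
  have hWpos : 0 < haar W := hWo.measure_pos haar ⟨0, h0W⟩
  have hWfin : haar W < ⊤ :=
    lt_of_le_of_lt (measure_mono subset_closure) hWc.measure_lt_top
  -- choose i₀ via the van Hove property
  have hev : ∀ᶠ i in (atTop : Filter I),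
      haar (KBoundary (closure W) (A i)) / haar (A i) < 1 :=
    (hvH _ hWc).eventually_lt_const zero_lt_one
  obtain ⟨i₀, hi₀⟩ := eventually_atTop.mp hev
  -- uniform bound on ρ (A i) for translation bounded ρ
  have hbound : ∀ i, i₀ ≤ i → ∀ ρ : Measure G,
      ρ (A i) ≤ 2 * haar (A i) / haar W * (⨆ t : G, ρ (t +ᵥ V)) := by
    intro i hi ρ
    obtain ⟨F, hcover, hcard⟩ :=
      pack_lemma haar W V₀ hWo h0W hWc hWsub h0V₀ (closure (A i)) (hA_cpt i)
    have h1 : ρ (A i) ≤ (F.card : ℝ≥0∞) * ⨆ t : G, ρ (t +ᵥ V) := by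
      calc ρ (A i) ≤ ρ (⋃ t ∈ F, t +ᵥ V₀) := measure_mono (subset_closure.trans hcover)
        _ ≤ ∑ t ∈ F, ρ (t +ᵥ V₀) := measure_biUnion_finset_le F _
        _ ≤ ∑ _t ∈ F, ⨆ t' : G, ρ (t' +ᵥ V) := by
            refine Finset.sum_le_sum fun t _ => ?_
            have ht : t +ᵥ V₀ = (t - v₀) +ᵥ V := by
              rw [hV₀def, vadd_vadd, sub_eq_add_neg]
            rw [ht]
            exact le_iSup (fun t' => ρ (t' +ᵥ V)) (t - v₀)
        _ = (F.card : ℝ≥0∞) * ⨆ t' : G, ρ (t' +ᵥ V) := by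
            rw [Finset.sum_const, nsmul_eq_mul]
    have h2 : (F.card : ℝ≥0∞) ≤ 2 * haar (A i) / haar W := by
      have hsub1 : closure (A i) + W ⊆ closure (A i + closure W) := by
        rintro x ⟨a, ha, w, hw, rfl⟩
        exact map_mem_closure (f := (· + w)) (continuous_add_right w) ha
          fun b hb => Set.add_mem_add hb (subset_closure hw)
      have hsub2 : closure (A i + closure W) ⊆ A i ∪ KBoundary (closure W) (A i) := by
        intro x hx
        by_cases hxa : x ∈ A i
        · exact Or.inl hxa
        · exact Or.inr (Or.inl ⟨hx, hxa⟩)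
      have hbd : haar (KBoundary (closure W) (A i)) ≤ haar (A i) := by
        have h := hi₀ i hi
        have := (ENNReal.div_lt_iff (Or.inl (hA_pos i).ne') (Or.inl (hA_fin i).ne)).mp h
        rw [one_mul] at this
        exact this.le
      have hb : haar (closure (A i) + W) ≤ 2 * haar (A i) := by
        calc haar (closure (A i) + W) ≤ haar (A i ∪ KBoundary (closure W) (A i)) :=
              measure_mono (hsub1.trans hsub2)
          _ ≤ haar (A i) + haar (KBoundary (closure W) (A i)) := measure_union_le _ _
          _ ≤ haar (A i) + haar (A i) := add_le_add le_rfl hbd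
          _ = 2 * haar (A i) := (two_mul _).symm
      exact (ENNReal.le_div_iff_mul_le (Or.inl hWpos.ne') (Or.inl hWfin.ne)).mpr
        (hcard.trans hb)
    exact h1.trans (mul_le_mul_left h2 _)
  -- the constant
  have hκne : (2 : ℝ≥0∞) / haar W ≠ ⊤ := (ENNReal.div_lt_top (by simp) hWpos.ne').ne
  have hκ0 : (2 : ℝ≥0∞) / haar W ≠ 0 := by
    simp only [ne_eq, ENNReal.div_eq_zero_iff, not_or]
    exact ⟨by simp, hWfin.ne⟩
  refine ⟨i₀, ((2 : ℝ≥0∞) / haar W).toNNReal, ENNReal.toNNReal_pos hκ0 hκne, ?_⟩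
  intro μ ν hSμ hSν i hi
  rw [ENNReal.coe_toNNReal hκne]
  set Sμ := ⨆ t : G, μ (t +ᵥ V) with hSμdef
  set Sν := ⨆ t : G, ν (t +ᵥ V) with hSνdef
  have hfinA : ∀ ρ : Measure G, (⨆ t : G, ρ (t +ᵥ V)) < ⊤ → ρ (A i) < ⊤ := by
    intro ρ hρ
    refine lt_of_le_of_lt (hbound i hi ρ) (ENNReal.mul_lt_top ?_ hρ)
    exact ENNReal.div_lt_top (ENNReal.mul_ne_top (by simp) (hA_fin i).ne) hWpos.ne'
  have hμA : μ (A i) < ⊤ := hfinA μ hSμ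
  have hνA : ν (A i) < ⊤ := hfinA ν hSν
  haveI : IsFiniteMeasure (μ.restrict (A i)) := ⟨by rwa [Measure.restrict_apply_univ]⟩
  haveI : IsFiniteMeasure (ν.restrict (A i)) := ⟨by rwa [Measure.restrict_apply_univ]⟩
  haveI : IsFiniteMeasure ((ν.restrict (A i)).map (fun x => -x)) :=
    Measure.isFiniteMeasure_map _ _
  set μ' := μ.restrict (A i) with hμ'def
  set ν'' := (ν.restrict (A i)).map (fun x => -x) with hν''def
  -- the core convolution estimate
  have hconv : ∀ t : G, (measConv μ' ν'') (t +ᵥ V) ≤ Sν * μ (A i) := by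
    intro t
    have hopen : IsOpen (t +ᵥ V) := hV_open.vadd t
    have hsecle : ∀ x : G, ν'' ((fun y => x + y) ⁻¹' (t +ᵥ V)) ≤ Sν := by
      intro x
      have hopen2 : IsOpen ((fun y => x + y) ⁻¹' (t +ᵥ V)) :=
        hopen.preimage (continuous_add_left x)
      rw [hν''def, Measure.map_apply measurable_neg hopen2.measurableSet]
      have heq : (fun y : G => -y) ⁻¹' ((fun y => x + y) ⁻¹' (t +ᵥ V)) = (x - t) +ᵥ V := by
        ext y
        simp only [Set.mem_preimage, Set.mem_vadd_set_iff_neg_vadd_mem, vadd_eq_add]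
        rw [hsym (-(x - t) + y)]
        have hEq : -(-(x - t) + y) = -t + (x + -y) := by abel
        rw [hEq]
      rw [heq]
      exact (Measure.restrict_apply_le _ _).trans (le_iSup (fun t' => ν (t' +ᵥ V)) (x - t))
    by_cases hadd : AEMeasurable (fun p : G × G => p.1 + p.2) (μ'.prod ν'')
    · have hgm : Measurable (hadd.mk _) := hadd.measurable_mk
      have hmapeq : (μ'.prod ν'').map (fun p : G × G => p.1 + p.2)
          = (μ'.prod ν'').map (hadd.mk _) := Measure.map_congr hadd.ae_eq_mk
      have h1 : measConv μ' ν'' (t +ᵥ V) = (μ'.prod ν'') (hadd.mk _ ⁻¹' (t +ᵥ V)) := by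
        rw [measConv, hmapeq, Measure.map_apply hgm hopen.measurableSet]
      set d := toMeasurable (μ'.prod ν'') {p : G × G | ¬ p.1 + p.2 = hadd.mk _ p} with hddef
      have hd0 : (μ'.prod ν'') d = 0 := by
        rw [hddef, measure_toMeasurable]
        exact hadd.ae_eq_mk
      have hdm : MeasurableSet d := measurableSet_toMeasurable _ _
      have hsec0 : ∀ᵐ x ∂μ', ν'' (Prod.mk x ⁻¹' d) = 0 := by
        have := (Measure.measure_prod_null hdm).mp hd0
        filter_upwards [this] with x hx using hx
      calc measConv μ' ν'' (t +ᵥ V) = (μ'.prod ν'') (hadd.mk _ ⁻¹' (t +ᵥ V)) := h1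
        _ = ∫⁻ x, ν'' (Prod.mk x ⁻¹' (hadd.mk _ ⁻¹' (t +ᵥ V))) ∂μ' :=
            Measure.prod_apply (hgm hopen.measurableSet)
        _ ≤ ∫⁻ _x, Sν ∂μ' := by
            refine lintegral_mono_ae ?_
            filter_upwards [hsec0] with x hx
            have hsub' : Prod.mk x ⁻¹' (hadd.mk _ ⁻¹' (t +ᵥ V))
                ⊆ ((fun y => x + y) ⁻¹' (t +ᵥ V)) ∪ (Prod.mk x ⁻¹' d) := by
              intro y hy
              by_cases hxy : x + y ∈ t +ᵥ V
              · exact Or.inl hxy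
              · refine Or.inr (subset_toMeasurable _ _ ?_)
                intro hEq
                exact hxy (hEq ▸ hy)
            calc ν'' (Prod.mk x ⁻¹' (hadd.mk _ ⁻¹' (t +ᵥ V)))
                ≤ ν'' (((fun y => x + y) ⁻¹' (t +ᵥ V)) ∪ (Prod.mk x ⁻¹' d)) :=
                  measure_mono hsub'
              _ ≤ ν'' ((fun y => x + y) ⁻¹' (t +ᵥ V)) + ν'' (Prod.mk x ⁻¹' d) :=
                  measure_union_le _ _
              _ = ν'' ((fun y => x + y) ⁻¹' (t +ᵥ V)) := by rw [hx, add_zero]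
              _ ≤ Sν := hsecle x
        _ = Sν * μ (A i) := by
            rw [lintegral_const, hμ'def, Measure.restrict_apply_univ]
    · rw [measConv, Measure.map_of_not_aemeasurable hadd]
      exact zero_le
  refine iSup_le fun t => ?_
  have hc : (haar (A i))⁻¹ * haar (A i) = 1 :=
    ENNReal.inv_mul_cancel (hA_pos i).ne' (hA_fin i).ne
  calc (haar (A i))⁻¹ * (measConv μ' ν'') (t +ᵥ V)
      ≤ (haar (A i))⁻¹ * (Sν * μ (A i)) := mul_le_mul_right (hconv t) _
    _ ≤ (haar (A i))⁻¹ * (Sν * (2 * haar (A i) / haar W * Sμ)) :=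
        mul_le_mul_right (mul_le_mul_right (hbound i hi μ) _) _
    _ = 2 / haar W * Sμ * Sν := by
        rw [div_eq_mul_inv, div_eq_mul_inv]
        have hr : (haar (A i))⁻¹ * (Sν * (2 * haar (A i) * (haar W)⁻¹ * Sμ))
            = ((haar (A i))⁻¹ * haar (A i)) * (2 * (haar W)⁻¹ * Sμ * Sν) := by ring
        rw [hr, hc, one_mul]
end
end

section
/- Let G be a locally compact Hausdorff Abelian group with Haar measure λ, let (A_i)_{i∈I} be a van Hove net in G, and let μ = h·ν and μ' = h'·ν' be translation bounded complex measures on G in polar form. Assume that for every continuous compactly supported χ : G → ℂ the net γ_i(χ) := (1/λ(A_i)) ∫_{A_i} ∫_{A_i} χ(s − u) h(s) conj(h'(u)) dν(s) dν'(u) converges to a limit L(χ). Then for every t ∈ G and every continuous compactly supported χ : G → ℂ: (a) the analogous net formed with the translate τ_t μ in place of μ (i.e. with ν replaced by its pushforward under x ↦ x + t and h replaced by s ↦ h(s − t)) converges to L(x ↦ χ(x + t)); and (b) the analogous net formed with the translate τ_{−t} μ' in place of μ' (i.e. with ν' replaced by its pushforward under x ↦ x − t and h' replaced by u ↦ h'(u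 + t)) converges to the same value L(x ↦ χ(x + t)). -/
open MeasureTheory Filter Topology Pointwise
open scoped ENNReal NNReal ComplexConjugate Uniformity

noncomputable section

/-- A positive measure is translation bounded: for some nonempty open relatively
compact `V`, `sup_t ν(t + V) < ∞`. -/
def TransBdd {G : Type*} [AddCommGroup G] [TopologicalSpace G] [MeasurableSpace G]
    (ν : MeasureTheory.Measure G) : Prop :=
  ∃ V : Set G, V.Nonempty ∧ IsOpen V ∧ IsCompact (closure V) ∧
    (⨆ t : G, ν (t +ᵥ V)) < ⊤

section Aux

set_option linter.unusedSectionVars false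

variable {G : Type*} [AddCommGroup G] [TopologicalSpace G] [IsTopologicalAddGroup G]
  [LocallyCompactSpace G] [T2Space G] [MeasurableSpace G] [BorelSpace G]

lemma TransBdd.bound_compact {ν : Measure G} (hν : TransBdd ν) {C : Set G} (hC : IsCompact C) :
    ∃ M : ℝ≥0∞, M ≠ ⊤ ∧ ∀ u : G, ν (u +ᵥ C) ≤ M := by
  obtain ⟨V, ⟨v₀, hv₀⟩, hVopen, hVcl, hVsup⟩ := hν
  set B := ⨆ t : G, ν (t +ᵥ V) with hB
  have hcov : C ⊆ ⋃ x ∈ C, ((x - v₀) +ᵥ V) := by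
    intro x hx
    refine Set.mem_biUnion hx ⟨v₀, hv₀, ?_⟩
    simp only [vadd_eq_add]; abel
  obtain ⟨b', hb'sub, hb'fin, hb'cov⟩ :=
    hC.elim_finite_subcover_image (fun x _ => hVopen.vadd _) hcov
  refine ⟨hb'fin.toFinset.card * B, ?_, fun u => ?_⟩
  · exact ENNReal.mul_ne_top (by simp) hVsup.ne
  · have h1 : u +ᵥ C ⊆ ⋃ x ∈ hb'fin.toFinset, ((u + (x - v₀)) +ᵥ V) := by
      intro y hy
      obtain ⟨c, hc, rfl⟩ := hy
      obtain ⟨x, hx, hcx⟩ := Set.mem_iUnion₂.1 (hb'cov hc)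
      exact Set.mem_iUnion₂.2 ⟨x, hb'fin.mem_toFinset.2 hx, by
        obtain ⟨v, hv, rfl⟩ := hcx
        exact ⟨v, hv, by simp only [vadd_eq_add]; abel⟩⟩
    calc ν (u +ᵥ C) ≤ ν (⋃ x ∈ hb'fin.toFinset, ((u + (x - v₀)) +ᵥ V)) := measure_mono h1
      _ ≤ ∑ x ∈ hb'fin.toFinset, ν ((u + (x - v₀)) +ᵥ V) := measure_biUnion_finset_le _ _
      _ ≤ ∑ _x ∈ hb'fin.toFinset, B :=
          Finset.sum_le_sum (fun x _ => le_iSup (fun t : G => ν (t +ᵥ V)) _)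
      _ = hb'fin.toFinset.card * B := by rw [Finset.sum_const, nsmul_eq_mul]

lemma TransBdd.finite_of_relCompact {ν : Measure G} (hν : TransBdd ν) {S : Set G}
    (hS : IsCompact (closure S)) : ν S ≠ ⊤ := by
  obtain ⟨M, hM, hb⟩ := hν.bound_compact hS
  have h0 : ν (closure S) ≤ M := by simpa using hb 0
  exact (lt_of_le_of_lt (le_trans (measure_mono subset_closure) h0) hM.lt_top).ne

lemma vadd_set_eq_preimage (x : G) (S : Set G) :
    x +ᵥ S = (fun y => -x + y) ⁻¹' S := by
  ext y
  simp [Set.mem_vadd_set_iff_neg_vadd_mem, vadd_eq_add]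

lemma haar_vadd (haar : Measure G) [haar.IsAddHaarMeasure] (x : G) (S : Set G) :
    haar (x +ᵥ S) = haar S := by
  rw [vadd_set_eq_preimage, measure_preimage_add]

lemma TransBdd.le_haar (haar : Measure G) [haar.IsAddHaarMeasure] {ν : Measure G}
    (hν : TransBdd ν) :
    ∃ U : Set G, IsOpen U ∧ (0:G) ∈ U ∧ IsCompact (closure U) ∧
      ∃ M : ℝ≥0∞, M ≠ ⊤ ∧ ∀ S : Set G, IsCompact (closure S) → ν S ≤ M * haar (S + U) := by
  classical
  obtain ⟨K₀, hK₀cpt, hK₀nhds⟩ := exists_compact_mem_nhds (0 : G)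
  set U := interior K₀ with hU
  have hUopen : IsOpen U := isOpen_interior
  have hU0 : (0:G) ∈ U := mem_interior_iff_mem_nhds.2 hK₀nhds
  have hUcl : IsCompact (closure U) :=
    hK₀cpt.of_isClosed_subset isClosed_closure (closure_minimal interior_subset hK₀cpt.isClosed)
  have hUpos : 0 < haar U := hUopen.measure_pos haar ⟨0, hU0⟩
  have hUfin : haar U < ⊤ :=
    lt_of_le_of_lt (measure_mono interior_subset) hK₀cpt.measure_lt_top
  have hsubC : IsCompact (closure U - closure U) := by
    rw [sub_eq_add_neg]; exact hUcl.add hUcl.neg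
  obtain ⟨M₁, hM₁top, hM₁⟩ := hν.bound_compact hsubC
  refine ⟨U, hUopen, hU0, hUcl, M₁ / haar U, ?_, ?_⟩
  · simp [ENNReal.div_eq_top, hUpos.ne', hM₁top]
  intro S hScl
  have hSUfin : haar (S + U) < ⊤ := by
    refine lt_of_le_of_lt (measure_mono ?_) ((hScl.add hUcl).measure_lt_top)
    exact Set.add_subset_add subset_closure subset_closure
  set P : Finset G → Prop :=
    fun F => ↑F ⊆ S ∧ (↑F : Set G).PairwiseDisjoint (fun x => x +ᵥ U) with hP
  have hPbound : ∀ F : Finset G, P F → (F.card : ℝ≥0∞) * haar U ≤ haar (S + U) := by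
    intro F hF
    have hdisj : haar (⋃ x ∈ F, (x +ᵥ U)) = ∑ x ∈ F, haar (x +ᵥ U) :=
      measure_biUnion_finset hF.2 (fun x _ => (hUopen.vadd x).measurableSet)
    have hsub : (⋃ x ∈ F, (x +ᵥ U)) ⊆ S + U := by
      intro y hy
      obtain ⟨x, hx, u, hu, rfl⟩ := by simpa using hy
      exact Set.add_mem_add (hF.1 hx) hu
    calc (F.card : ℝ≥0∞) * haar U = ∑ _x ∈ F, haar U := by
          rw [Finset.sum_const, nsmul_eq_mul]
      _ = ∑ x ∈ F, haar (x +ᵥ U) := by simp [haar_vadd]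
      _ = haar (⋃ x ∈ F, (x +ᵥ U)) := hdisj.symm
      _ ≤ haar (S + U) := measure_mono hsub
  have hQtop : haar (S + U) / haar U ≠ ⊤ :=
    (ENNReal.div_lt_top hSUfin.ne hUpos.ne').ne
  have hPcard : ∀ F : Finset G, P F → (F.card : ℝ≥0∞) ≤ haar (S + U) / haar U := by
    intro F hF
    exact (ENNReal.le_div_iff_mul_le (Or.inl hUpos.ne') (Or.inl hUfin.ne)).2 (hPbound F hF)
  obtain ⟨N, hN⟩ := ENNReal.exists_nat_gt (lt_top_iff_ne_top.2 hQtop).ne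
  have hPcardNat : ∀ F : Finset G, P F → F.card ≤ N := by
    intro F hF
    have h2 : (F.card : ℝ≥0∞) < N := lt_of_le_of_lt (hPcard F hF) hN
    exact_mod_cast h2.le
  set cs : Set ℕ := {k | ∃ F : Finset G, P F ∧ F.card = k} with hcs
  have hcs_ne : cs.Nonempty := ⟨0, ∅, ⟨by simp, by simp⟩, by simp⟩
  have hcs_bdd : BddAbove cs := ⟨N, fun k ⟨F, hF, hc⟩ => hc ▸ hPcardNat F hF⟩
  obtain ⟨F, hF, hFcard⟩ := Nat.sSup_mem hcs_ne hcs_bdd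
  have hcover : S ⊆ ⋃ x ∈ F, (x +ᵥ (U - U)) := by
    intro s hs
    have hmeet : ∃ x ∈ F, ¬ Disjoint (s +ᵥ U) (x +ᵥ U) := by
      by_contra hcon
      push_neg at hcon
      have hsF : s ∉ F := by
        intro hsF
        have hmem : s +ᵥ (0:G) ∈ s +ᵥ U := Set.vadd_mem_vadd_set hU0
        exact (Set.not_disjoint_iff.2 ⟨_, hmem, hmem⟩) (hcon s hsF)
      have hP' : P (insert s F) := by
        constructor
        · intro x hx
          rcases Finset.mem_insert.1 (by simpa using hx) with rfl | hx'
          · exact hs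
          · exact hF.1 hx'
        · rw [Finset.coe_insert]
          exact hF.2.insert (fun x hx _ => hcon x hx)
      have : (insert s F).card ≤ sSup cs :=
        le_csSup hcs_bdd ⟨insert s F, hP', rfl⟩
      rw [Finset.card_insert_of_notMem hsF, hFcard] at this
      omega
    obtain ⟨x, hx, hnd⟩ := hmeet
    obtain ⟨y, hy1, hy2⟩ := Set.not_disjoint_iff.1 hnd
    obtain ⟨u₁, hu₁, rfl⟩ := hy1
    obtain ⟨u₂, hu₂, heq⟩ := hy2
    refine Set.mem_biUnion hx ⟨u₂ - u₁, Set.sub_mem_sub hu₂ hu₁, ?_⟩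
    simp only [vadd_eq_add] at heq ⊢
    have hx2 : x = s + u₁ - u₂ := eq_sub_of_add_eq heq
    rw [hx2]; abel
  calc ν S ≤ ν (⋃ x ∈ F, (x +ᵥ (U - U))) := measure_mono hcover
    _ ≤ ∑ x ∈ F, ν (x +ᵥ (U - U)) := measure_biUnion_finset_le _ _
    _ ≤ ∑ _x ∈ F, M₁ := Finset.sum_le_sum (fun x _ => by
        refine le_trans (measure_mono ?_) (hM₁ x)
        exact Set.vadd_set_mono (Set.sub_subset_sub subset_closure subset_closure))
    _ = (F.card : ℝ≥0∞) * M₁ := by rw [Finset.sum_const, nsmul_eq_mul]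
    _ ≤ (haar (S + U) / haar U) * M₁ := mul_le_mul_left (hPcard F hF) M₁
    _ = M₁ / haar U * haar (S + U) := by rw [div_eq_mul_inv, div_eq_mul_inv]; ring

/-- K-boundary absorbs addition by a set `D`. -/
lemma KBoundary_add_subset (K D A : Set G) :
    KBoundary K A + D ⊆ KBoundary ((K ∪ {0}) + (D ∪ -D)) A := by
  rintro y ⟨x, hx, d, hd, rfl⟩
  set K' := (K ∪ {0}) + (D ∪ -D) with hK'
  by_cases hyA : x + d ∈ A
  · refine Or.inr ⟨?_, ?_⟩
    · rcases hx with ⟨hx1, hx2⟩ | ⟨⟨z, hz, k, hk, hzk⟩, hx2⟩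
      · refine ⟨x, hx2, 0 + -d, ?_, by abel⟩
        exact Set.add_mem_add (Or.inr rfl) (Or.inr (Set.neg_mem_neg.2 hd))
      · refine ⟨z, hz, k + -d,
          Set.add_mem_add (Or.inl hk) (Or.inr (Set.neg_mem_neg.2 hd)), ?_⟩
        rw [← hzk]; dsimp only; abel
    · exact subset_closure hyA
  · refine Or.inl ⟨?_, hyA⟩
    rcases hx with ⟨hx1, hx2⟩ | ⟨hx1, hx2⟩
    · have hmem1 : x + d ∈ closure (A + K) + {d} := ⟨x, hx1, d, rfl, rfl⟩
      have h2 : closure (A + K) + {d} ⊆ closure (A + K + {d}) := by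
        rw [Set.add_singleton, Set.add_singleton]
        exact image_closure_subset_closure_image (continuous_add_right d)
      refine closure_mono ?_ (h2 hmem1)
      rintro w ⟨v, ⟨a, ha, k, hk, rfl⟩, e, he, rfl⟩
      rcases he with rfl
      have hmem : k + e ∈ K ∪ {0} + (D ∪ -D) := Set.add_mem_add (Or.inl hk) (Or.inl hd)
      exact ⟨a, ha, k + e, hmem, by dsimp only; abel⟩
    · have hmem1 : x + d ∈ closure A + {d} := ⟨x, hx2, d, rfl, rfl⟩
      have h2 : closure A + {d} ⊆ closure (A + {d}) := by
        rw [Set.add_singleton, Set.add_singleton]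
        exact image_closure_subset_closure_image (continuous_add_right d)
      refine closure_mono ?_ (h2 hmem1)
      rintro w ⟨a, ha, e, he, rfl⟩
      rcases he with rfl
      have hmem : (0:G) + e ∈ K ∪ {0} + (D ∪ -D) := Set.add_mem_add (Or.inr rfl) (Or.inl hd)
      exact ⟨a, ha, 0 + e, hmem, by abel⟩

/-- symmetric difference of `A` and the preimage translate lies in the K-boundary -/
lemma symmDiff_subset_KBoundary (t : G) (A : Set G) :
    ((fun x => x + t) ⁻¹' A \ A) ∪ (A \ (fun x => x + t) ⁻¹' A)
      ⊆ KBoundary ({t, -t} : Set G) A := by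
  rintro x (⟨hx1, hx2⟩ | ⟨hx1, hx2⟩)
  · have hmem : -t ∈ ({t, -t} : Set G) := Or.inr rfl
    have heq : (x + t) + (-t) = x := by abel
    exact Or.inl ⟨subset_closure ⟨x + t, hx1, -t, hmem, heq⟩, hx2⟩
  · have hmem : t ∈ ({t, -t} : Set G) := Or.inl rfl
    have heq : (x + t) - t = x := by abel
    exact Or.inr ⟨⟨x + t, hx2, t, hmem, heq⟩, subset_closure hx1⟩

lemma KBoundary_subset_compact {K A : Set G} :
    KBoundary K A ⊆ closure (A + K) ∪ closure A := by
  rintro x (⟨h1, _⟩ | ⟨_, h2⟩)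
  · exact Or.inl h1
  · exact Or.inr h2

lemma closure_add_compact {A K : Set G} (hA : IsCompact (closure A)) (hK : IsCompact K) :
    IsCompact (closure (A + K)) := by
  refine (hA.add hK).of_isClosed_subset isClosed_closure (closure_minimal ?_ (hA.add hK).isClosed)
  exact Set.add_subset_add subset_closure subset_rfl

lemma KBoundary_closure_compact {K A : Set G} (hK : IsCompact K)
    (hA : IsCompact (closure A)) : IsCompact (closure (KBoundary K A)) := by
  have hsub : closure (KBoundary K A) ⊆ closure (A + K) ∪ closure A :=
    closure_minimal KBoundary_subset_compact
      (((closure_add_compact hA hK).isClosed).union isClosed_closure)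
  exact ((closure_add_compact hA hK).union hA).of_isClosed_subset isClosed_closure hsub

lemma KBoundary_measure_lt_top {K A : Set G} (hK : IsCompact K)
    (hA : IsCompact (closure A)) (μ : Measure G) [IsFiniteMeasureOnCompacts μ] :
    μ (KBoundary K A) < ⊤ := by
  have h1 : IsCompact (closure (A + K)) := closure_add_compact hA hK
  exact lt_of_le_of_lt (measure_mono KBoundary_subset_compact)
    (lt_of_le_of_lt (measure_union_le _ _)
      (ENNReal.add_lt_top.2 ⟨h1.measure_lt_top, hA.measure_lt_top⟩))

lemma KBoundary_measurableSet {K A : Set G} (hK : IsCompact K) (hA : IsOpen A) :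
    MeasurableSet (KBoundary K A) := by
  have h1 : IsClosed (Aᶜ - K) := by
    rw [sub_eq_add_neg]
    exact IsClosed.add_right_of_isCompact (hA.isClosed_compl) hK.neg
  exact ((isClosed_closure.measurableSet.diff hA.measurableSet).union
    (h1.measurableSet.inter isClosed_closure.measurableSet))

lemma tendsto_boundary_ratio {I : Type*} [Preorder I] [Nonempty I] [IsDirected I (· ≤ ·)]
    (haar : Measure G) [haar.IsAddHaarMeasure]
    (A : I → Set G) (hA_cpt : ∀ i, IsCompact (closure (A i)))
    (hvH : ∀ K : Set G, IsCompact K →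
      Tendsto (fun i => haar (KBoundary K (A i)) / haar (A i)) atTop (𝓝 0))
    {ρ : Measure G} (hρ : TransBdd ρ) {K : Set G} (hK : IsCompact K) :
    Tendsto (fun i => (haar (A i)).toReal⁻¹ * (ρ (KBoundary K (A i))).toReal)
      atTop (𝓝 0) := by
  obtain ⟨U, hUopen, hU0, hUcl, M, hMtop, hpack⟩ := hρ.le_haar haar
  set K2 := ((K ∪ {0}) + (closure U ∪ -(closure U))) with hK2def
  have hK2 : IsCompact K2 := (hK.union isCompact_singleton).add (hUcl.union hUcl.neg)
  have h0 : ∀ i, ρ (KBoundary K (A i)) ≤ M * haar (KBoundary K2 (A i)) := by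
    intro i
    refine le_trans (hpack _ (KBoundary_closure_compact hK (hA_cpt i)))
      (mul_le_mul_right (measure_mono ?_) M)
    exact subset_trans (Set.add_subset_add_left subset_closure)
      (KBoundary_add_subset K (closure U) (A i))
  have hfin : ∀ i, M * haar (KBoundary K2 (A i)) ≠ ⊤ := fun i =>
    ENNReal.mul_ne_top hMtop (KBoundary_measure_lt_top hK2 (hA_cpt i) haar).ne
  have hbound : ∀ i, (haar (A i)).toReal⁻¹ * (ρ (KBoundary K (A i))).toReal
      ≤ M.toReal * (haar (KBoundary K2 (A i)) / haar (A i)).toReal := by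
    intro i
    have h1 : (ρ (KBoundary K (A i))).toReal ≤ (M * haar (KBoundary K2 (A i))).toReal :=
      ENNReal.toReal_mono (hfin i) (h0 i)
    calc (haar (A i)).toReal⁻¹ * (ρ (KBoundary K (A i))).toReal
        ≤ (haar (A i)).toReal⁻¹ * (M * haar (KBoundary K2 (A i))).toReal :=
          mul_le_mul_of_nonneg_left h1 (by positivity)
      _ = M.toReal * (haar (KBoundary K2 (A i)) / haar (A i)).toReal := by
          rw [ENNReal.toReal_mul, ENNReal.toReal_div, div_eq_mul_inv]; ring
  have htendsto : Tendsto (fun i => M.toReal *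
      (haar (KBoundary K2 (A i)) / haar (A i)).toReal) atTop (𝓝 0) := by
    have h2 : Tendsto (fun i => (haar (KBoundary K2 (A i)) / haar (A i)).toReal)
        atTop (𝓝 0) := by
      have h3 := (ENNReal.tendsto_toReal (a := 0) (by simp)).comp (hvH K2 hK2)
      simpa [Function.comp_def] using h3
    simpa using h2.const_mul M.toReal
  exact squeeze_zero (fun i => by positivity) hbound htendsto

lemma exists_unif (χ : G → ℂ) (hc : Continuous χ) (hcs : HasCompactSupport χ)
    {ε : ℝ} (hε : 0 < ε) :
    ∃ W : Set G, IsOpen W ∧ (0:G) ∈ W ∧ ∀ x y : G, y - x ∈ W → ‖χ y - χ x‖ ≤ ε := by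
  letI : UniformSpace G := IsTopologicalAddGroup.rightUniformSpace G
  haveI : IsUniformAddGroup G := isUniformAddGroup_of_addCommGroup
  have huc : UniformContinuous χ := hcs.uniformContinuous_of_continuous hc
  have hmem : (fun p : G × G => (χ p.1, χ p.2)) ⁻¹' {q : ℂ × ℂ | dist q.1 q.2 < ε} ∈ 𝓤 G :=
    huc (Metric.dist_mem_uniformity hε)
  rw [uniformity_eq_comap_nhds_zero G] at hmem
  obtain ⟨s, hs, hsub⟩ := Filter.mem_comap.1 hmem
  obtain ⟨W, hWs, hWopen, hW0⟩ := mem_nhds_iff.1 hs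
  refine ⟨W, hWopen, hW0, fun x y hxy => ?_⟩
  have h1 : ((x, y) : G × G) ∈ (fun p : G × G => p.2 - p.1) ⁻¹' s := hWs hxy
  have h2 := hsub h1
  simp only [Set.mem_preimage, Set.mem_setOf_eq, dist_eq_norm] at h2
  calc ‖χ y - χ x‖ = ‖χ x - χ y‖ := norm_sub_rev _ _
    _ ≤ ε := h2.le

lemma integrableOn_of_bounded' {ν : Measure G} {D : Set G} (hDfin : ν D ≠ ⊤)
    {f : G → ℂ} (hf : AEStronglyMeasurable f (ν.restrict D)) {Cb : ℝ}
    (hbound : ∀ s, ‖f s‖ ≤ Cb) : IntegrableOn f D ν := by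
  refine Integrable.mono' (g := fun _ => Cb) ?_ hf (Filter.Eventually.of_forall hbound)
  exact integrableOn_const hDfin

lemma continuous_param_integral (ν : Measure G) {D : Set G}
    (hDfin : ν D ≠ ⊤) {χ : G → ℂ} (hχc : Continuous χ) (hχs : HasCompactSupport χ)
    {h : G → ℂ} (hh_meas : Measurable h) (hh_norm : ∀ x, ‖h x‖ = 1) :
    Continuous (fun u => ∫ s in D, χ (s - u) * h s ∂ν) := by
  obtain ⟨Cb, hCb⟩ := hχc.bounded_above_of_compact_support hχs
  have hint : ∀ u : G, IntegrableOn (fun s => χ (s - u) * h s) D ν := by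
    intro u
    refine integrableOn_of_bounded' hDfin ?_ (Cb := Cb) (fun s => ?_)
    · exact (((hχc.comp (by fun_prop)).measurable.mul hh_meas)).aestronglyMeasurable
    · rw [norm_mul, hh_norm, mul_one]; exact hCb _
  rw [continuous_iff_continuousAt]
  intro u₀
  rw [ContinuousAt, Metric.tendsto_nhds]
  intro ε hε
  have hd : (0:ℝ) < (ν D).toReal + 1 := by positivity
  set ε' := (ε/2) / ((ν D).toReal + 1) with hε'def
  have hε'pos : 0 < ε' := by positivity
  obtain ⟨W, hWopen, hW0, hW⟩ := exists_unif χ hχc hχs hε'pos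
  have hNopen : IsOpen ((fun u => u₀ - u) ⁻¹' W) := hWopen.preimage (by fun_prop)
  have hNmem : u₀ ∈ (fun u => u₀ - u) ⁻¹' W := by simp [hW0]
  filter_upwards [hNopen.mem_nhds hNmem] with u hu
  have key : ∀ s ∈ D, ‖(χ (s - u) - χ (s - u₀)) * h s‖ ≤ ε' := by
    intro s _
    rw [norm_mul, hh_norm, mul_one]
    refine hW _ _ ?_
    have harg : (s - u) - (s - u₀) = u₀ - u := by abel
    rw [harg]; exact hu
  have hsub : (∫ s in D, χ (s - u) * h s ∂ν) - ∫ s in D, χ (s - u₀) * h s ∂ν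
      = ∫ s in D, (χ (s - u) - χ (s - u₀)) * h s ∂ν := by
    rw [← integral_sub (hint u) (hint u₀)]
    congr 1; ext s; ring
  rw [dist_eq_norm, hsub]
  have hb := norm_setIntegral_le_of_norm_le_const_ae' hDfin.lt_top
    (Filter.Eventually.of_forall key)
  rw [measureReal_def] at hb
  refine lt_of_le_of_lt hb ?_
  have h1 : ε' * (ν D).toReal ≤ ε / 2 := by
    rw [hε'def, div_mul_eq_mul_div, div_le_iff₀ hd]
    have h2 : (ν D).toReal ≤ (ν D).toReal + 1 := by linarith
    calc ε / 2 * (ν D).toReal ≤ ε / 2 * ((ν D).toReal + 1) :=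
          mul_le_mul_of_nonneg_left h2 (by positivity)
      _ = ε / 2 * ((ν D).toReal + 1) := rfl
  linarith

lemma setIntegral_sub_split {μ : Measure G} {f : G → ℂ} {A B : Set G}
    (hA : MeasurableSet A) (hB : MeasurableSet B) (hint : IntegrableOn f (A ∪ B) μ) :
    (∫ x in B, f x ∂μ) - ∫ x in A, f x ∂μ
      = (∫ x in B \ A, f x ∂μ) - ∫ x in A \ B, f x ∂μ := by
  have hd1 : Disjoint (B ∩ A) (B \ A) := Set.disjoint_left.2 fun x hx1 hx2 => hx2.2 hx1.2
  have hd2 : Disjoint (A ∩ B) (A \ B) := Set.disjoint_left.2 fun x hx1 hx2 => hx2.2 hx1.2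
  have hB' : ∫ x in B, f x ∂μ = (∫ x in B ∩ A, f x ∂μ) + ∫ x in B \ A, f x ∂μ := by
    rw [← setIntegral_union hd1 (hB.diff hA)
      (hint.mono_set (fun x hx => Or.inl hx.2)) (hint.mono_set (fun x hx => Or.inr hx.1)),
      Set.inter_union_diff]
  have hA' : ∫ x in A, f x ∂μ = (∫ x in A ∩ B, f x ∂μ) + ∫ x in A \ B, f x ∂μ := by
    rw [← setIntegral_union hd2 (hA.diff hB)
      (hint.mono_set (fun x hx => Or.inl hx.1)) (hint.mono_set (fun x hx => Or.inl hx.1)),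
      Set.inter_union_diff]
  rw [hA', hB', Set.inter_comm B A]
  ring

lemma norm_setIntegral_supported_le {ν : Measure G} {D : Set G} (hD : MeasurableSet D)
    (hDfin : ν D ≠ ⊤) {f : G → ℂ} {Cb : ℝ}
    {E : Set G} (hE : MeasurableSet E) (hbound : ∀ s, ‖f s‖ ≤ Cb) (hsupp : ∀ s ∉ E, f s = 0)
    (hint : IntegrableOn f D ν) :
    ‖∫ s in D, f s ∂ν‖ ≤ Cb * (ν (D ∩ E)).toReal := by
  have hz : ∫ x in D \ E, f x ∂ν = 0 :=
    setIntegral_eq_zero_of_forall_eq_zero (fun x hx => hsupp x hx.2)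
  have heq : ∫ s in D, f s ∂ν = ∫ s in D ∩ E, f s ∂ν := by
    conv_lhs => rw [← Set.inter_union_diff D E]
    rw [setIntegral_union (Set.disjoint_left.2 fun x hx1 hx2 => hx2.2 hx1.2) (hD.diff hE)
        (hint.mono_set Set.inter_subset_left) (hint.mono_set Set.diff_subset),
      hz, add_zero]
  rw [heq]
  exact norm_setIntegral_le_of_norm_le_const
    (lt_of_le_of_lt (measure_mono Set.inter_subset_left) hDfin.lt_top)
    (fun x _ => hbound x)

lemma isClosed_vadd' (u : G) {C : Set G} (hC : IsClosed C) : IsClosed (u +ᵥ C) := by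
  rw [vadd_set_eq_preimage]
  exact hC.preimage (by fun_prop)

lemma relcpt_preimage_add (t : G) {A : Set G} (hA : IsCompact (closure A)) :
    IsCompact (closure ((fun x => x + t) ⁻¹' A)) := by
  have hpre : (fun x : G => x + t) ⁻¹' A = (-t) +ᵥ A := by
    rw [vadd_set_eq_preimage]
    ext x
    simp [add_comm]
  have hsub : closure ((fun x : G => x + t) ⁻¹' A) ⊆ (-t) +ᵥ closure A := by
    rw [hpre, vadd_set_eq_preimage, vadd_set_eq_preimage]
    exact (continuous_add_left _).closure_preimage_subset _
  exact (hA.vadd (-t)).of_isClosed_subset isClosed_closure hsub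

end Aux
/-- Translation behaviour of the reflected Eberlein convolution:
`⟨τ_t μ, μ'⟩ = ⟨μ, τ_{−t} μ'⟩ = τ_t ⟨μ, μ'⟩`, formulated for the polar data. -/
theorem eberlein_translation
    {G : Type*} [AddCommGroup G] [TopologicalSpace G] [IsTopologicalAddGroup G]
    [LocallyCompactSpace G] [T2Space G] [MeasurableSpace G] [BorelSpace G]
    {I : Type*} [Preorder I] [Nonempty I] [IsDirected I (· ≤ ·)]
    (haar : Measure G) [haar.IsAddHaarMeasure]
    (A : I → Set G)
    (hA_open : ∀ i, IsOpen (A i)) (hA_ne : ∀ i, (A i).Nonempty)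
    (hA_cpt : ∀ i, IsCompact (closure (A i)))
    (hA_pos : ∀ i, 0 < haar (A i)) (hA_fin : ∀ i, haar (A i) < ⊤)
    (hvH : ∀ K : Set G, IsCompact K →
      Tendsto (fun i => haar (KBoundary K (A i)) / haar (A i)) atTop (𝓝 0))
    (ν ν' : Measure G) (hν_tb : TransBdd ν) (hν'_tb : TransBdd ν')
    (h h' : G → ℂ)
    (hh_meas : Measurable h) (hh_norm : ∀ x, ‖h x‖ = 1)
    (hh'_meas : Measurable h') (hh'_norm : ∀ x, ‖h' x‖ = 1)
    (L : (G → ℂ) → ℂ)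
    (hL : ∀ χ : G → ℂ, Continuous χ → HasCompactSupport χ →
      Tendsto
        (fun i => (haar (A i)).toReal⁻¹ •
          ∫ u in A i, (∫ s in A i, χ (s - u) * h s * conj (h' u) ∂ν) ∂ν')
        atTop (𝓝 (L χ)))
    (t : G) :
    ∀ χ : G → ℂ, Continuous χ → HasCompactSupport χ →
      (Tendsto
        (fun i => (haar (A i)).toReal⁻¹ •
          ∫ u in A i,
            (∫ s in A i, χ (s - u) * h (s - t) * conj (h' u)
              ∂(Measure.map (fun x => x + t) ν)) ∂ν')
        atTop (𝓝 (L (fun x => χ (x + t)))))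
      ∧ (Tendsto
        (fun i => (haar (A i)).toReal⁻¹ •
          ∫ u in A i,
            (∫ s in A i, χ (s - u) * h s * conj (h' (u + t)) ∂ν)
            ∂(Measure.map (fun x => x - t) ν'))
        atTop (𝓝 (L (fun x => χ (x + t))))) := by
  intro χ hχc hχs
  classical
  set χ' : G → ℂ := fun x => χ (x + t) with hχ'def
  have hχ'c : Continuous χ' := hχc.comp (continuous_add_right t)
  have hχ's : HasCompactSupport χ' := hχs.comp_homeomorph (Homeomorph.addRight t)
  obtain ⟨Cb, hCb⟩ := hχ'c.bounded_above_of_compact_support hχ's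
  have hCb0 : (0:ℝ) ≤ Cb := le_trans (norm_nonneg _) (hCb 0)
  set C : Set G := tsupport χ' with hCdef
  have hCcpt : IsCompact C := hχ's
  have hCclosed : IsClosed C := isClosed_tsupport χ'
  obtain ⟨MC, hMCtop, hMC⟩ := hν_tb.bound_compact hCcpt
  have hMC0 : (0:ℝ) ≤ MC.toReal := ENNReal.toReal_nonneg
  have hAm : ∀ i, MeasurableSet (A i) := fun i => (hA_open i).measurableSet
  have hνA : ∀ i, ν (A i) ≠ ⊤ := fun i => hν_tb.finite_of_relCompact (hA_cpt i)
  have hν'A : ∀ i, ν' (A i) ≠ ⊤ := fun i => hν'_tb.finite_of_relCompact (hA_cpt i)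
  -- vanishing of the integrand away from the translated support
  have hvanish : ∀ u s : G, s ∉ u +ᵥ C → χ' (s - u) = 0 := by
    intro u s hs
    apply image_eq_zero_of_notMem_tsupport
    intro hmem
    exact hs ⟨s - u, hmem, by simp only [vadd_eq_add]; abel⟩
  have hFbound : ∀ u s : G, ‖χ' (s - u) * h s * conj (h' u)‖ ≤ Cb := by
    intro u s
    calc ‖χ' (s - u) * h s * conj (h' u)‖
        = ‖χ' (s - u)‖ * ‖h s‖ * ‖conj (h' u)‖ := by rw [norm_mul, norm_mul]
      _ = ‖χ' (s - u)‖ := by rw [hh_norm, RCLike.norm_conj, hh'_norm, mul_one, mul_one]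
      _ ≤ Cb := hCb _
  have hFint : ∀ (D : Set G), ν D ≠ ⊤ → ∀ u : G,
      IntegrableOn (fun s => χ' (s - u) * h s * conj (h' u)) D ν := by
    intro D hD u
    refine integrableOn_of_bounded' hD ?_ (hFbound u)
    exact (((hχ'c.comp (by fun_prop)).measurable.mul hh_meas).mul_const _).aestronglyMeasurable
  have hg_boundMC : ∀ (D : Set G), MeasurableSet D → ν D ≠ ⊤ → ∀ u : G,
      ‖∫ s in D, χ' (s - u) * h s * conj (h' u) ∂ν‖ ≤ Cb * MC.toReal := by
    intro D hDm hDfin u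
    have hEm : MeasurableSet (u +ᵥ C) := (isClosed_vadd' u hCclosed).measurableSet
    have hb := norm_setIntegral_supported_le hDm hDfin hEm (hFbound u)
      (fun s hs => by rw [hvanish u s hs, zero_mul, zero_mul]) (hFint D hDfin u)
    refine le_trans hb ?_
    have h2 : (ν (D ∩ (u +ᵥ C))).toReal ≤ MC.toReal :=
      ENNReal.toReal_mono hMCtop (le_trans (measure_mono Set.inter_subset_right) (hMC u))
    exact mul_le_mul_of_nonneg_left h2 hCb0
  have hg_factor : ∀ (D : Set G) (u : G),
      (∫ s in D, χ' (s - u) * h s * conj (h' u) ∂ν)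
        = (∫ s in D, χ' (s - u) * h s ∂ν) * conj (h' u) := by
    intro D u
    have h3 := integral_smul_const (μ := ν.restrict D)
      (f := fun s => χ' (s - u) * h s) (c := conj (h' u))
    simpa [smul_eq_mul] using h3
  have hg_aesm : ∀ (D : Set G), ν D ≠ ⊤ → ∀ (μ0 : Measure G),
      AEStronglyMeasurable (fun u => ∫ s in D, χ' (s - u) * h s * conj (h' u) ∂ν) μ0 := by
    intro D hD μ0
    have heq : (fun u => ∫ s in D, χ' (s - u) * h s * conj (h' u) ∂ν)
        = fun u => (∫ s in D, χ' (s - u) * h s ∂ν) * conj (h' u) := funext (hg_factor D)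
    rw [heq]
    refine AEStronglyMeasurable.mul
      ((continuous_param_integral ν hD hχ'c hχ's hh_meas hh_norm).aestronglyMeasurable) ?_
    have hstar : Measurable fun u : G => conj (h' u) := by
      simp only [starRingEnd_apply]
      exact continuous_star.measurable.comp hh'_meas
    exact hstar.aestronglyMeasurable
  have hg_int : ∀ (D : Set G), MeasurableSet D → ν D ≠ ⊤ →
      ∀ (E : Set G), ν' E ≠ ⊤ →
      IntegrableOn (fun u => ∫ s in D, χ' (s - u) * h s * conj (h' u) ∂ν) E ν' := by
    intro D hDm hD E hE
    exact integrableOn_of_bounded' hE (hg_aesm D hD _) (hg_boundMC D hDm hD)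
  have hbase : Tendsto (fun i => (haar (A i)).toReal⁻¹ •
      ∫ u in A i, (∫ s in A i, χ' (s - u) * h s * conj (h' u) ∂ν) ∂ν')
      atTop (𝓝 (L χ')) := hL χ' hχ'c hχ's
  constructor
  · -- part (a)
    set Bs : I → Set G := fun i => (fun x => x + t) ⁻¹' (A i) with hBdef
    have hBopen : ∀ i, IsOpen (Bs i) := fun i => (hA_open i).preimage (continuous_add_right t)
    have hBm : ∀ i, MeasurableSet (Bs i) := fun i => (hBopen i).measurableSet
    have hBcpt : ∀ i, IsCompact (closure (Bs i)) := fun i => relcpt_preimage_add t (hA_cpt i)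
    have hνB : ∀ i, ν (Bs i) ≠ ⊤ := fun i => hν_tb.finite_of_relCompact (hBcpt i)
    have hνAB : ∀ i, ν (A i ∪ Bs i) ≠ ⊤ := fun i => by
      refine (lt_of_le_of_lt (measure_union_le _ _) ?_).ne
      exact ENNReal.add_lt_top.2 ⟨(hνA i).lt_top, (hνB i).lt_top⟩
    set K0 : Set G := {t, -t} with hK0def
    have hK0 : IsCompact K0 := ((Set.finite_singleton (-t)).insert t).isCompact
    set K1 : Set G := (K0 ∪ {0}) + ((-C) ∪ -(-C)) with hK1def
    have hK1 : IsCompact K1 := (hK0.union isCompact_singleton).add (hCcpt.neg.union hCcpt.neg.neg)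
    have hν'T : ∀ i, ν' (KBoundary K1 (A i)) ≠ ⊤ := fun i =>
      hν'_tb.finite_of_relCompact (KBoundary_closure_compact hK1 (hA_cpt i))
    have hTm : ∀ i, MeasurableSet (KBoundary K1 (A i)) := fun i =>
      KBoundary_measurableSet hK1 (hA_open i)
    have hnotin : ∀ i, ∀ u, u ∉ KBoundary K1 (A i) →
        ∀ s ∈ (Bs i \ A i) ∪ (A i \ Bs i), s ∉ u +ᵥ C := by
      intro i u hu s hs hsu
      apply hu
      obtain ⟨c, hc, hcs⟩ := hsu
      have h1 : s ∈ KBoundary K0 (A i) := symmDiff_subset_KBoundary t (A i) hs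
      have h2 : u = s + (-c) := by
        simp only [vadd_eq_add] at hcs
        rw [← hcs]; abel
      rw [h2, hK1def]
      exact KBoundary_add_subset K0 (-C) (A i) ⟨s, h1, -c, Set.neg_mem_neg.2 hc, rfl⟩
    have hdiff0 : ∀ i, ∀ u, u ∈ A i → u ∉ KBoundary K1 (A i) →
        (∫ s in Bs i, χ' (s - u) * h s * conj (h' u) ∂ν)
          - (∫ s in A i, χ' (s - u) * h s * conj (h' u) ∂ν) = 0 := by
      intro i u _ hu
      rw [setIntegral_sub_split (hAm i) (hBm i) (hFint _ (hνAB i) u)]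
      have hz1 : ∫ s in Bs i \ A i, χ' (s - u) * h s * conj (h' u) ∂ν = 0 :=
        setIntegral_eq_zero_of_forall_eq_zero fun s hs => by
          rw [hvanish u s (hnotin i u hu s (Or.inl hs)), zero_mul, zero_mul]
      have hz2 : ∫ s in A i \ Bs i, χ' (s - u) * h s * conj (h' u) ∂ν = 0 :=
        setIntegral_eq_zero_of_forall_eq_zero fun s hs => by
          rw [hvanish u s (hnotin i u hu s (Or.inr hs)), zero_mul, zero_mul]
      rw [hz1, hz2, sub_zero]
    have herr_bd : ∀ i, ‖∫ u in A i, ((∫ s in Bs i, χ' (s - u) * h s * conj (h' u) ∂ν)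
          - (∫ s in A i, χ' (s - u) * h s * conj (h' u) ∂ν)) ∂ν'‖
        ≤ (2 * (Cb * MC.toReal)) * (ν' (KBoundary K1 (A i))).toReal := by
      intro i
      have hintdiff : IntegrableOn (fun u => (∫ s in Bs i, χ' (s - u) * h s * conj (h' u) ∂ν)
          - ∫ s in A i, χ' (s - u) * h s * conj (h' u) ∂ν) (A i) ν' :=
        (hg_int (Bs i) (hBm i) (hνB i) (A i) (hν'A i)).sub
          (hg_int (A i) (hAm i) (hνA i) (A i) (hν'A i))
      have hsplit : ∫ u in A i, ((∫ s in Bs i, χ' (s - u) * h s * conj (h' u) ∂ν)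
            - ∫ s in A i, χ' (s - u) * h s * conj (h' u) ∂ν) ∂ν'
          = ∫ u in A i ∩ KBoundary K1 (A i), ((∫ s in Bs i, χ' (s - u) * h s * conj (h' u) ∂ν)
            - ∫ s in A i, χ' (s - u) * h s * conj (h' u) ∂ν) ∂ν' := by
        calc ∫ u in A i, ((∫ s in Bs i, χ' (s - u) * h s * conj (h' u) ∂ν)
              - ∫ s in A i, χ' (s - u) * h s * conj (h' u) ∂ν) ∂ν'
            = ∫ u in (A i ∩ KBoundary K1 (A i)) ∪ (A i \ KBoundary K1 (A i)),
                ((∫ s in Bs i, χ' (s - u) * h s * conj (h' u) ∂ν)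
                  - ∫ s in A i, χ' (s - u) * h s * conj (h' u) ∂ν) ∂ν' := by
              rw [Set.inter_union_diff]
          _ = (∫ u in A i ∩ KBoundary K1 (A i), ((∫ s in Bs i, χ' (s - u) * h s * conj (h' u) ∂ν)
                  - ∫ s in A i, χ' (s - u) * h s * conj (h' u) ∂ν) ∂ν')
              + ∫ u in A i \ KBoundary K1 (A i), ((∫ s in Bs i, χ' (s - u) * h s * conj (h' u) ∂ν)
                  - ∫ s in A i, χ' (s - u) * h s * conj (h' u) ∂ν) ∂ν' :=
              setIntegral_union (Set.disjoint_left.2 fun x hx1 hx2 => hx2.2 hx1.2)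
                ((hAm i).diff (hTm i)) (hintdiff.mono_set Set.inter_subset_left)
                (hintdiff.mono_set Set.diff_subset)
          _ = ∫ u in A i ∩ KBoundary K1 (A i), ((∫ s in Bs i, χ' (s - u) * h s * conj (h' u) ∂ν)
                  - ∫ s in A i, χ' (s - u) * h s * conj (h' u) ∂ν) ∂ν' := by
              rw [setIntegral_eq_zero_of_forall_eq_zero
                  (t := A i \ KBoundary K1 (A i)) (fun u hu => hdiff0 i u hu.1 hu.2),
                add_zero]
      rw [hsplit]
      have hb := norm_setIntegral_le_of_norm_le_const (C := 2 * (Cb * MC.toReal)) (s := A i ∩ KBoundary K1 (A i))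
        (lt_of_le_of_lt (measure_mono Set.inter_subset_left) (hν'A i).lt_top)
        (fun u _ => by
          calc ‖(∫ s in Bs i, χ' (s - u) * h s * conj (h' u) ∂ν)
                - ∫ s in A i, χ' (s - u) * h s * conj (h' u) ∂ν‖
              ≤ ‖∫ s in Bs i, χ' (s - u) * h s * conj (h' u) ∂ν‖
                + ‖∫ s in A i, χ' (s - u) * h s * conj (h' u) ∂ν‖ := norm_sub_le _ _
            _ ≤ Cb * MC.toReal + Cb * MC.toReal :=
                add_le_add (hg_boundMC (Bs i) (hBm i) (hνB i) u)
                  (hg_boundMC (A i) (hAm i) (hνA i) u)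
            _ = 2 * (Cb * MC.toReal) := by ring)
      refine le_trans hb ?_
      refine mul_le_mul_of_nonneg_left ?_ (by positivity)
      exact ENNReal.toReal_mono (hν'T i) (measure_mono Set.inter_subset_right)
    have hratio := tendsto_boundary_ratio haar A hA_cpt hvH hν'_tb hK1
    have herr : Tendsto (fun i => (haar (A i)).toReal⁻¹ •
        ∫ u in A i, ((∫ s in Bs i, χ' (s - u) * h s * conj (h' u) ∂ν)
          - ∫ s in A i, χ' (s - u) * h s * conj (h' u) ∂ν) ∂ν') atTop (𝓝 0) := by
      have hratio' := hratio.const_mul (2 * (Cb * MC.toReal))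
      rw [mul_zero] at hratio'
      refine squeeze_zero_norm (fun i => ?_) hratio'
      rw [norm_smul, Real.norm_eq_abs, abs_of_nonneg (by positivity)]
      calc (haar (A i)).toReal⁻¹ * ‖∫ u in A i, ((∫ s in Bs i, χ' (s - u) * h s * conj (h' u) ∂ν)
            - ∫ s in A i, χ' (s - u) * h s * conj (h' u) ∂ν) ∂ν'‖
          ≤ (haar (A i)).toReal⁻¹ *
              ((2 * (Cb * MC.toReal)) * (ν' (KBoundary K1 (A i))).toReal) :=
            mul_le_mul_of_nonneg_left (herr_bd i) (by positivity)
        _ = 2 * (Cb * MC.toReal) *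
              ((haar (A i)).toReal⁻¹ * (ν' (KBoundary K1 (A i))).toReal) := by ring
    have hkey : ∀ i, (haar (A i)).toReal⁻¹ •
          (∫ u in A i, (∫ s in A i, χ (s - u) * h (s - t) * conj (h' u)
            ∂(Measure.map (fun x => x + t) ν)) ∂ν')
        = (haar (A i)).toReal⁻¹ •
            (∫ u in A i, (∫ s in A i, χ' (s - u) * h s * conj (h' u) ∂ν) ∂ν')
          + (haar (A i)).toReal⁻¹ •
            (∫ u in A i, ((∫ s in Bs i, χ' (s - u) * h s * conj (h' u) ∂ν)
              - ∫ s in A i, χ' (s - u) * h s * conj (h' u) ∂ν) ∂ν') := by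
      intro i
      have hemb : MeasurableEmbedding (fun x : G => x + t) :=
        (Homeomorph.addRight t).measurableEmbedding
      have hinner : ∀ u : G, (∫ s in A i, χ (s - u) * h (s - t) * conj (h' u)
          ∂(Measure.map (fun x => x + t) ν))
          = ∫ s in Bs i, χ' (s - u) * h s * conj (h' u) ∂ν := by
        intro u
        rw [hemb.setIntegral_map]
        refine setIntegral_congr_fun (hBm i) fun x _ => ?_
        have h1 : x + t - t = x := by abel
        have h2 : x + t - u = (x - u) + t := by abel
        rw [h1, h2]
      have houter : (fun u => ∫ s in A i, χ (s - u) * h (s - t) * conj (h' u)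
          ∂(Measure.map (fun x => x + t) ν))
          = fun u => ∫ s in Bs i, χ' (s - u) * h s * conj (h' u) ∂ν := funext hinner
      rw [houter]
      have hsum : (∫ u in A i, (∫ s in A i, χ' (s - u) * h s * conj (h' u) ∂ν) ∂ν')
          + (∫ u in A i, ((∫ s in Bs i, χ' (s - u) * h s * conj (h' u) ∂ν)
              - ∫ s in A i, χ' (s - u) * h s * conj (h' u) ∂ν) ∂ν')
          = ∫ u in A i, (∫ s in Bs i, χ' (s - u) * h s * conj (h' u) ∂ν) ∂ν' := by
        rw [integral_sub (hg_int (Bs i) (hBm i) (hνB i) (A i) (hν'A i))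
          (hg_int (A i) (hAm i) (hνA i) (A i) (hν'A i))]
        ring
      rw [← hsum, smul_add]
    have hsum2 := hbase.add herr
    rw [add_zero] at hsum2
    exact hsum2.congr fun i => (hkey i).symm
  · -- part (b)
    set Bs : I → Set G := fun i => (fun x => x - t) ⁻¹' (A i) with hBdef
    have hBeq : ∀ i, Bs i = (fun x => x + (-t)) ⁻¹' (A i) := by
      intro i; ext x; simp [hBdef, Set.mem_preimage, sub_eq_add_neg]
    have hBopen : ∀ i, IsOpen (Bs i) := fun i => (hA_open i).preimage (by fun_prop)
    have hBm : ∀ i, MeasurableSet (Bs i) := fun i => (hBopen i).measurableSet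
    have hBcpt : ∀ i, IsCompact (closure (Bs i)) := fun i => by
      rw [hBeq i]; exact relcpt_preimage_add (-t) (hA_cpt i)
    have hν'B : ∀ i, ν' (Bs i) ≠ ⊤ := fun i => hν'_tb.finite_of_relCompact (hBcpt i)
    have hν'AB : ∀ i, ν' (A i ∪ Bs i) ≠ ⊤ := fun i => by
      refine (lt_of_le_of_lt (measure_union_le _ _) ?_).ne
      exact ENNReal.add_lt_top.2 ⟨(hν'A i).lt_top, (hν'B i).lt_top⟩
    set K0 : Set G := {-t, -(-t)} with hK0def
    have hK0 : IsCompact K0 := ((Set.finite_singleton (-(-t))).insert (-t)).isCompact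
    have hsymm : ∀ i, (Bs i \ A i) ∪ (A i \ Bs i) ⊆ KBoundary K0 (A i) := by
      intro i
      have hs := symmDiff_subset_KBoundary (-t) (A i)
      rw [← hBeq i] at hs
      exact hs
    have hnubd : ∀ i, ν' (KBoundary K0 (A i)) ≠ ⊤ := fun i =>
      hν'_tb.finite_of_relCompact (KBoundary_closure_compact hK0 (hA_cpt i))
    have herr_bd : ∀ i, ‖(∫ u in Bs i \ A i, (∫ s in A i, χ' (s - u) * h s * conj (h' u) ∂ν) ∂ν')
          - ∫ u in A i \ Bs i, (∫ s in A i, χ' (s - u) * h s * conj (h' u) ∂ν) ∂ν'‖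
        ≤ (2 * (Cb * MC.toReal)) * (ν' (KBoundary K0 (A i))).toReal := by
      intro i
      have hb1 := norm_setIntegral_le_of_norm_le_const (C := Cb * MC.toReal) (s := Bs i \ A i)
        (lt_of_le_of_lt (measure_mono Set.diff_subset) (hν'B i).lt_top)
        (fun u _ => hg_boundMC (A i) (hAm i) (hνA i) u)
      have hb2 := norm_setIntegral_le_of_norm_le_const (C := Cb * MC.toReal) (s := A i \ Bs i)
        (lt_of_le_of_lt (measure_mono Set.diff_subset) (hν'A i).lt_top)
        (fun u _ => hg_boundMC (A i) (hAm i) (hνA i) u)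
      have hm1 : (ν' (Bs i \ A i)).toReal ≤ (ν' (KBoundary K0 (A i))).toReal :=
        ENNReal.toReal_mono (hnubd i)
          (measure_mono (subset_trans (fun x hx => Or.inl hx) (hsymm i)))
      have hm2 : (ν' (A i \ Bs i)).toReal ≤ (ν' (KBoundary K0 (A i))).toReal :=
        ENNReal.toReal_mono (hnubd i)
          (measure_mono (subset_trans (fun x hx => Or.inr hx) (hsymm i)))
      calc ‖(∫ u in Bs i \ A i, (∫ s in A i, χ' (s - u) * h s * conj (h' u) ∂ν) ∂ν')
            - ∫ u in A i \ Bs i, (∫ s in A i, χ' (s - u) * h s * conj (h' u) ∂ν) ∂ν'‖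
          ≤ ‖∫ u in Bs i \ A i, (∫ s in A i, χ' (s - u) * h s * conj (h' u) ∂ν) ∂ν'‖
            + ‖∫ u in A i \ Bs i, (∫ s in A i, χ' (s - u) * h s * conj (h' u) ∂ν) ∂ν'‖ :=
            norm_sub_le _ _
        _ ≤ (Cb * MC.toReal) * (ν' (Bs i \ A i)).toReal
            + (Cb * MC.toReal) * (ν' (A i \ Bs i)).toReal := add_le_add hb1 hb2
        _ ≤ (Cb * MC.toReal) * (ν' (KBoundary K0 (A i))).toReal
            + (Cb * MC.toReal) * (ν' (KBoundary K0 (A i))).toReal :=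
            add_le_add (mul_le_mul_of_nonneg_left hm1 (by positivity))
              (mul_le_mul_of_nonneg_left hm2 (by positivity))
        _ = (2 * (Cb * MC.toReal)) * (ν' (KBoundary K0 (A i))).toReal := by ring
    have hratio := tendsto_boundary_ratio haar A hA_cpt hvH hν'_tb hK0
    have herr : Tendsto (fun i => (haar (A i)).toReal⁻¹ •
        ((∫ u in Bs i \ A i, (∫ s in A i, χ' (s - u) * h s * conj (h' u) ∂ν) ∂ν')
          - ∫ u in A i \ Bs i, (∫ s in A i, χ' (s - u) * h s * conj (h' u) ∂ν) ∂ν'))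
        atTop (𝓝 0) := by
      have hratio' := hratio.const_mul (2 * (Cb * MC.toReal))
      rw [mul_zero] at hratio'
      refine squeeze_zero_norm (fun i => ?_) hratio'
      rw [norm_smul, Real.norm_eq_abs, abs_of_nonneg (by positivity)]
      calc (haar (A i)).toReal⁻¹ *
            ‖(∫ u in Bs i \ A i, (∫ s in A i, χ' (s - u) * h s * conj (h' u) ∂ν) ∂ν')
              - ∫ u in A i \ Bs i, (∫ s in A i, χ' (s - u) * h s * conj (h' u) ∂ν) ∂ν'‖
          ≤ (haar (A i)).toReal⁻¹ *
              ((2 * (Cb * MC.toReal)) * (ν' (KBoundary K0 (A i))).toReal) :=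
            mul_le_mul_of_nonneg_left (herr_bd i) (by positivity)
        _ = 2 * (Cb * MC.toReal) *
              ((haar (A i)).toReal⁻¹ * (ν' (KBoundary K0 (A i))).toReal) := by ring
    have hkey : ∀ i, (haar (A i)).toReal⁻¹ •
          (∫ u in A i, (∫ s in A i, χ (s - u) * h s * conj (h' (u + t)) ∂ν)
            ∂(Measure.map (fun x => x - t) ν'))
        = (haar (A i)).toReal⁻¹ •
            (∫ u in A i, (∫ s in A i, χ' (s - u) * h s * conj (h' u) ∂ν) ∂ν')
          + (haar (A i)).toReal⁻¹ •
            ((∫ u in Bs i \ A i, (∫ s in A i, χ' (s - u) * h s * conj (h' u) ∂ν) ∂ν')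
              - ∫ u in A i \ Bs i, (∫ s in A i, χ' (s - u) * h s * conj (h' u) ∂ν) ∂ν') := by
      intro i
      have hemb : MeasurableEmbedding (fun x : G => x - t) :=
        (Homeomorph.subRight t).measurableEmbedding
      have hmap : (∫ u in A i, (∫ s in A i, χ (s - u) * h s * conj (h' (u + t)) ∂ν)
            ∂(Measure.map (fun x => x - t) ν'))
          = ∫ x in Bs i, (∫ s in A i, χ' (s - x) * h s * conj (h' x) ∂ν) ∂ν' := by
        rw [hemb.setIntegral_map]
        refine setIntegral_congr_fun (hBm i) fun x _ => ?_
        show (∫ s in A i, χ (s - (x - t)) * h s * conj (h' ((x - t) + t)) ∂ν) = _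
        have h1 : x - t + t = x := by abel
        rw [h1]
        refine setIntegral_congr_fun (hAm i) fun s _ => ?_
        have h2 : s - (x - t) = (s - x) + t := by abel
        rw [h2]
      have hsplit := setIntegral_sub_split (μ := ν')
        (f := fun u => ∫ s in A i, χ' (s - u) * h s * conj (h' u) ∂ν)
        (hAm i) (hBm i) (hg_int (A i) (hAm i) (hνA i) _ (hν'AB i))
      rw [hmap, ← smul_add]
      congr 1
      rw [← hsplit]
      ring
    have hsum2 := hbase.add herr
    rw [add_zero] at hsum2
    exact hsum2.congr fun i => (hkey i).symm
end
end

section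
/- Let G be a locally compact Hausdorff Abelian group with Haar measure λ, let (A_i)_{i∈I} be a van Hove net in G, and let μ = h·ν be a translation bounded complex measure on G in polar form. Assume that for every continuous compactly supported χ : G → ℂ the net γ_i(χ) := (1/λ(A_i)) ∫_{A_i} ∫_{A_i} χ(s − u) h(s) conj(h(u)) dν(s) dν(u) converges to a limit γ(χ). Then γ is positive definite: for every continuous compactly supported φ : G → ℂ, the value γ(χ_φ) is a nonnegative real number, where χ_φ(x) := ∫_G φ(z) · conj(φ(z + x)) dλ(z). -/
open MeasureTheory Filter Topology Pointwise
open scoped ENNReal NNReal ComplexConjugate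

noncomputable section

/-- A translation bounded measure is finite on compact sets. -/
lemma TransBdd.finite_on_compact {G : Type*} [AddCommGroup G] [TopologicalSpace G]
    [IsTopologicalAddGroup G] [MeasurableSpace G]
    {ν : MeasureTheory.Measure G} (hν : TransBdd ν) {C : Set G} (hC : IsCompact C) :
    ν C < ⊤ := by
  obtain ⟨V, ⟨v0, hv0⟩, hVo, -, hsup⟩ := hν
  have hcov : C ⊆ ⋃ x : G, ((x - v0) +ᵥ V) := by
    intro x _
    exact Set.mem_iUnion.2 ⟨x, ⟨v0, hv0, sub_add_cancel x v0⟩⟩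
  obtain ⟨t, ht⟩ := hC.elim_finite_subcover (fun x : G => ((x - v0) +ᵥ V))
    (fun x => hVo.vadd _) hcov
  calc ν C ≤ ν (⋃ x ∈ t, ((x - v0) +ᵥ V)) := measure_mono ht
    _ ≤ ∑ x ∈ t, ν ((x - v0) +ᵥ V) := measure_biUnion_finset_le t _
    _ ≤ ∑ _x ∈ t, (⨆ s : G, ν (s +ᵥ V)) :=
        Finset.sum_le_sum fun x _ => le_iSup (fun s : G => ν (s +ᵥ V)) (x - v0)
    _ = t.card • (⨆ s : G, ν (s +ᵥ V)) := by rw [Finset.sum_const]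
    _ < ⊤ := by
        rw [nsmul_eq_mul]
        exact ENNReal.mul_lt_top (by simp) hsup

/-- The autocorrelation `γ = ⟨μ, μ⟩` of a translation bounded measure
`μ = h·ν` (in polar form) is positive definite: `γ(φ ∗ φ̃) ≥ 0` for all continuous
compactly supported `φ`, where here `γ` is given as the limit functional `L`. -/
theorem autocorrelation_positive_definite
    {G : Type*} [AddCommGroup G] [TopologicalSpace G] [IsTopologicalAddGroup G]
    [LocallyCompactSpace G] [T2Space G] [MeasurableSpace G] [BorelSpace G]
    {I : Type*} [Preorder I] [Nonempty I] [IsDirected I (· ≤ ·)]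
    (haar : Measure G) [haar.IsAddHaarMeasure]
    (A : I → Set G)
    (hA_open : ∀ i, IsOpen (A i)) (hA_ne : ∀ i, (A i).Nonempty)
    (hA_cpt : ∀ i, IsCompact (closure (A i)))
    (hA_pos : ∀ i, 0 < haar (A i)) (hA_fin : ∀ i, haar (A i) < ⊤)
    (hvH : ∀ K : Set G, IsCompact K →
      Tendsto (fun i => haar (KBoundary K (A i)) / haar (A i)) atTop (𝓝 0))
    (ν : Measure G) (hν_tb : TransBdd ν)
    (h : G → ℂ) (hh_meas : Measurable h) (hh_norm : ∀ x, ‖h x‖ = 1)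
    (L : (G → ℂ) → ℂ)
    (hL : ∀ χ : G → ℂ, Continuous χ → HasCompactSupport χ →
      Tendsto
        (fun i => (haar (A i)).toReal⁻¹ •
          ∫ u in A i, (∫ s in A i, χ (s - u) * h s * conj (h u) ∂ν) ∂ν)
        atTop (𝓝 (L χ))) :
    ∀ φ : G → ℂ, Continuous φ → HasCompactSupport φ →
      0 ≤ (L (fun x => ∫ z, φ z * conj (φ (z + x)) ∂haar)).re
      ∧ (L (fun x => ∫ z, φ z * conj (φ (z + x)) ∂haar)).im = 0 := by
  intro φ hφc hφs
  classical
  set ψ : G → ℂ := fun x => ∫ z, φ z * conj (φ (z + x)) ∂haar with hψdef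
  -- `ψ` is continuous with compact support, being (a reflection of) a convolution.
  set φc : G → ℂ := fun t => conj (φ (-t)) with hφcdef
  have hφc'c : Continuous φc := continuous_star.comp (hφc.comp continuous_neg)
  have hφc's : HasCompactSupport φc := by
    have h1 : HasCompactSupport fun t => φ (-t) := hφs.comp_homeomorph (Homeomorph.neg G)
    exact h1.comp_left (g := (starRingEnd ℂ)) (by simp)
  have hφint : Integrable φ haar := hφc.integrable_of_hasCompactSupport hφs
  have hconv_cont :
      Continuous (convolution φ φc (ContinuousLinearMap.mul ℂ ℂ) haar) :=
    hφc's.continuous_convolution_right _ hφint.locallyIntegrable hφc'c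
  have hconv_supp :
      HasCompactSupport (convolution φ φc (ContinuousLinearMap.mul ℂ ℂ) haar) :=
    hφs.convolution _ hφc's
  have hψeq : ψ = fun x => (convolution φ φc (ContinuousLinearMap.mul ℂ ℂ) haar) (-x) := by
    funext x
    rw [hψdef]
    simp only [convolution_def, ContinuousLinearMap.mul_apply']
    congr 1
    funext z
    have hx : -(-x - z) = z + x := by abel
    rw [hφcdef]
    simp only [hx]
  have hψc : Continuous ψ := by rw [hψeq]; exact hconv_cont.comp continuous_neg
  have hψs : HasCompactSupport ψ := by
    rw [hψeq]; exact hconv_supp.comp_homeomorph (Homeomorph.neg G)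
  -- main step: each element of the net is a nonnegative real
  have key : ∀ i : I,
      0 ≤ ((haar (A i)).toReal⁻¹ •
        ∫ u in A i, (∫ s in A i, ψ (s - u) * h s * conj (h u) ∂ν) ∂ν).re ∧
      ((haar (A i)).toReal⁻¹ •
        ∫ u in A i, (∫ s in A i, ψ (s - u) * h s * conj (h u) ∂ν) ∂ν).im = 0 := by
    intro i
    set μ : Measure G := ν.restrict (A i) with hμdef
    haveI : IsFiniteMeasure μ := by
      refine ⟨?_⟩
      rw [hμdef, Measure.restrict_apply_univ]
      exact lt_of_le_of_lt (measure_mono subset_closure)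
        (hν_tb.finite_on_compact (hA_cpt i))
    -- a continuous compactly supported cutoff `g` which is `1` on `closure (A i)`
    obtain ⟨Lc, hLcc, hLci⟩ := exists_compact_superset (hA_cpt i)
    have hscl : IsCompact (closure (interior Lc)) :=
      hLcc.of_isClosed_subset isClosed_closure
        (closure_minimal interior_subset hLcc.isClosed)
    obtain ⟨g, hg_supp, hg_one, hg_mem⟩ :=
      exists_tsupport_one_of_isOpen_isClosed isOpen_interior hscl isClosed_closure hLci
    have hgs : HasCompactSupport (g : G → ℝ) :=
      hLcc.of_isClosed_subset (isClosed_tsupport _) (hg_supp.trans interior_subset)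
    set K : Set G := tsupport φ with hKdef
    have hK : IsCompact K := hφs
    set Tg : Set G := tsupport (g : G → ℝ) with hTgdef
    set T : Set G := K + Tg with hTdef
    have hTc : IsCompact T := hK.add hgs
    have hTm : MeasurableSet T := hTc.isClosed.measurableSet
    haveI : IsFiniteMeasure (haar.restrict T) := by
      refine ⟨?_⟩
      rw [Measure.restrict_apply_univ]
      exact hTc.measure_lt_top
    -- the kernel
    set Θ : G × G → ℂ := fun p => φ (p.1 - p.2) * ((g p.2 : ℝ) : ℂ) with hΘdef
    have hΘc : Continuous Θ :=
      (hφc.comp (continuous_fst.sub continuous_snd)).mul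
        (Complex.continuous_ofReal.comp (g.continuous.comp continuous_snd))
    have hΘ0 : ∀ p : G × G, p.1 ∉ T → Θ p = 0 := by
      intro p hp
      by_cases hgp : p.2 ∈ Tg
      · have hzero : φ (p.1 - p.2) = 0 := by
          by_contra hne
          exact hp ⟨p.1 - p.2, subset_tsupport φ hne, p.2, hgp, sub_add_cancel _ _⟩
        simp [hΘdef, hzero]
      · have hzero : g p.2 = 0 := image_eq_zero_of_notMem_tsupport hgp
        simp [hΘdef, hzero]
    have hΘsupp : HasCompactSupport Θ := by
      apply HasCompactSupport.intro (hTc.prod hgs)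
      intro p hp
      rw [Set.mem_prod] at hp
      push_neg at hp
      by_cases hp1 : p.1 ∈ T
      · have : g p.2 = 0 := image_eq_zero_of_notMem_tsupport (hp hp1)
        simp [hΘdef, this]
      · exact hΘ0 p hp1
    have hΘsm : StronglyMeasurable Θ := hΘsupp.stronglyMeasurable_of_prod hΘc
    obtain ⟨CΘ, hCΘ⟩ := hΘc.bounded_above_of_compact_support hΘsupp
    set Q : G × G → ℂ := fun p => Θ p * h p.2 with hQdef
    have hQsm : StronglyMeasurable Q :=
      hΘsm.mul ((hh_meas.comp measurable_snd).stronglyMeasurable)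
    have hQbd : ∀ p, ‖Q p‖ ≤ CΘ := by
      intro p
      simp only [hQdef, norm_mul, hh_norm, mul_one]
      exact hCΘ p
    have hCΘ0 : 0 ≤ CΘ := le_trans (norm_nonneg _) (hQbd ((0 : G), (0 : G)))
    have hQ0 : ∀ p : G × G, p.1 ∉ T → Q p = 0 := by
      intro p hp; simp only [hQdef]; rw [hΘ0 p hp, zero_mul]
    set F : G → ℂ := fun z => ∫ s, Q (z, s) ∂μ with hFdef
    have hFsm : StronglyMeasurable F := hQsm.integral_prod_right'
    have hFbd : ∀ z, ‖F z‖ ≤ CΘ * (μ Set.univ).toReal := by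
      intro z
      exact norm_integral_le_of_norm_le_const (Eventually.of_forall fun s => hQbd (z, s))
    have hmeasA : MeasurableSet (A i) := (hA_open i).measurableSet
    -- Step 1: rewrite the inner integrand
    have E1 : ∀ s ∈ A i, ∀ u ∈ A i,
        ψ (s - u) * h s * conj (h u) = ∫ z in T, Q (z, s) * conj (Q (z, u)) ∂haar := by
      intro s hs u hu
      have hgs1 : g s = 1 := hg_one (subset_closure hs)
      have hgu1 : g u = 1 := hg_one (subset_closure hu)
      have step1 : ψ (s - u) = ∫ z, φ (z - s) * conj (φ (z - u)) ∂haar := by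
        have h0 := integral_sub_right_eq_self (μ := haar)
          (fun z => φ z * conj (φ (z + (s - u)))) s
        rw [hψdef]
        simp only
        rw [← h0]
        congr 1
        funext z
        have : z - s + (s - u) = z - u := by abel
        rw [this]
      have hvan : ∀ z ∉ T, Q (z, s) * conj (Q (z, u)) = 0 := by
        intro z hz
        rw [hQ0 (z, s) hz, zero_mul]
      rw [setIntegral_eq_integral_of_forall_compl_eq_zero hvan]
      rw [step1, mul_assoc, ← integral_mul_const]
      congr 1
      funext z
      simp only [hQdef, hΘdef, hgs1, hgu1, Complex.ofReal_one, mul_one, map_mul]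
      ring
    -- Step 2: first Fubini swap
    have swap1 : ∀ u : G,
        (∫ s, (∫ z in T, Q (z, s) * conj (Q (z, u)) ∂haar) ∂μ)
          = ∫ z in T, F z * conj (Q (z, u)) ∂haar := by
      intro u
      have hint : Integrable (Function.uncurry fun s z => Q (z, s) * conj (Q (z, u)))
          (μ.prod (haar.restrict T)) := by
        constructor
        · apply StronglyMeasurable.aestronglyMeasurable
          exact (hQsm.comp_measurable measurable_swap).mul
            (continuous_star.comp_stronglyMeasurable
              (hQsm.comp_measurable (measurable_snd.prodMk measurable_const)))
        · apply HasFiniteIntegral.of_bounded (C := CΘ * CΘ)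
          filter_upwards with p
          simp only [Function.uncurry, norm_mul, RCLike.norm_conj]
          exact mul_le_mul (hQbd _) (hQbd _) (norm_nonneg _) hCΘ0
      rw [integral_integral_swap hint]
      congr 1
      funext z
      rw [integral_mul_const]
    -- Step 3: second Fubini swap
    have hCF0 : 0 ≤ CΘ * (μ Set.univ).toReal :=
      mul_nonneg hCΘ0 ENNReal.toReal_nonneg
    have swap2 :
        (∫ u, (∫ z in T, F z * conj (Q (z, u)) ∂haar) ∂μ)
          = ∫ z in T, F z * conj (F z) ∂haar := by
      have hint : Integrable (Function.uncurry fun u z => F z * conj (Q (z, u)))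
          (μ.prod (haar.restrict T)) := by
        constructor
        · apply StronglyMeasurable.aestronglyMeasurable
          exact (hFsm.comp_measurable measurable_snd).mul
            (continuous_star.comp_stronglyMeasurable
              (hQsm.comp_measurable measurable_swap))
        · apply HasFiniteIntegral.of_bounded (C := (CΘ * (μ Set.univ).toReal) * CΘ)
          filter_upwards with p
          simp only [Function.uncurry, norm_mul, RCLike.norm_conj]
          exact mul_le_mul (hFbd _) (hQbd _) (norm_nonneg _) hCF0
      rw [integral_integral_swap hint]
      congr 1
      funext z
      rw [integral_const_mul, integral_conj]
    -- put it together
    have Dval : (∫ u in A i, (∫ s in A i, ψ (s - u) * h s * conj (h u) ∂ν) ∂ν)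
        = ∫ z in T, F z * conj (F z) ∂haar := by
      have step : (∫ u, (∫ s, ψ (s - u) * h s * conj (h u) ∂μ) ∂μ)
          = ∫ u, (∫ z in T, F z * conj (Q (z, u)) ∂haar) ∂μ := by
        apply integral_congr_ae
        filter_upwards [ae_restrict_mem hmeasA] with u hu
        have : (∫ s, ψ (s - u) * h s * conj (h u) ∂μ)
            = ∫ s, (∫ z in T, Q (z, s) * conj (Q (z, u)) ∂haar) ∂μ := by
          apply integral_congr_ae
          filter_upwards [ae_restrict_mem hmeasA] with s hs
          exact E1 s hs u hu
        rw [this, swap1 u]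
      calc (∫ u in A i, (∫ s in A i, ψ (s - u) * h s * conj (h u) ∂ν) ∂ν)
          = ∫ u, (∫ s, ψ (s - u) * h s * conj (h u) ∂μ) ∂μ := rfl
        _ = ∫ u, (∫ z in T, F z * conj (Q (z, u)) ∂haar) ∂μ := step
        _ = ∫ z in T, F z * conj (F z) ∂haar := swap2
    have Dreal : (∫ z in T, F z * conj (F z) ∂haar)
        = ((∫ z in T, Complex.normSq (F z) ∂haar : ℝ) : ℂ) := by
      simp_rw [Complex.mul_conj]
      exact integral_ofReal
    have hr0 : 0 ≤ ∫ z in T, Complex.normSq (F z) ∂haar :=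
      integral_nonneg fun z => Complex.normSq_nonneg _
    have hc0 : 0 ≤ (haar (A i)).toReal⁻¹ := inv_nonneg.2 ENNReal.toReal_nonneg
    rw [Dval, Dreal]
    constructor
    · rw [Complex.smul_re, Complex.ofReal_re]
      exact mul_nonneg hc0 hr0
    · rw [Complex.smul_im, Complex.ofReal_im, smul_zero]
  -- pass to the limit
  have hclosed : IsClosed {w : ℂ | 0 ≤ w.re ∧ w.im = 0} :=
    (isClosed_le continuous_const Complex.continuous_re).inter
      (isClosed_eq Complex.continuous_im continuous_const)
  have hmem : L ψ ∈ {w : ℂ | 0 ≤ w.re ∧ w.im = 0} :=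
    hclosed.mem_of_tendsto (hL ψ hψc hψs) (Eventually.of_forall key)
  exact hmem

end
end

section
/- Let G be a locally compact Hausdorff Abelian group, let V ⊆ G be a nonempty open set with compact closure, let C > 0, and let (μ_i)_{i∈I} be a net (indexed by a nonempty directed set) of positive measures on G such that μ_i(t + V) ≤ C for all i ∈ I and all t ∈ G. If for every continuous compactly supported φ : G → ℂ the net i ↦ ∫_G φ dμ_i converges in ℂ, then there exists a positive measure μ on G with μ(t + V) ≤ C for all t ∈ G such that ∫_G φ dμ_i → ∫_G φ dμ for every continuous compactly supported φ : G → ℂ. -/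
open MeasureTheory Filter Topology Pointwise
open scoped ENNReal NNReal ComplexConjugate

set_option linter.unusedSectionVars false
set_option maxHeartbeats 1000000

noncomputable section

open Set Function TopologicalSpace


lemma stair_sum : ∀ (n : ℕ) (c y : ℝ), 0 < c → 0 ≤ y → y ≤ n * c →
    ∑ k ∈ Finset.range n, min (max (y - k * c) 0) c = y := by
  intro n
  induction n with
  | zero =>
    intro c y hc hy hyn
    simp only [Nat.cast_zero, zero_mul] at hyn
    simp [le_antisymm hyn hy]
  | succ n ih =>
    intro c y hc hy hyn
    rw [Finset.sum_range_succ']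
    simp only [Nat.cast_zero, zero_mul, sub_zero]
    have hterm : ∀ k : ℕ, min (max (y - (k + 1 : ℕ) * c) 0) c
        = min (max ((y - c) - k * c) 0) c := by
      intro k; push_cast; ring_nf
    rcases le_or_gt y c with h | h
    · have h1 : ∀ k ∈ Finset.range n, min (max (y - (k + 1 : ℕ) * c) 0) c = 0 := by
        intro k _
        rw [hterm k]
        have : (y - c) - k * c ≤ 0 := by
          have : (0:ℝ) ≤ k * c := by positivity
          linarith
        rw [max_eq_right this, min_eq_left hc.le]
      rw [Finset.sum_congr rfl h1, Finset.sum_const, smul_zero, zero_add,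
        max_eq_left hy, min_eq_left h]
    · have h2 : ∑ k ∈ Finset.range n, min (max (y - (k + 1 : ℕ) * c) 0) c = y - c := by
        rw [Finset.sum_congr rfl (fun k _ => hterm k)]
        apply ih c (y - c) hc (by linarith)
        push_cast at hyn ⊢; linarith
      rw [h2, max_eq_left hy, min_eq_right h.le]
      ring

namespace RMKaux

variable {G : Type*} [TopologicalSpace G] [T2Space G] [LocallyCompactSpace G]

/-- Test functions dominating `1` on `K`. -/
def TestNN (K : Set G) : Set (G → ℝ) :=
  {f | Continuous f ∧ HasCompactSupport f ∧ (∀ x, 0 ≤ f x) ∧ ∀ x ∈ K, 1 ≤ f x}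

lemma testNN_nonempty {K : Set G} (hK : IsCompact K) : (TestNN K).Nonempty := by
  obtain ⟨f, hf1, _, hfc, hf01⟩ :=
    exists_continuous_one_zero_of_isCompact hK isClosed_empty (disjoint_empty K)
  exact ⟨⇑f, f.continuous, hfc, fun x => (hf01 x).1, fun x hx => (hf1 hx).ge⟩

/-- The Riesz content associated to a positive functional `L`. -/
def lam (L : (G → ℝ) → ℝ) (K : Compacts G) : ℝ≥0 :=
  sInf ((fun f => Real.toNNReal (L f)) '' TestNN (K : Set G))

variable (L : (G → ℝ) → ℝ)

lemma lam_le {K : Compacts G} {f : G → ℝ} (hf : f ∈ TestNN (K : Set G)) :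
    lam L K ≤ Real.toNNReal (L f) :=
  csInf_le (OrderBot.bddBelow _) ⟨f, hf, rfl⟩

lemma le_lam {K : Compacts G} {b : ℝ≥0}
    (h : ∀ f ∈ TestNN (K : Set G), b ≤ Real.toNNReal (L f)) : b ≤ lam L K :=
  le_csInf ((testNN_nonempty K.2).image _) (by rintro x ⟨f, hf, rfl⟩; exact h f hf)

variable
  (hadd : ∀ f g : G → ℝ, Continuous f → HasCompactSupport f → Continuous g →
      HasCompactSupport g → L (f + g) = L f + L g)
  (hsmul : ∀ (c : ℝ) (f : G → ℝ), Continuous f → HasCompactSupport f → L (c • f) = c * L f)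
  (hmono : ∀ f g : G → ℝ, Continuous f → HasCompactSupport f → Continuous g →
      HasCompactSupport g → (∀ x, f x ≤ g x) → L f ≤ L g)

include hsmul in
lemma L_zero : L 0 = 0 := by
  have := hsmul 0 0 continuous_const HasCompactSupport.zero
  simpa using this

include hsmul hmono in
lemma L_nonneg {f : G → ℝ} (hf : Continuous f) (hfc : HasCompactSupport f)
    (h0 : ∀ x, 0 ≤ f x) : 0 ≤ L f := by
  have := hmono 0 f continuous_const HasCompactSupport.zero hf hfc (by simpa using h0)
  rwa [L_zero L hsmul] at this

include hsmul hmono in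
/-- If `0 ≤ f ≤ 1` and `f` is supported inside the compact `K`, then `L f ≤ lam K`. -/
lemma L_le_lam {f : G → ℝ} (hf : Continuous f) (hfc : HasCompactSupport f)
    (h0 : ∀ x, 0 ≤ f x) (h1 : ∀ x, f x ≤ 1) {K : Compacts G}
    (hsupp : support f ⊆ (K : Set G)) : L f ≤ (lam L K : ℝ) := by
  have key : ∀ g ∈ TestNN (K : Set G), L f ≤ L g := by
    rintro g ⟨hg, hgc, hg0, hg1⟩
    refine hmono f g hf hfc hg hgc fun x => ?_
    by_cases hx : x ∈ support f
    · exact le_trans (h1 x) (hg1 x (hsupp hx))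
    · simp only [mem_support, not_not] at hx
      rw [hx]; exact hg0 x
  have : Real.toNNReal (L f) ≤ lam L K := by
    apply le_lam
    intro g hg
    exact Real.toNNReal_le_toNNReal (key g hg)
  calc L f = (Real.toNNReal (L f) : ℝ) :=
        (Real.coe_toNNReal _ (L_nonneg L hsmul hmono hf hfc h0)).symm
    _ ≤ (lam L K : ℝ) := by exact_mod_cast this

include hadd hsmul hmono in
lemma sup_le_aux (K₁ K₂ : Compacts G) :
    lam L (K₁ ⊔ K₂) ≤ lam L K₁ + lam L K₂ := by
  have key : ∀ f₁ ∈ TestNN (K₁ : Set G), ∀ f₂ ∈ TestNN (K₂ : Set G),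
      lam L (K₁ ⊔ K₂) ≤ Real.toNNReal (L f₁) + Real.toNNReal (L f₂) := by
    rintro f₁ ⟨h₁, h₁c, h₁0, h₁1⟩ f₂ ⟨h₂, h₂c, h₂0, h₂1⟩
    have hmem : f₁ + f₂ ∈ TestNN ((K₁ ⊔ K₂ : Compacts G) : Set G) := by
      refine ⟨h₁.add h₂, h₁c.add h₂c, fun x => add_nonneg (h₁0 x) (h₂0 x), fun x hx => ?_⟩
      rcases hx with hx | hx
      · exact le_add_of_le_of_nonneg (h₁1 x hx) (h₂0 x)
      · exact le_add_of_nonneg_of_le (h₁0 x) (h₂1 x hx)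
    calc lam L (K₁ ⊔ K₂) ≤ Real.toNNReal (L (f₁ + f₂)) := lam_le L hmem
      _ = Real.toNNReal (L f₁ + L f₂) := by rw [hadd f₁ f₂ h₁ h₁c h₂ h₂c]
      _ ≤ Real.toNNReal (L f₁) + Real.toNNReal (L f₂) := Real.toNNReal_add_le
  -- now pass to infima
  have step1 : ∀ f₁ ∈ TestNN (K₁ : Set G),
      lam L (K₁ ⊔ K₂) - Real.toNNReal (L f₁) ≤ lam L K₂ := by
    intro f₁ h₁
    apply le_lam
    intro f₂ h₂
    exact tsub_le_iff_left.2 (key f₁ h₁ f₂ h₂)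
  have step2 : lam L (K₁ ⊔ K₂) - lam L K₂ ≤ lam L K₁ := by
    apply le_lam
    intro f₁ h₁
    exact tsub_le_iff_right.2 (by
      have := step1 f₁ h₁
      have h := tsub_le_iff_left.1 this
      exact h.trans (by rw [add_comm]))
  calc lam L (K₁ ⊔ K₂) ≤ lam L K₂ + (lam L (K₁ ⊔ K₂) - lam L K₂) := le_tsub_add.trans (by rw [add_comm])
    _ ≤ lam L K₂ + lam L K₁ := add_le_add le_rfl step2
    _ = lam L K₁ + lam L K₂ := add_comm _ _

include hadd hsmul hmono in
/-- The Riesz content is a `Content`. -/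
lemma lam_content : ∃ C : Content G, C.toFun = lam L := by
  refine ⟨⟨lam L, ?_, ?_, ?_⟩, rfl⟩
  · intro K₁ K₂ h
    apply csInf_le_csInf (OrderBot.bddBelow _) ((testNN_nonempty K₂.2).image _)
    apply image_mono
    rintro f ⟨hf, hfc, h0, h1⟩
    exact ⟨hf, hfc, h0, fun x hx => h1 x (h hx)⟩
  · -- sup_disjoint'
    intro K₁ K₂ hdisj hcl₁ hcl₂
    refine le_antisymm ?_ ?_
    · -- subadditive (≤) : as in sup_le'
      exact sup_le_aux L hadd hsmul hmono K₁ K₂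
    · -- superadditive
      apply le_lam
      rintro f ⟨hf, hfc, h0, h1⟩
      obtain ⟨g, hg1, hg0, hgc, hg01⟩ :=
        exists_continuous_one_zero_of_isCompact K₁.2 hcl₂ hdisj
      set f₁ : G → ℝ := fun x => f x * g x with hf₁
      set f₂ : G → ℝ := fun x => f x * (1 - g x) with hf₂
      have hf₁c : Continuous f₁ := hf.mul g.continuous
      have hf₂c : Continuous f₂ := hf.mul (continuous_const.sub g.continuous)
      have hf₁cs : HasCompactSupport f₁ := hfc.mul_right
      have hf₂cs : HasCompactSupport f₂ := hfc.mul_right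
      have h₁mem : f₁ ∈ TestNN (K₁ : Set G) := by
        refine ⟨hf₁c, hf₁cs, fun x => mul_nonneg (h0 x) (hg01 x).1, fun x hx => ?_⟩
        rw [hf₁]; dsimp only
        rw [hg1 hx]
        simpa using h1 x (Or.inl hx)
      have h₂mem : f₂ ∈ TestNN (K₂ : Set G) := by
        refine ⟨hf₂c, hf₂cs, fun x => mul_nonneg (h0 x) (by linarith [(hg01 x).2]),
          fun x hx => ?_⟩
        rw [hf₂]; dsimp only
        rw [hg0 hx]
        simpa using h1 x (Or.inr hx)
      have hsum : f₁ + f₂ = f := by funext x; simp [hf₁, hf₂]; ring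
      have hLf : L f = L f₁ + L f₂ := by
        rw [← hadd f₁ f₂ hf₁c hf₁cs hf₂c hf₂cs, hsum]
      have e1 : lam L K₁ ≤ Real.toNNReal (L f₁) := lam_le L h₁mem
      have e2 : lam L K₂ ≤ Real.toNNReal (L f₂) := lam_le L h₂mem
      calc lam L K₁ + lam L K₂ ≤ Real.toNNReal (L f₁) + Real.toNNReal (L f₂) :=
            add_le_add e1 e2
        _ = Real.toNNReal (L f₁ + L f₂) :=
            (Real.toNNReal_add (L_nonneg L hsmul hmono hf₁c hf₁cs h₁mem.2.2.1)
              (L_nonneg L hsmul hmono hf₂c hf₂cs h₂mem.2.2.1)).symm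
        _ = Real.toNNReal (L f) := by rw [hLf]
  · -- sup_le'
    exact sup_le_aux L hadd hsmul hmono


include hadd hsmul hmono in
theorem rmk_exists [MeasurableSpace G] [BorelSpace G] [Nonempty G] :
    ∃ m : Measure G, IsFiniteMeasureOnCompacts m ∧
      (∀ U : Set G, IsOpen U → ∀ B : ℝ≥0,
        (∀ f : G → ℝ, Continuous f → HasCompactSupport f → (∀ x, 0 ≤ f x) → (∀ x, f x ≤ 1) →
          support f ⊆ U → L f ≤ B) → m U ≤ (B : ℝ≥0∞)) ∧
      (∀ f : G → ℝ, Continuous f → HasCompactSupport f → ∫ x, f x ∂m = L f) := by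
  obtain ⟨C, hC⟩ := lam_content L hadd hsmul hmono
  have hCK : ∀ K : Compacts G, C K = (lam L K : ℝ≥0∞) := fun K => by
    rw [show C K = (C.toFun K : ℝ≥0∞) from rfl, hC]
  have hfinm : IsFiniteMeasureOnCompacts C.measure := by
    constructor
    intro K hK
    rw [C.measure_apply hK.isClosed.measurableSet]
    exact C.outerMeasure_lt_top_of_isCompact hK
  refine ⟨C.measure, hfinm, ?_, ?_⟩
  · -- the bound on open sets
    intro U hU B hB
    have h1 : C.measure U = C.innerContent ⟨U, hU⟩ := by
      rw [C.measure_apply hU.measurableSet, C.outerMeasure_of_isOpen U hU]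
    rw [h1, Content.innerContent]
    refine iSup₂_le fun K hK => ?_
    rw [hCK]
    obtain ⟨f, hf1, hf0, hfc, hf01⟩ := exists_continuous_one_zero_of_isCompact K.2
      hU.isClosed_compl (disjoint_compl_right_iff_subset.mpr hK)
    have hsupp : support f ⊆ U := by
      intro x hx
      by_contra hxU
      exact hx (hf0 hxU)
    have hfB : L f ≤ B := hB f f.continuous hfc (fun x => (hf01 x).1) (fun x => (hf01 x).2) hsupp
    have h2 : lam L K ≤ Real.toNNReal (L ⇑f) :=
      lam_le L ⟨f.continuous, hfc, fun x => (hf01 x).1, fun x hx => (hf1 hx).ge⟩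
    have h3 : lam L K ≤ B := h2.trans (Real.toNNReal_le_iff_le_coe.2 hfB)
    exact_mod_cast h3
  · -- the integral identity
    haveI : IsFiniteMeasureOnCompacts C.measure := hfinm
    have hint : ∀ f : G → ℝ, Continuous f → HasCompactSupport f →
        Integrable f C.measure := fun f hf hfc => hf.integrable_of_hasCompactSupport hfc
    have lam_le_m : ∀ K : Compacts G, (lam L K : ℝ≥0∞) ≤ C.measure K := fun K =>
      calc (lam L K : ℝ≥0∞) = C K := (hCK K).symm
        _ ≤ C.outerMeasure K := C.le_outerMeasure_compacts K
        _ = C.measure K := (C.measure_apply K.isCompact.isClosed.measurableSet).symm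
    have m_open_le : ∀ U : Set G, (hU : IsOpen U) → ∀ K : Compacts G, U ⊆ (K : Set G) →
        C.measure U ≤ (lam L K : ℝ≥0∞) := by
      intro U hU K hUK
      rw [C.measure_apply hU.measurableSet, C.outerMeasure_of_isOpen U hU, ← hCK]
      exact C.innerContent_le ⟨U, hU⟩ K hUK
    -- the key identity for nonnegative functions
    have key : ∀ φ : G → ℝ, Continuous φ → HasCompactSupport φ → (∀ x, 0 ≤ φ x) →
        ∫ x, φ x ∂C.measure = L φ := by
      intro φ hφ hφc hφ0
      obtain ⟨x₀, hx₀⟩ := hφ.exists_forall_ge_of_hasCompactSupport hφc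
      set a : ℝ := max (φ x₀) 1 with ha
      have ha0 : (0:ℝ) < a := lt_of_lt_of_le one_pos (le_max_right _ _)
      have hφa : ∀ x, φ x ≤ a := fun x => (hx₀ x).trans (le_max_left _ _)
      obtain ⟨K', hK'c, hK'i⟩ := exists_compact_superset hφc
      set KD : Compacts G := ⟨K', hK'c⟩ with hKD
      have main : ∀ n : ℕ, 1 ≤ n → |∫ x, φ x ∂C.measure - L φ| ≤
          a * (lam L KD : ℝ) / n := by
        intro n hn
        have hn0 : (0:ℝ) < n := by exact_mod_cast hn
        set c : ℝ := a / n with hc'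
        have hc : 0 < c := div_pos ha0 hn0
        have hnc : (n:ℝ) * c = a := by rw [hc']; field_simp
        have hsupp_sub : support φ ⊆ interior K' := (subset_tsupport φ).trans hK'i
        have hSc : ∀ j : ℕ, IsCompact {x | ((j:ℝ)+1) * c ≤ φ x} := by
          intro j
          refine hφc.of_isClosed_subset (isClosed_le continuous_const hφ) ?_
          intro x hx
          simp only [mem_setOf_eq] at hx
          have hpos : 0 < φ x := lt_of_lt_of_le (by positivity) hx
          exact subset_tsupport φ (by simp only [mem_support]; positivity)
        set S : ℕ → Compacts G :=
          fun k => Nat.casesOn k KD (fun j => ⟨{x | ((j:ℝ)+1) * c ≤ φ x}, hSc j⟩) with hS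
        set w : ℕ → ℝ := fun k => (lam L (S k) : ℝ) with hw
        have hw0 : ∀ k, 0 ≤ w k := fun k => (lam L (S k)).coe_nonneg
        set ψ : ℕ → G → ℝ := fun k x => min (max (φ x - k * c) 0) c with hψ
        have hψcont : ∀ k, Continuous (ψ k) :=
          fun k => ((hφ.sub continuous_const).max continuous_const).min continuous_const
        have hψ0 : ∀ k x, 0 ≤ ψ k x := fun k x => le_min (le_max_right _ _) hc.le
        have hψlec : ∀ k x, ψ k x ≤ c := fun k x => min_le_right _ _
        have hψzero : ∀ (k : ℕ) x, φ x ≤ k * c → ψ k x = 0 := by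
          intro k x hx
          simp only [hψ]
          rw [max_eq_right (by linarith), min_eq_left hc.le]
        have hψfull : ∀ (k : ℕ) x, ((k:ℝ)+1) * c ≤ φ x → ψ k x = c := by
          intro k x hx
          simp only [hψ]
          have h1 : c ≤ φ x - k * c := by linarith
          rw [max_eq_left (by linarith), min_eq_right h1]
        have hψsupp0 : ∀ k, support (ψ k) ⊆ support φ := by
          intro k x hx
          simp only [mem_support, ne_eq] at hx ⊢
          intro h
          exact hx (hψzero k x (by rw [h]; positivity))
        have hψcs : ∀ k, HasCompactSupport (ψ k) := fun k => hφc.mono (hψsupp0 k)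
        have hψsuppS : ∀ k, support (ψ k) ⊆ (S k : Set G) := by
          intro k
          cases k with
          | zero => exact (hψsupp0 0).trans (hsupp_sub.trans interior_subset)
          | succ j =>
            intro x hx
            simp only [mem_support, ne_eq] at hx
            show ((j:ℝ)+1) * c ≤ φ x
            by_contra hxS
            push_neg at hxS
            exact hx (hψzero (j+1) x (by push_cast; linarith))
        have hLψ0 : ∀ k, 0 ≤ L (ψ k) :=
          fun k => L_nonneg L hsmul hmono (hψcont k) (hψcs k) (hψ0 k)
        have hscaled : ∀ k, Continuous (c⁻¹ • ψ k) ∧ HasCompactSupport (c⁻¹ • ψ k) ∧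
            (∀ x, 0 ≤ (c⁻¹ • ψ k) x) ∧ (∀ x, (c⁻¹ • ψ k) x ≤ 1) := by
          intro k
          refine ⟨by exact (hψcont k).const_smul (c⁻¹), (hψcs k).mono ?_, fun x => ?_, fun x => ?_⟩
          · intro x hx
            simp only [mem_support, ne_eq, Pi.smul_apply, smul_eq_mul] at hx ⊢
            intro h; exact hx (by rw [h, mul_zero])
          · exact mul_nonneg (inv_nonneg.2 hc.le) (hψ0 k x)
          · simp only [Pi.smul_apply, smul_eq_mul]
            rw [← inv_mul_cancel₀ hc.ne']
            exact mul_le_mul_of_nonneg_left (hψlec k x) (inv_nonneg.2 hc.le)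
        have hLψs : ∀ k, L (c⁻¹ • ψ k) = c⁻¹ * L (ψ k) :=
          fun k => hsmul _ _ (hψcont k) (hψcs k)
        have hmem : ∀ k : ℕ, (c⁻¹ • ψ k) ∈ TestNN ((S (k+1)) : Set G) := by
          intro k
          obtain ⟨h1, h2, h3, h4⟩ := hscaled k
          refine ⟨h1, h2, h3, fun x hx => ?_⟩
          have hxle : ((k:ℝ)+1) * c ≤ φ x := hx
          have : ψ k x = c := hψfull k x hxle
          simp only [Pi.smul_apply, smul_eq_mul, this]
          rw [inv_mul_cancel₀ hc.ne']
        have bound1 : ∀ k : ℕ, c * w (k+1) ≤ L (ψ k) := by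
          intro k
          have h1 : lam L (S (k+1)) ≤ Real.toNNReal (L (c⁻¹ • ψ k)) := lam_le L (hmem k)
          have h2 : (lam L (S (k+1)) : ℝ) ≤ c⁻¹ * L (ψ k) := by
            calc (lam L (S (k+1)) : ℝ) ≤ (Real.toNNReal (L (c⁻¹ • ψ k)) : ℝ) := by
                  exact_mod_cast h1
              _ = L (c⁻¹ • ψ k) := Real.coe_toNNReal _ (by
                  rw [hLψs k]; exact mul_nonneg (inv_nonneg.2 hc.le) (hLψ0 k))
              _ = c⁻¹ * L (ψ k) := hLψs k
          calc c * w (k+1) ≤ c * (c⁻¹ * L (ψ k)) := mul_le_mul_of_nonneg_left h2 hc.le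
            _ = L (ψ k) := by field_simp
        have bound2 : ∀ k : ℕ, L (ψ k) ≤ c * w k := by
          intro k
          obtain ⟨h1, h2, h3, h4⟩ := hscaled k
          have hsp : support (c⁻¹ • ψ k) ⊆ (S k : Set G) := by
            refine subset_trans ?_ (hψsuppS k)
            intro x hx
            simp only [mem_support, ne_eq, Pi.smul_apply, smul_eq_mul] at hx ⊢
            intro h; exact hx (by rw [h, mul_zero])
          have h5 : L (c⁻¹ • ψ k) ≤ (lam L (S k) : ℝ) :=
            L_le_lam L hsmul hmono h1 h2 h3 h4 hsp
          rw [hLψs k] at h5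
          calc L (ψ k) = c * (c⁻¹ * L (ψ k)) := by field_simp
            _ ≤ c * w k := mul_le_mul_of_nonneg_left h5 hc.le
        have mS_lt : ∀ k, C.measure ((S k) : Set G) < ∞ :=
          fun k => (S k).isCompact.measure_lt_top
        have bound3 : ∀ k : ℕ, c * w (k+1) ≤ ∫ x, ψ k x ∂C.measure := by
          intro k
          have hmeas : MeasurableSet ((S (k+1)) : Set G) :=
            (S (k+1)).isCompact.isClosed.measurableSet
          have hind : ∀ x, ((S (k+1)) : Set G).indicator (fun _ => c) x ≤ ψ k x := by
            intro x
            by_cases hx : x ∈ ((S (k+1)) : Set G)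
            · rw [indicator_of_mem hx]
              exact (hψfull k x hx).ge
            · rw [indicator_of_notMem hx]
              exact hψ0 k x
          have hintind : Integrable (((S (k+1)) : Set G).indicator (fun _ => c)) C.measure := by
            rw [integrable_indicator_iff hmeas]
            exact integrableOn_const (mS_lt (k+1)).ne
          have hle := integral_mono hintind (hint (ψ k) (hψcont k) (hψcs k)) hind
          rw [integral_indicator_const c hmeas, smul_eq_mul] at hle
          refine le_trans ?_ hle
          have h2 : w (k+1) ≤ (C.measure ((S (k+1)) : Set G)).toReal := by
            have h3 := ENNReal.toReal_mono (mS_lt (k+1)).ne (lam_le_m (S (k+1)))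
            simpa using h3
          calc c * w (k+1) = w (k+1) * c := mul_comm _ _
            _ ≤ (C.measure ((S (k+1)) : Set G)).toReal * c :=
                mul_le_mul_of_nonneg_right h2 hc.le
        have bound4 : ∀ k : ℕ, ∫ x, ψ k x ∂C.measure ≤ c * w k := by
          intro k
          set O : Set G := Nat.casesOn k (interior K') (fun j => {x | ((j:ℝ)+1) * c < φ x})
            with hO
          have hOopen : IsOpen O := by
            cases k with
            | zero => exact isOpen_interior
            | succ j => exact isOpen_lt continuous_const hφ
          have hOS : O ⊆ ((S k) : Set G) := by
            cases k with
            | zero => exact interior_subset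
            | succ j =>
              intro x hx
              show ((j:ℝ)+1) * c ≤ φ x
              exact le_of_lt hx
          have hψleO : ∀ x, ψ k x ≤ O.indicator (fun _ => c) x := by
            intro x
            by_cases hx : x ∈ O
            · rw [indicator_of_mem hx]; exact hψlec k x
            · rw [indicator_of_notMem hx]
              cases k with
              | zero =>
                by_cases hxs : x ∈ support (ψ 0)
                · exact absurd ((hψsupp0 0).trans hsupp_sub hxs) hx
                · simp only [mem_support, not_not] at hxs
                  rw [hxs]
              | succ j =>
                have hnx : ¬ (((j:ℝ)+1) * c < φ x) := hx
                push_neg at hnx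
                rw [hψzero (j+1) x (by push_cast; linarith)]
          have hmO : C.measure O ≤ (lam L (S k) : ℝ≥0∞) := m_open_le O hOopen (S k) hOS
          have hmOlt : C.measure O < ∞ := lt_of_le_of_lt hmO ENNReal.coe_lt_top
          have hmeasO : MeasurableSet O := hOopen.measurableSet
          have hintind : Integrable (O.indicator (fun _ => c)) C.measure := by
            rw [integrable_indicator_iff hmeasO]
            exact integrableOn_const hmOlt.ne
          have hle := integral_mono (hint (ψ k) (hψcont k) (hψcs k)) hintind hψleO
          rw [integral_indicator_const c hmeasO, smul_eq_mul] at hle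
          refine hle.trans ?_
          have h2 : (C.measure O).toReal ≤ w k := by
            have h3 := ENNReal.toReal_mono ENNReal.coe_ne_top hmO
            simpa using h3
          calc (C.measure O).toReal * c ≤ w k * c := mul_le_mul_of_nonneg_right h2 hc.le
            _ = c * w k := mul_comm _ _
        have hsumψ : ∀ x, ∑ k ∈ Finset.range n, ψ k x = φ x := by
          intro x
          exact stair_sum n c (φ x) hc (hφ0 x) (by rw [hnc]; exact hφa x)
        have hps : ∀ j : ℕ, Continuous (fun x => ∑ k ∈ Finset.range j, ψ k x) ∧
            HasCompactSupport (fun x => ∑ k ∈ Finset.range j, ψ k x) ∧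
            L (fun x => ∑ k ∈ Finset.range j, ψ k x) = ∑ k ∈ Finset.range j, L (ψ k) := by
          intro j
          induction j with
          | zero =>
            simp only [Finset.range_zero, Finset.sum_empty]
            exact ⟨continuous_const, by exact (HasCompactSupport.zero (α := G) (β := ℝ)),
              L_zero L hsmul⟩
          | succ j ih =>
            have hsucc : (fun x => ∑ k ∈ Finset.range (j+1), ψ k x)
                = (fun x => ∑ k ∈ Finset.range j, ψ k x) + ψ j := by
              funext x; simp [Finset.sum_range_succ]
            refine ⟨?_, ?_, ?_⟩
            · rw [hsucc]; exact ih.1.add (hψcont j)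
            · rw [hsucc]; exact ih.2.1.add (hψcs j)
            · rw [hsucc, hadd _ _ ih.1 ih.2.1 (hψcont j) (hψcs j), ih.2.2,
                Finset.sum_range_succ]
        have hφeq : φ = fun x => ∑ k ∈ Finset.range n, ψ k x := by
          funext x; rw [hsumψ]
        have hInt : ∫ x, φ x ∂C.measure = ∑ k ∈ Finset.range n, ∫ x, ψ k x ∂C.measure := by
          conv_lhs => rw [hφeq]
          exact integral_finset_sum _ (fun k _ => hint (ψ k) (hψcont k) (hψcs k))
        have hLsum : L φ = ∑ k ∈ Finset.range n, L (ψ k) := by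
          conv_lhs => rw [hφeq]
          exact (hps n).2.2
        have hdiff : ∀ k : ℕ, |(∫ x, ψ k x ∂C.measure) - L (ψ k)| ≤ c * w k - c * w (k+1) := by
          intro k
          rw [abs_sub_le_iff]
          constructor
          · linarith [bound1 k, bound4 k]
          · linarith [bound2 k, bound3 k]
        have hw00 : w 0 = (lam L KD : ℝ) := rfl
        calc |∫ x, φ x ∂C.measure - L φ|
            = |∑ k ∈ Finset.range n, ((∫ x, ψ k x ∂C.measure) - L (ψ k))| := by
              rw [hInt, hLsum, Finset.sum_sub_distrib]
          _ ≤ ∑ k ∈ Finset.range n, |(∫ x, ψ k x ∂C.measure) - L (ψ k)| :=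
              Finset.abs_sum_le_sum_abs _ _
          _ ≤ ∑ k ∈ Finset.range n, (c * w k - c * w (k+1)) :=
              Finset.sum_le_sum (fun k _ => hdiff k)
          _ = c * w 0 - c * w n := Finset.sum_range_sub' (fun k => c * w k) n
          _ ≤ c * w 0 := by
              have := mul_nonneg hc.le (hw0 n); linarith
          _ = a * (lam L KD : ℝ) / n := by
              rw [hw00, hc']; ring
      have h0 : Tendsto (fun n : ℕ => a * (lam L KD : ℝ) / n) atTop (𝓝 0) :=
        tendsto_const_div_atTop_nhds_zero_nat _
      have habs : |∫ x, φ x ∂C.measure - L φ| ≤ 0 :=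
        ge_of_tendsto h0 (eventually_atTop.2 ⟨1, main⟩)
      have := abs_nonpos_iff.1 habs
      linarith [sub_eq_zero.1 this]
    -- general case
    intro f hf hfc
    set fp : G → ℝ := fun x => max (f x) 0 with hfp'
    set fm : G → ℝ := fun x => max (-f x) 0 with hfm'
    have hfp : Continuous fp := hf.max continuous_const
    have hfm : Continuous fm := hf.neg.max continuous_const
    have hfpc : HasCompactSupport fp := by
      apply hfc.mono
      intro x hx
      simp only [hfp', mem_support, ne_eq] at hx ⊢
      intro h; apply hx; simp [h]
    have hfmc : HasCompactSupport fm := by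
      apply hfc.mono
      intro x hx
      simp only [hfm', mem_support, ne_eq] at hx ⊢
      intro h; apply hx; simp [h]
    have hfp0 : ∀ x, 0 ≤ fp x := fun x => le_max_right _ _
    have hfm0 : ∀ x, 0 ≤ fm x := fun x => le_max_right _ _
    have hdecomp : (f + fm) = fp := by
      funext x
      simp only [Pi.add_apply, hfp', hfm']
      rcases le_total (f x) 0 with h | h
      · rw [max_eq_right h, max_eq_left (by linarith)]; ring
      · rw [max_eq_left h, max_eq_right (by linarith)]; ring
    have hLf : L f = L fp - L fm := by
      have := hadd f fm hf hfc hfm hfmc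
      rw [hdecomp] at this
      linarith
    have hIf : ∫ x, f x ∂C.measure = (∫ x, fp x ∂C.measure) - ∫ x, fm x ∂C.measure := by
      have hfe : f = fun x => fp x - fm x := by
        funext x
        have := congrFun hdecomp x
        simp only [Pi.add_apply] at this
        linarith
      rw [hfe, integral_sub (hint fp hfp hfpc) (hint fm hfm hfmc)]
    rw [hIf, hLf, key fp hfp hfpc hfp0, key fm hfm hfmc hfm0]

end RMKaux

/-- Vague completeness of `M_{C,V}(G)`: a net of positive measures,
uniformly bounded on translates of `V`, whose integrals against all continuous
compactly supported functions converge, converges vaguely to a measure in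
`M_{C,V}(G)`. -/
theorem vague_limit_exists_in_MCV
    {G : Type*} [AddCommGroup G] [TopologicalSpace G] [IsTopologicalAddGroup G]
    [LocallyCompactSpace G] [T2Space G] [MeasurableSpace G] [BorelSpace G]
    {I : Type*} [Preorder I] [Nonempty I] [IsDirected I (· ≤ ·)]
    (V : Set G) (hV_ne : V.Nonempty) (hV_open : IsOpen V)
    (hV_cpt : IsCompact (closure V))
    (C : ℝ≥0) (hC : 0 < C)
    (μ : I → Measure G)
    (hbdd : ∀ i : I, ∀ t : G, μ i (t +ᵥ V) ≤ (C : ℝ≥0∞))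
    (hconv : ∀ φ : G → ℂ, Continuous φ → HasCompactSupport φ →
      ∃ c : ℂ, Tendsto (fun i => ∫ x, φ x ∂(μ i)) atTop (𝓝 c)) :
    ∃ m : Measure G, (∀ t : G, m (t +ᵥ V) ≤ (C : ℝ≥0∞)) ∧
      ∀ φ : G → ℂ, Continuous φ → HasCompactSupport φ →
        Tendsto (fun i => ∫ x, φ x ∂(μ i)) atTop (𝓝 (∫ x, φ x ∂m)) := by
  obtain ⟨v₀, hv₀⟩ := hV_ne
  haveI hGne : Nonempty G := ⟨v₀⟩
  haveI : (atTop : Filter I).NeBot := atTop_neBot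
  -- each μ i is finite on compact sets
  have hfin : ∀ i, IsFiniteMeasureOnCompacts (μ i) := by
    intro i
    constructor
    intro K hK
    have hcov : K ⊆ ⋃ t : G, t +ᵥ V := by
      intro x _
      refine mem_iUnion.2 ⟨x - v₀, ⟨v₀, hv₀, ?_⟩⟩
      simp [vadd_eq_add]
    obtain ⟨F, hF⟩ := hK.elim_finite_subcover (fun t : G => t +ᵥ V)
      (fun t => hV_open.vadd t) hcov
    calc μ i K ≤ μ i (⋃ t ∈ F, t +ᵥ V) := measure_mono hF
      _ ≤ ∑ t ∈ F, μ i (t +ᵥ V) := measure_biUnion_finset_le F _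
      _ ≤ ∑ _t ∈ F, (C : ℝ≥0∞) := Finset.sum_le_sum (fun t _ => hbdd i t)
      _ < ∞ := by
          rw [Finset.sum_const, nsmul_eq_mul]
          exact ENNReal.mul_lt_top (by simp) ENNReal.coe_lt_top
  have hinti : ∀ i, ∀ f : G → ℝ, Continuous f → HasCompactSupport f → Integrable f (μ i) := by
    intro i f hf hfc
    haveI := hfin i
    exact hf.integrable_of_hasCompactSupport hfc
  -- convergence for real-valued test functions
  have hconvR : ∀ f : G → ℝ, Continuous f → HasCompactSupport f →
      ∃ r : ℝ, Tendsto (fun i => ∫ x, f x ∂μ i) atTop (𝓝 r) := by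
    intro f hf hfc
    obtain ⟨c, hcv⟩ := hconv (fun x => (f x : ℂ)) (Complex.continuous_ofReal.comp hf)
      (hfc.comp_left (g := Complex.ofReal) Complex.ofReal_zero)
    refine ⟨c.re, ?_⟩
    have heq : ∀ i : I, ∫ x, ((f x : ℂ)) ∂μ i = ((∫ x, f x ∂μ i : ℝ) : ℂ) :=
      fun i => integral_ofReal
    have h2 := (Complex.continuous_re.tendsto c).comp hcv
    simp only [Function.comp_def, heq, Complex.ofReal_re] at h2
    exact h2
  set L : (G → ℝ) → ℝ := fun f => limUnder atTop (fun i => ∫ x, f x ∂μ i) with hLdef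
  have hL : ∀ f : G → ℝ, Continuous f → HasCompactSupport f →
      Tendsto (fun i => ∫ x, f x ∂μ i) atTop (𝓝 (L f)) := by
    intro f hf hfc
    obtain ⟨r, hr⟩ := hconvR f hf hfc
    have : L f = r := hr.limUnder_eq
    rwa [this]
  have hadd : ∀ f g : G → ℝ, Continuous f → HasCompactSupport f → Continuous g →
      HasCompactSupport g → L (f + g) = L f + L g := by
    intro f g hf hfc hg hgc
    have h1 : Tendsto (fun i => ∫ x, (f + g) x ∂μ i) atTop (𝓝 (L f + L g)) := by
      have h2 := (hL f hf hfc).add (hL g hg hgc)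
      have h3 : (fun i => ∫ x, (f + g) x ∂μ i)
          = fun i => (∫ x, f x ∂μ i) + ∫ x, g x ∂μ i := by
        funext i
        simp only [Pi.add_apply]
        exact integral_add (hinti i f hf hfc) (hinti i g hg hgc)
      rwa [h3]
    exact tendsto_nhds_unique (hL (f + g) (hf.add hg) (hfc.add hgc)) h1
  have hsmul : ∀ (c : ℝ) (f : G → ℝ), Continuous f → HasCompactSupport f →
      L (c • f) = c * L f := by
    intro c f hf hfc
    have hcs : HasCompactSupport (c • f) := by
      apply hfc.mono
      intro x hx
      simp only [mem_support, Pi.smul_apply, smul_eq_mul, ne_eq] at hx ⊢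
      intro h; exact hx (by rw [h, mul_zero])
    have h1 : Tendsto (fun i => ∫ x, (c • f) x ∂μ i) atTop (𝓝 (c * L f)) := by
      have h2 := (hL f hf hfc).const_mul c
      have h3 : (fun i => ∫ x, (c • f) x ∂μ i) = fun i => c * ∫ x, f x ∂μ i := by
        funext i
        simp only [Pi.smul_apply, smul_eq_mul]
        rw [← smul_eq_mul, ← integral_smul c f]
        simp only [smul_eq_mul]
      rwa [h3]
    exact tendsto_nhds_unique (hL (c • f) (hf.const_smul c) hcs) h1
  have hmono : ∀ f g : G → ℝ, Continuous f → HasCompactSupport f → Continuous g →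
      HasCompactSupport g → (∀ x, f x ≤ g x) → L f ≤ L g := by
    intro f g hf hfc hg hgc hfg
    exact le_of_tendsto_of_tendsto' (hL f hf hfc) (hL g hg hgc)
      (fun i => integral_mono (hinti i f hf hfc) (hinti i g hg hgc) hfg)
  obtain ⟨m, hmfin, hm1, hm2⟩ := RMKaux.rmk_exists L hadd hsmul hmono
  haveI := hmfin
  refine ⟨m, ?_, ?_⟩
  · -- the translation bound
    intro t
    apply hm1 (t +ᵥ V) (hV_open.vadd t) C
    intro f hf hfc h0 h1 hsupp
    have hmeas : MeasurableSet (t +ᵥ V) := (hV_open.vadd t).measurableSet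
    have hle : ∀ i, ∫ x, f x ∂μ i ≤ (C : ℝ) := by
      intro i
      have hμlt : μ i (t +ᵥ V) < ∞ := lt_of_le_of_lt (hbdd i t) ENNReal.coe_lt_top
      have hind : ∀ x, f x ≤ (t +ᵥ V).indicator (fun _ => (1:ℝ)) x := by
        intro x
        by_cases hx : x ∈ t +ᵥ V
        · rw [indicator_of_mem hx]; exact h1 x
        · rw [indicator_of_notMem hx]
          rcases eq_or_ne (f x) 0 with h | h
          · rw [h]
          · exact absurd (hsupp h) hx
      have hintind : Integrable ((t +ᵥ V).indicator (fun _ => (1:ℝ))) (μ i) := by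
        rw [integrable_indicator_iff hmeas]
        exact integrableOn_const hμlt.ne
      have h2 := integral_mono (hinti i f hf hfc) hintind hind
      rw [integral_indicator_const (1:ℝ) hmeas, smul_eq_mul, mul_one] at h2
      refine h2.trans ?_
      have h3 := ENNReal.toReal_mono ENNReal.coe_ne_top (hbdd i t)
      simpa [Measure.real] using h3
    exact le_of_tendsto (hL f hf hfc) (Eventually.of_forall hle)
  · -- vague convergence
    intro φ hφ hφc
    set fr : G → ℝ := fun x => (φ x).re with hfr'
    set fi : G → ℝ := fun x => (φ x).im with hfi'
    have hfr : Continuous fr := Complex.continuous_re.comp hφ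
    have hfi : Continuous fi := Complex.continuous_im.comp hφ
    have hfrc : HasCompactSupport fr := hφc.comp_left (g := Complex.re) rfl
    have hfic : HasCompactSupport fi := hφc.comp_left (g := Complex.im) rfl
    have hφeq : φ = fun x => fr x • (1:ℂ) + fi x • Complex.I := by
      funext x
      have h := (Complex.re_add_im (φ x)).symm
      simp only [hfr', hfi', Complex.real_smul, smul_eq_mul, mul_one] at h ⊢
      exact h
    have hdec : ∀ (ν : Measure G), IsFiniteMeasureOnCompacts ν →
        ∫ x, φ x ∂ν = (∫ x, fr x ∂ν) • (1:ℂ) + (∫ x, fi x ∂ν) • Complex.I := by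
      intro ν hν
      haveI := hν
      conv_lhs => rw [hφeq]
      rw [integral_add (((hfr.integrable_of_hasCompactSupport hfrc).smul_const (1:ℂ)))
        (((hfi.integrable_of_hasCompactSupport hfic).smul_const Complex.I)),
        integral_smul_const, integral_smul_const]
    rw [hdec m hmfin, hm2 fr hfr hfrc, hm2 fi hfi hfic]
    have h1 := ((hL fr hfr hfrc).smul_const (1:ℂ)).add ((hL fi hfi hfic).smul_const Complex.I)
    have h3 : (fun i => ∫ x, φ x ∂μ i)
        = fun i => (∫ x, fr x ∂μ i) • (1:ℂ) + (∫ x, fi x ∂μ i) • Complex.I := by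
      funext i
      exact hdec (μ i) (hfin i)
    rwa [h3]
end
end
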